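/- arXiv:math/0408370 — 6 statements merged into one kernel-verified Lean document; each statement's English description precedes it below -/
import Mathlib

section
/- (Theorem 1(3), second part) For all integers l, m ≥ 1 and every integer d ≥ 1, the map B_{lm} permutes the set of rational points of [0,1]² of denominator d: B_{lm}(A_d) = A_d. -/
open Real MeasureTheory Set

noncomputable section

/-- Reduction of an angle to `[0, 2π)`. -/
def red (θ : ℝ) : ℝ := 2 * π * Int.fract (θ / (2 * π))

/-- The function `f(r) = min(1, (1/r − 1)/3)`, with `f(0) = 1`. -/
def ftw (r : ℝ) : ℝ := if r = 0 then 1 else min 1 ((1 / r - 1) / 3)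

/-- The function `g(r) = min(1, 1/r − 1)`, with `g(0) = 1`. -/
def gtw (r : ℝ) : ℝ := if r = 0 then 1 else min 1 (1 / r - 1)

/-- The twist `F_l` in polar coordinates. -/
def Ftw (l : ℕ) (p : ℝ × ℝ) : ℝ × ℝ := (p.1, p.2 + 2 * π * (l : ℝ) * ftw p.1)

/-- The twist `G_m` in polar coordinates. -/
def Gtw (m : ℕ) (p : ℝ × ℝ) : ℝ × ℝ := (p.1, p.2 - 2 * π * (m : ℝ) * gtw p.1)

/-- `M(1,θ)`: the boundary parametrization of the triangle `L`. -/
def Mbd (θ : ℝ) : ℝ × ℝ :=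
  if θ < 2 * π / 3 then (1 - 3 * θ / (2 * π), 3 * θ / (2 * π))
  else if θ < 4 * π / 3 then (0, 2 - 3 * θ / (2 * π))
  else (3 * θ / (2 * π) - 2, 0)

/-- The map `M : D → L` in polar coordinates (angle reduced mod `2π`). -/
def Mpol (p : ℝ × ℝ) : ℝ × ℝ :=
  (1 - p.1) • (((1 : ℝ) / 3, (1 : ℝ) / 3) : ℝ × ℝ) + p.1 • Mbd (red p.2)

/-- Rotation by `π` about `(1/2, 1/2)`. -/
def Rpi (p : ℝ × ℝ) : ℝ × ℝ := (1 - p.1, 1 - p.2)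

/-- The map `M' = R_π ∘ M`. -/
def Mpol' (p : ℝ × ℝ) : ℝ × ℝ := Rpi (Mpol p)

/-- The vector `w(θ)` of the boundary parametrization of the square `E`. -/
def wbd (θ : ℝ) : ℝ × ℝ :=
  if θ < π / 2 then (1 / 4, -1 / 4 + θ / π)
  else if θ < π then (3 / 4 - θ / π, 1 / 4)
  else if θ < 3 * π / 2 then (-1 / 4, 5 / 4 - θ / π)
  else (-7 / 4 + θ / π, -1 / 4)

/-- The map `N : D → E` in polar coordinates (angle reduced mod `2π`). -/
def Npol (p : ℝ × ℝ) : ℝ × ℝ :=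
  (((1 : ℝ) / 2, (1 : ℝ) / 2) : ℝ × ℝ) + p.1 • wbd (red p.2)

/-- The unit square `[0,1]²`. -/
def uSq : Set (ℝ × ℝ) := Icc (0, 0) (1, 1)

/-- The square `E` with vertices `(1/4,1/4)`, `(3/4,1/4)`, `(3/4,3/4)`, `(1/4,3/4)`. -/
def Esq : Set (ℝ × ℝ) := Icc (((1 : ℝ) / 4, (1 : ℝ) / 4)) (((3 : ℝ) / 4, (3 : ℝ) / 4))

/-- `S` satisfies the defining conditions of `S₁`: it is conjugate to the twist `F_l`
via `M` on `L` and via `M'` on `L'`. -/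
def IsS1 (l : ℕ) (S : ℝ × ℝ → ℝ × ℝ) : Prop :=
  (∀ r θ : ℝ, 0 ≤ r → r ≤ 1 → S (Mpol (r, θ)) = Mpol (Ftw l (r, θ))) ∧
  (∀ r θ : ℝ, 0 ≤ r → r ≤ 1 → S (Mpol' (r, θ)) = Mpol' (Ftw l (r, θ)))

/-- `S` satisfies the defining conditions of `S₂`: it is conjugate to the twist `G_m`
via `N` on `E` and is the identity on `[0,1]² ∖ E`. -/
def IsS2 (m : ℕ) (S : ℝ × ℝ → ℝ × ℝ) : Prop :=
  (∀ r θ : ℝ, 0 ≤ r → r ≤ 1 → S (Npol (r, θ)) = Npol (Gtw m (r, θ))) ∧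
  (∀ p ∈ uSq \ Esq, S p = p)

/-- `B` agrees on the unit square with `B_{lm} = S₂ ∘ S₁`. -/
def IsBmap (l m : ℕ) (B : ℝ × ℝ → ℝ × ℝ) : Prop :=
  ∃ S1 S2 : ℝ × ℝ → ℝ × ℝ, IsS1 l S1 ∧ IsS2 m S2 ∧ ∀ p ∈ uSq, B p = S2 (S1 p)


/-- `p ∈ [0,1]²` is rational with denominator `d`: `d` is the least positive integer
making both coordinates of `d·p` integers. -/
def hasDen (d : ℕ) (p : ℝ × ℝ) : Prop :=
  (∃ a b : ℤ, (d : ℝ) * p.1 = (a : ℝ) ∧ (d : ℝ) * p.2 = (b : ℝ)) ∧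
  ∀ e : ℕ, 1 ≤ e → (∃ a b : ℤ, (e : ℝ) * p.1 = (a : ℝ) ∧ (e : ℝ) * p.2 = (b : ℝ)) → d ≤ e

/-- The set `A_d` of rational points of `[0,1]²` of denominator `d`. -/
def Aden (d : ℕ) : Set (ℝ × ℝ) := {p | p ∈ uSq ∧ hasDen d p}
lemma twoPiPos : (0:ℝ) < 2*π := by positivity
lemma twoPiNe : (2*π : ℝ) ≠ 0 := ne_of_gt twoPiPos

/-- grid predicate: both coordinates of `e • p` are integers. -/
def gridP (e : ℕ) (p : ℝ × ℝ) : Prop :=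
  ∃ a b : ℤ, (e : ℝ) * p.1 = (a : ℝ) ∧ (e : ℝ) * p.2 = (b : ℝ)

lemma Mpol_eq1 (r x : ℝ) (h : Int.fract (x / (2*π)) < 1/3) :
    Mpol (r, x) = ((1-r)/3 + r * (1 - 3 * Int.fract (x / (2*π))),
                   (1-r)/3 + r * (3 * Int.fract (x / (2*π)))) := by
  have hπ := Real.pi_pos
  have hy0 : (0:ℝ) ≤ Int.fract (x / (2*π)) := Int.fract_nonneg _
  set y := Int.fract (x / (2*π)) with hy
  have h2 : red x = 2*π*y := rfl
  have h3 : Mbd (2*π*y) = (1 - 3*y, 3*y) := by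
    unfold Mbd
    rw [if_pos (by nlinarith : 2*π*y < 2*π/3)]
    have e1 : 3*(2*π*y)/(2*π) = 3*y := by field_simp
    rw [e1]
  show (1 - r) • (((1:ℝ)/3, (1:ℝ)/3) : ℝ × ℝ) + r • Mbd (red x) = _
  rw [h2, h3]
  simp only [Prod.smul_mk, smul_eq_mul, Prod.mk_add_mk, Prod.mk.injEq]
  all_goals first | (constructor <;> ring) | ring

lemma Mpol_eq2 (r x : ℝ) (h1 : 1/3 ≤ Int.fract (x / (2*π)))
    (h2 : Int.fract (x / (2*π)) < 2/3) :
    Mpol (r, x) = ((1-r)/3,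
                   (1-r)/3 + r * (2 - 3 * Int.fract (x / (2*π)))) := by
  have hπ := Real.pi_pos
  set y := Int.fract (x / (2*π)) with hy
  have hr2 : red x = 2*π*y := rfl
  have h3 : Mbd (2*π*y) = (0, 2 - 3*y) := by
    unfold Mbd
    rw [if_neg (by nlinarith : ¬ (2*π*y < 2*π/3)),
        if_pos (by nlinarith : 2*π*y < 4*π/3)]
    have e1 : 3*(2*π*y)/(2*π) = 3*y := by field_simp
    rw [e1]
  show (1 - r) • (((1:ℝ)/3, (1:ℝ)/3) : ℝ × ℝ) + r • Mbd (red x) = _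
  rw [hr2, h3]
  simp only [Prod.smul_mk, smul_eq_mul, Prod.mk_add_mk, Prod.mk.injEq]
  all_goals first | (constructor <;> ring) | ring

lemma Mpol_eq3 (r x : ℝ) (h1 : 2/3 ≤ Int.fract (x / (2*π))) :
    Mpol (r, x) = ((1-r)/3 + r * (3 * Int.fract (x / (2*π)) - 2),
                   (1-r)/3) := by
  have hπ := Real.pi_pos
  set y := Int.fract (x / (2*π)) with hy
  have hr2 : red x = 2*π*y := rfl
  have h3 : Mbd (2*π*y) = (3*y - 2, 0) := by
    unfold Mbd
    rw [if_neg (by nlinarith : ¬ (2*π*y < 2*π/3)),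
        if_neg (by nlinarith : ¬ (2*π*y < 4*π/3))]
    have e1 : 3*(2*π*y)/(2*π) = 3*y := by field_simp
    rw [e1]
  show (1 - r) • (((1:ℝ)/3, (1:ℝ)/3) : ℝ × ℝ) + r • Mbd (red x) = _
  rw [hr2, h3]
  simp only [Prod.smul_mk, smul_eq_mul, Prod.mk_add_mk, Prod.mk.injEq]
  all_goals first | (constructor <;> ring) | ring

lemma grid_Mpol (e : ℕ) (r x : ℝ) :
    gridP e (Mpol (r, x)) ↔
      ((∃ k : ℤ, (e:ℝ)*(1-r) = 3*k) ∧
       (∃ j : ℤ, 3*(e:ℝ)*r*Int.fract (x/(2*π)) = j)) := by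
  set y := Int.fract (x/(2*π)) with hy
  rcases lt_or_ge y (1/3) with h1 | h1
  · rw [Mpol_eq1 r x h1]
    unfold gridP
    constructor
    · rintro ⟨a, b, ha, hb⟩
      simp only at ha hb
      exact ⟨⟨(e:ℤ) - a - b, by push_cast; linear_combination (-3:ℝ)*ha - 3*hb⟩,
             ⟨a + 2*b - (e:ℤ), by push_cast; linear_combination ha + 2*hb⟩⟩
    · rintro ⟨⟨k, hk⟩, ⟨j, hj⟩⟩
      exact ⟨(e:ℤ) - 2*k - j, k + j, by push_cast; linear_combination (-2/3:ℝ)*hk - hj,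
             by push_cast; linear_combination (1/3:ℝ)*hk + hj⟩
  rcases lt_or_ge y (2/3) with h2 | h2
  · rw [Mpol_eq2 r x h1 h2]
    unfold gridP
    constructor
    · rintro ⟨a, b, ha, hb⟩
      simp only at ha hb
      exact ⟨⟨a, by push_cast; linear_combination (3:ℝ)*ha⟩,
             ⟨2*(e:ℤ) - 5*a - b, by push_cast; linear_combination (-5:ℝ)*ha - hb⟩⟩
    · rintro ⟨⟨k, hk⟩, ⟨j, hj⟩⟩
      exact ⟨k, 2*(e:ℤ) - 5*k - j, by push_cast; linear_combination (1/3:ℝ)*hk,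
             by push_cast; linear_combination (-5/3:ℝ)*hk - hj⟩
  · rw [Mpol_eq3 r x h2]
    unfold gridP
    constructor
    · rintro ⟨a, b, ha, hb⟩
      simp only at ha hb
      exact ⟨⟨b, by push_cast; linear_combination (3:ℝ)*hb⟩,
             ⟨a - 7*b + 2*(e:ℤ), by push_cast; linear_combination ha - 7*hb⟩⟩
    · rintro ⟨⟨k, hk⟩, ⟨j, hj⟩⟩
      exact ⟨7*k + j - 2*(e:ℤ), k, by push_cast; linear_combination (7/3:ℝ)*hk + hj,
             by push_cast; linear_combination (1/3:ℝ)*hk⟩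

lemma Npol_eq1 (r x : ℝ) (h : Int.fract (x / (2*π)) < 1/4) :
    Npol (r, x) = (1/2 + r * (1/4),
                   1/2 + r * (-1/4 + 2 * Int.fract (x / (2*π)))) := by
  have hπ := Real.pi_pos
  have hy0 : (0:ℝ) ≤ Int.fract (x / (2*π)) := Int.fract_nonneg _
  set y := Int.fract (x / (2*π)) with hy
  have h2 : red x = 2*π*y := rfl
  have h3 : wbd (2*π*y) = (1/4, -1/4 + 2*y) := by
    unfold wbd
    rw [if_pos (by nlinarith : 2*π*y < π/2)]
    have e1 : 2*π*y/π = 2*y := by field_simp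
    rw [e1]
  show (((1:ℝ)/2, (1:ℝ)/2) : ℝ × ℝ) + r • wbd (red x) = _
  rw [h2, h3]
  simp only [Prod.smul_mk, smul_eq_mul, Prod.mk_add_mk, Prod.mk.injEq]
  all_goals first | (constructor <;> ring) | ring

lemma Npol_eq2 (r x : ℝ) (h1 : 1/4 ≤ Int.fract (x / (2*π)))
    (h2 : Int.fract (x / (2*π)) < 1/2) :
    Npol (r, x) = (1/2 + r * (3/4 - 2 * Int.fract (x / (2*π))),
                   1/2 + r * (1/4)) := by
  have hπ := Real.pi_pos
  set y := Int.fract (x / (2*π)) with hy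
  have hr2 : red x = 2*π*y := rfl
  have h3 : wbd (2*π*y) = (3/4 - 2*y, 1/4) := by
    unfold wbd
    rw [if_neg (by nlinarith : ¬ (2*π*y < π/2)), if_pos (by nlinarith : 2*π*y < π)]
    have e1 : 2*π*y/π = 2*y := by field_simp
    rw [e1]
  show (((1:ℝ)/2, (1:ℝ)/2) : ℝ × ℝ) + r • wbd (red x) = _
  rw [hr2, h3]
  simp only [Prod.smul_mk, smul_eq_mul, Prod.mk_add_mk, Prod.mk.injEq]
  all_goals first | (constructor <;> ring) | ring

lemma Npol_eq3 (r x : ℝ) (h1 : 1/2 ≤ Int.fract (x / (2*π)))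
    (h2 : Int.fract (x / (2*π)) < 3/4) :
    Npol (r, x) = (1/2 + r * (-1/4),
                   1/2 + r * (5/4 - 2 * Int.fract (x / (2*π)))) := by
  have hπ := Real.pi_pos
  set y := Int.fract (x / (2*π)) with hy
  have hr2 : red x = 2*π*y := rfl
  have h3 : wbd (2*π*y) = (-1/4, 5/4 - 2*y) := by
    unfold wbd
    rw [if_neg (by nlinarith : ¬ (2*π*y < π/2)), if_neg (by nlinarith : ¬ (2*π*y < π)),
        if_pos (by nlinarith : 2*π*y < 3*π/2)]
    have e1 : 2*π*y/π = 2*y := by field_simp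
    rw [e1]
  show (((1:ℝ)/2, (1:ℝ)/2) : ℝ × ℝ) + r • wbd (red x) = _
  rw [hr2, h3]
  simp only [Prod.smul_mk, smul_eq_mul, Prod.mk_add_mk, Prod.mk.injEq]
  all_goals first | (constructor <;> ring) | ring

lemma Npol_eq4 (r x : ℝ) (h1 : 3/4 ≤ Int.fract (x / (2*π))) :
    Npol (r, x) = (1/2 + r * (-7/4 + 2 * Int.fract (x / (2*π))),
                   1/2 + r * (-1/4)) := by
  have hπ := Real.pi_pos
  set y := Int.fract (x / (2*π)) with hy
  have hr2 : red x = 2*π*y := rfl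
  have h3 : wbd (2*π*y) = (-7/4 + 2*y, -1/4) := by
    unfold wbd
    rw [if_neg (by nlinarith : ¬ (2*π*y < π/2)), if_neg (by nlinarith : ¬ (2*π*y < π)),
        if_neg (by nlinarith : ¬ (2*π*y < 3*π/2))]
    have e1 : 2*π*y/π = 2*y := by field_simp
    rw [e1]
  show (((1:ℝ)/2, (1:ℝ)/2) : ℝ × ℝ) + r • wbd (red x) = _
  rw [hr2, h3]
  simp only [Prod.smul_mk, smul_eq_mul, Prod.mk_add_mk, Prod.mk.injEq]
  all_goals first | (constructor <;> ring) | ring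

lemma grid_Npol (e : ℕ) (r x : ℝ) :
    gridP e (Npol (r, x)) ↔
      ((∃ k : ℤ, (e:ℝ)*(2+r) = 4*k) ∧
       (∃ j : ℤ, 2*(e:ℝ)*r*Int.fract (x/(2*π)) = j)) := by
  set y := Int.fract (x/(2*π)) with hy
  rcases lt_or_ge y (1/4) with h1 | h1
  · rw [Npol_eq1 r x h1]
    unfold gridP
    constructor
    · rintro ⟨a, b, ha, hb⟩
      simp only at ha hb
      exact ⟨⟨a, by push_cast; linear_combination (4:ℝ)*ha⟩,
             ⟨a + b - (e:ℤ), by push_cast; linear_combination ha + hb⟩⟩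
    · rintro ⟨⟨k, hk⟩, ⟨j, hj⟩⟩
      exact ⟨k, (e:ℤ) - k + j, by push_cast; linear_combination (1/4:ℝ)*hk,
             by push_cast; linear_combination (-1/4:ℝ)*hk + hj⟩
  rcases lt_or_ge y (1/2) with h2 | h2
  · rw [Npol_eq2 r x h1 h2]
    unfold gridP
    constructor
    · rintro ⟨a, b, ha, hb⟩
      simp only at ha hb
      exact ⟨⟨b, by push_cast; linear_combination (4:ℝ)*hb⟩,
             ⟨3*b - (e:ℤ) - a, by push_cast; linear_combination -ha + 3*hb⟩⟩
    · rintro ⟨⟨k, hk⟩, ⟨j, hj⟩⟩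
      exact ⟨3*k - (e:ℤ) - j, k, by push_cast; linear_combination (3/4:ℝ)*hk - hj,
             by push_cast; linear_combination (1/4:ℝ)*hk⟩
  rcases lt_or_ge y (3/4) with h3 | h3
  · rw [Npol_eq3 r x h2 h3]
    unfold gridP
    constructor
    · rintro ⟨a, b, ha, hb⟩
      simp only at ha hb
      exact ⟨⟨(e:ℤ) - a, by push_cast; linear_combination (-4:ℝ)*ha⟩,
             ⟨3*(e:ℤ) - 5*a - b, by push_cast; linear_combination (-5:ℝ)*ha - hb⟩⟩
    · rintro ⟨⟨k, hk⟩, ⟨j, hj⟩⟩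
      exact ⟨(e:ℤ) - k, 5*k - 2*(e:ℤ) - j, by push_cast; linear_combination (-1/4:ℝ)*hk,
             by push_cast; linear_combination (5/4:ℝ)*hk - hj⟩
  · rw [Npol_eq4 r x h3]
    unfold gridP
    constructor
    · rintro ⟨a, b, ha, hb⟩
      simp only at ha hb
      exact ⟨⟨(e:ℤ) - b, by push_cast; linear_combination (-4:ℝ)*hb⟩,
             ⟨a + 3*(e:ℤ) - 7*b, by push_cast; linear_combination ha - 7*hb⟩⟩
    · rintro ⟨⟨k, hk⟩, ⟨j, hj⟩⟩
      exact ⟨4*(e:ℤ) - 7*k + j, (e:ℤ) - k, by push_cast; linear_combination (-7/4:ℝ)*hk + hj,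
             by push_cast; linear_combination (-1/4:ℝ)*hk⟩

lemma fract_shift {A x δ : ℝ} (hA : ∃ a : ℤ, A = (a:ℝ)) (hδ : ∃ j : ℤ, A*δ = (j:ℝ))
    (h : ∃ i : ℤ, A * Int.fract x = (i:ℝ)) : ∃ i : ℤ, A * Int.fract (x + δ) = (i:ℝ) := by
  obtain ⟨a, ha⟩ := hA
  obtain ⟨j, hj⟩ := hδ
  obtain ⟨i, hi⟩ := h
  refine ⟨i + j + a * (⌊x⌋ - ⌊x + δ⌋), ?_⟩
  rw [Int.fract] at hi ⊢
  push_cast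
  linear_combination hi + hj + ((⌊x⌋:ℝ) - (⌊x + δ⌋:ℝ)) * ha

lemma ftw_A {e : ℕ} {r : ℝ} (hk : ∃ k : ℤ, (e:ℝ)*(1-r) = 3*(k:ℝ)) :
    ∃ a : ℤ, 3*(e:ℝ)*r = (a:ℝ) := by
  obtain ⟨k, hk⟩ := hk
  exact ⟨3*(e:ℤ) - 9*k, by push_cast; linear_combination (-3:ℝ)*hk⟩

lemma ftw_shift (e l : ℕ) {r : ℝ} (hk : ∃ k : ℤ, (e:ℝ)*(1-r) = 3*(k:ℝ)) :
    ∃ j : ℤ, 3*(e:ℝ)*r * ((l:ℝ) * ftw r) = (j:ℝ) := by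
  obtain ⟨k, hk⟩ := hk
  by_cases hr : r = 0
  · exact ⟨0, by rw [hr]; push_cast; ring⟩
  · rw [ftw, if_neg hr]
    rcases le_total (1:ℝ) ((1/r - 1)/3) with h | h
    · rw [min_eq_left h]
      exact ⟨(l:ℤ)*(3*(e:ℤ) - 9*k), by push_cast; linear_combination (-3*(l:ℝ))*hk⟩
    · rw [min_eq_right h]
      refine ⟨3*(l:ℤ)*k, ?_⟩
      have h2 : 3*(e:ℝ)*r*((l:ℝ)*((1/r - 1)/3)) = (l:ℝ)*((e:ℝ)*(1-r)) := by
        field_simp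
      rw [h2, hk]; push_cast; ring

lemma gtw_A {e : ℕ} {r : ℝ} (hk : ∃ k : ℤ, (e:ℝ)*(2+r) = 4*(k:ℝ)) :
    ∃ a : ℤ, 2*(e:ℝ)*r = (a:ℝ) := by
  obtain ⟨k, hk⟩ := hk
  exact ⟨8*k - 4*(e:ℤ), by push_cast; linear_combination (2:ℝ)*hk⟩

lemma gtw_shift (e m : ℕ) {r : ℝ} (hk : ∃ k : ℤ, (e:ℝ)*(2+r) = 4*(k:ℝ)) :
    ∃ j : ℤ, 2*(e:ℝ)*r * ((m:ℝ) * gtw r) = (j:ℝ) := by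
  obtain ⟨k, hk⟩ := hk
  by_cases hr : r = 0
  · exact ⟨0, by rw [hr]; push_cast; ring⟩
  · rw [gtw, if_neg hr]
    rcases le_total (1:ℝ) (1/r - 1) with h | h
    · rw [min_eq_left h]
      exact ⟨(m:ℤ)*(8*k - 4*(e:ℤ)), by push_cast; linear_combination (2*(m:ℝ))*hk⟩
    · rw [min_eq_right h]
      refine ⟨(m:ℤ)*(6*(e:ℤ) - 8*k), ?_⟩
      have h2 : 2*(e:ℝ)*r*((m:ℝ)*(1/r - 1)) = 2*(m:ℝ)*((e:ℝ)*(1-r)) := by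
        field_simp
      rw [h2]
      have h3 : (e:ℝ)*(1-r) = 3*(e:ℝ) - 4*(k:ℝ) := by linear_combination -hk
      rw [h3]; push_cast; ring

lemma grid_Mpol_shift (e l : ℕ) (r x : ℝ) {ε : ℝ} (hε : ε = 1 ∨ ε = -1) :
    gridP e (Mpol (r, x)) → gridP e (Mpol (r, x + ε * (2*π*(l:ℝ)*ftw r))) := by
  intro h
  rw [grid_Mpol] at h ⊢
  obtain ⟨hk, hj⟩ := h
  refine ⟨hk, ?_⟩
  have harg : (x + ε * (2*π*(l:ℝ)*ftw r))/(2*π) = x/(2*π) + ε * ((l:ℝ)*ftw r) := by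
    field_simp
  rw [harg]
  have hA := ftw_A hk
  have hδ0 := ftw_shift e l hk
  have hδ : ∃ j : ℤ, 3*(e:ℝ)*r * (ε * ((l:ℝ)*ftw r)) = (j:ℝ) := by
    obtain ⟨j, hj'⟩ := hδ0
    rcases hε with rfl | rfl
    · exact ⟨j, by rw [← hj']; ring⟩
    · exact ⟨-j, by push_cast; rw [← hj']; ring⟩
  exact fract_shift hA hδ hj

lemma grid_Npol_shift (e m : ℕ) (r x : ℝ) {ε : ℝ} (hε : ε = 1 ∨ ε = -1) :
    gridP e (Npol (r, x)) → gridP e (Npol (r, x + ε * (2*π*(m:ℝ)*gtw r))) := by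
  intro h
  rw [grid_Npol] at h ⊢
  obtain ⟨hk, hj⟩ := h
  refine ⟨hk, ?_⟩
  have harg : (x + ε * (2*π*(m:ℝ)*gtw r))/(2*π) = x/(2*π) + ε * ((m:ℝ)*gtw r) := by
    field_simp
  rw [harg]
  have hA := gtw_A hk
  have hδ0 := gtw_shift e m hk
  have hδ : ∃ j : ℤ, 2*(e:ℝ)*r * (ε * ((m:ℝ)*gtw r)) = (j:ℝ) := by
    obtain ⟨j, hj'⟩ := hδ0
    rcases hε with rfl | rfl
    · exact ⟨j, by rw [← hj']; ring⟩
    · exact ⟨-j, by push_cast; rw [← hj']; ring⟩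
  exact fract_shift hA hδ hj

lemma grid_Mpol_iff (e l : ℕ) (r x : ℝ) :
    (gridP e (Mpol (r, x)) ↔ gridP e (Mpol (r, x + 2*π*(l:ℝ)*ftw r))) := by
  constructor
  · intro h
    have := grid_Mpol_shift e l r x (Or.inl rfl) h
    simpa using this
  · intro h
    have := grid_Mpol_shift e l r (x + 2*π*(l:ℝ)*ftw r) (Or.inr rfl) h
    have harg : x + 2*π*(l:ℝ)*ftw r + (-1) * (2*π*(l:ℝ)*ftw r) = x := by ring
    rwa [harg] at this

lemma grid_Npol_iff (e m : ℕ) (r x : ℝ) :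
    (gridP e (Npol (r, x)) ↔ gridP e (Npol (r, x - 2*π*(m:ℝ)*gtw r))) := by
  constructor
  · intro h
    have := grid_Npol_shift e m r x (Or.inr rfl) h
    have harg : x + (-1) * (2*π*(m:ℝ)*gtw r) = x - 2*π*(m:ℝ)*gtw r := by ring
    rwa [harg] at this
  · intro h
    have := grid_Npol_shift e m r (x - 2*π*(m:ℝ)*gtw r) (Or.inl rfl) h
    have harg : x - 2*π*(m:ℝ)*gtw r + 1 * (2*π*(m:ℝ)*gtw r) = x := by ring
    rwa [harg] at this

lemma mem_uSq {p : ℝ × ℝ} : p ∈ uSq ↔ 0 ≤ p.1 ∧ p.1 ≤ 1 ∧ 0 ≤ p.2 ∧ p.2 ≤ 1 := by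
  simp only [uSq, Set.mem_Icc, Prod.le_def]
  constructor
  · rintro ⟨⟨h1, h2⟩, ⟨h3, h4⟩⟩; exact ⟨h1, h3, h2, h4⟩
  · rintro ⟨h1, h2, h3, h4⟩; exact ⟨⟨h1, h3⟩, ⟨h2, h4⟩⟩

lemma mem_Esq {p : ℝ × ℝ} : p ∈ Esq ↔ 1/4 ≤ p.1 ∧ p.1 ≤ 3/4 ∧ 1/4 ≤ p.2 ∧ p.2 ≤ 3/4 := by
  simp only [Esq, Set.mem_Icc, Prod.le_def]
  constructor
  · rintro ⟨⟨h1, h2⟩, ⟨h3, h4⟩⟩; exact ⟨h1, h3, h2, h4⟩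
  · rintro ⟨h1, h2, h3, h4⟩; exact ⟨⟨h1, h3⟩, ⟨h2, h4⟩⟩

lemma Mpol_tri (r x : ℝ) (hr0 : 0 ≤ r) (hr1 : r ≤ 1) :
    0 ≤ (Mpol (r, x)).1 ∧ 0 ≤ (Mpol (r, x)).2 ∧ (Mpol (r, x)).1 + (Mpol (r, x)).2 ≤ 1 := by
  set y := Int.fract (x/(2*π)) with hy
  have hy0 : (0:ℝ) ≤ y := Int.fract_nonneg _
  have hy1 : y < 1 := Int.fract_lt_one _
  rcases lt_or_ge y (1/3) with h1 | h1
  · rw [Mpol_eq1 r x h1]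
    exact ⟨by nlinarith, by nlinarith, by nlinarith⟩
  rcases lt_or_ge y (2/3) with h2 | h2
  · rw [Mpol_eq2 r x h1 h2]
    exact ⟨by nlinarith, by nlinarith, by nlinarith⟩
  · rw [Mpol_eq3 r x h2]
    exact ⟨by nlinarith, by nlinarith, by nlinarith⟩

lemma Mpol_mem_uSq (r x : ℝ) (hr0 : 0 ≤ r) (hr1 : r ≤ 1) : Mpol (r, x) ∈ uSq := by
  obtain ⟨h1, h2, h3⟩ := Mpol_tri r x hr0 hr1
  exact mem_uSq.mpr ⟨h1, by linarith, h2, by linarith⟩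

lemma Npol_mem_Esq (r x : ℝ) (hr0 : 0 ≤ r) (hr1 : r ≤ 1) : Npol (r, x) ∈ Esq := by
  set y := Int.fract (x/(2*π)) with hy
  have hy0 : (0:ℝ) ≤ y := Int.fract_nonneg _
  have hy1 : y < 1 := Int.fract_lt_one _
  rcases lt_or_ge y (1/4) with h1 | h1
  · rw [Npol_eq1 r x h1]
    exact mem_Esq.mpr ⟨by nlinarith, by nlinarith, by nlinarith, by nlinarith⟩
  rcases lt_or_ge y (1/2) with h2 | h2
  · rw [Npol_eq2 r x h1 h2]
    exact mem_Esq.mpr ⟨by nlinarith, by nlinarith, by nlinarith, by nlinarith⟩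
  rcases lt_or_ge y (3/4) with h3 | h3
  · rw [Npol_eq3 r x h2 h3]
    exact mem_Esq.mpr ⟨by nlinarith, by nlinarith, by nlinarith, by nlinarith⟩
  · rw [Npol_eq4 r x h3]
    exact mem_Esq.mpr ⟨by nlinarith, by nlinarith, by nlinarith, by nlinarith⟩

lemma Esq_sub_uSq {p : ℝ × ℝ} (h : p ∈ Esq) : p ∈ uSq := by
  rw [mem_Esq] at h
  exact mem_uSq.mpr ⟨by linarith [h.1], by linarith [h.2.1], by linarith [h.2.2.1],
    by linarith [h.2.2.2]⟩

lemma Rpi_mem_uSq {p : ℝ × ℝ} (h : p ∈ uSq) : Rpi p ∈ uSq := by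
  rw [mem_uSq] at h ⊢
  exact ⟨by simp [Rpi]; linarith [h.2.1], by simp [Rpi]; linarith [h.1],
         by simp [Rpi]; linarith [h.2.2.2], by simp [Rpi]; linarith [h.2.2.1]⟩

lemma Rpi_Rpi (p : ℝ × ℝ) : Rpi (Rpi p) = p := by
  simp [Rpi]

lemma gridP_Rpi (e : ℕ) (p : ℝ × ℝ) : gridP e (Rpi p) ↔ gridP e p := by
  have h : ∀ q : ℝ × ℝ, gridP e q → gridP e (Rpi q) := by
    rintro q ⟨a, b, ha, hb⟩
    refine ⟨(e:ℤ) - a, (e:ℤ) - b, ?_, ?_⟩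
    · show (e:ℝ) * (1 - q.1) = _
      push_cast; linarith
    · show (e:ℝ) * (1 - q.2) = _
      push_cast; linarith
  constructor
  · intro hq
    have := h _ hq
    rwa [Rpi_Rpi] at this
  · exact h p

lemma fract_2pi (y : ℝ) (h0 : 0 ≤ y) (h1 : y < 1) : Int.fract ((2*π*y)/(2*π)) = y := by
  have hπ := Real.pi_pos
  have h : (2*π*y)/(2*π) = y := by field_simp
  rw [h]
  exact Int.fract_eq_self.mpr ⟨h0, h1⟩

lemma repM1 (p : ℝ × ℝ) (r : ℝ) (hr0 : 0 < r) (hE : 3*(p.1+p.2) - 2 = r)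
    (hC : 1 - 3*p.2 ≤ r) (hs : 3*p.2 - 1 < 2*r) :
    Mpol (r, 2*π*((3*p.2 - 1 + r)/(9*r))) = p := by
  subst hE
  have hy0 : 0 ≤ (3*p.2 - 1 + (3*(p.1+p.2) - 2))/(9*(3*(p.1+p.2) - 2)) :=
    div_nonneg (by linarith) (by linarith)
  have hy2 : (3*p.2 - 1 + (3*(p.1+p.2) - 2))/(9*(3*(p.1+p.2) - 2)) < 1/3 := by
    rw [div_lt_iff₀ (by linarith : (0:ℝ) < 9*(3*(p.1+p.2) - 2))]
    linarith
  have hfr := fract_2pi _ hy0 (by linarith)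
  rw [Mpol_eq1 _ _ (by rw [hfr]; exact hy2), hfr]
  have hne : (3*(p.1+p.2) - 2) ≠ 0 := ne_of_gt hr0
  rw [Prod.ext_iff]
  constructor <;> (simp only; field_simp; try ring)

lemma repM2 (p : ℝ × ℝ) (r : ℝ) (hr0 : 0 < r) (hE : 1 - 3*p.1 = r)
    (hlow : 3*p.2 - 1 ≤ 2*r) (hs : 1 - 3*p.2 < r) :
    Mpol (r, 2*π*((1 + 5*r - 3*p.2)/(9*r))) = p := by
  subst hE
  have hy1 : 1/3 ≤ (1 + 5*(1 - 3*p.1) - 3*p.2)/(9*(1 - 3*p.1)) := by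
    rw [le_div_iff₀ (by linarith : (0:ℝ) < 9*(1 - 3*p.1))]
    linarith
  have hy2 : (1 + 5*(1 - 3*p.1) - 3*p.2)/(9*(1 - 3*p.1)) < 2/3 := by
    rw [div_lt_iff₀ (by linarith : (0:ℝ) < 9*(1 - 3*p.1))]
    linarith
  have hfr := fract_2pi _ (by linarith) (by linarith)
  rw [Mpol_eq2 _ _ (by rw [hfr]; exact hy1) (by rw [hfr]; exact hy2), hfr]
  have hne : (1 - 3*p.1) ≠ 0 := ne_of_gt hr0
  rw [Prod.ext_iff]
  constructor <;> (simp only; field_simp; try ring)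

lemma repM3 (p : ℝ × ℝ) (r : ℝ) (hr0 : 0 < r) (hE : 1 - 3*p.2 = r)
    (hB : 1 - 3*p.1 ≤ r) (hs : 3*p.1 - 1 < 2*r) :
    Mpol (r, 2*π*((3*p.1 - 1 + 7*r)/(9*r))) = p := by
  subst hE
  have hy1 : 2/3 ≤ (3*p.1 - 1 + 7*(1 - 3*p.2))/(9*(1 - 3*p.2)) := by
    rw [le_div_iff₀ (by linarith : (0:ℝ) < 9*(1 - 3*p.2))]
    linarith
  have hy2 : (3*p.1 - 1 + 7*(1 - 3*p.2))/(9*(1 - 3*p.2)) < 1 := by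
    rw [div_lt_iff₀ (by linarith : (0:ℝ) < 9*(1 - 3*p.2))]
    linarith
  have hfr := fract_2pi _ (by linarith) hy2
  rw [Mpol_eq3 _ _ (by rw [hfr]; exact hy1), hfr]
  have hne : (1 - 3*p.2) ≠ 0 := ne_of_gt hr0
  rw [Prod.ext_iff]
  constructor <;> (simp only; field_simp; try ring)

lemma exists_Mpol (p : ℝ × ℝ) (h1 : 0 ≤ p.1) (h2 : 0 ≤ p.2) (h3 : p.1 + p.2 ≤ 1) :
    ∃ r x : ℝ, 0 ≤ r ∧ r ≤ 1 ∧ Mpol (r, x) = p := by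
  set r := max (3*(p.1+p.2) - 2) (max (1 - 3*p.1) (1 - 3*p.2)) with hrdef
  have hA : 3*(p.1+p.2) - 2 ≤ r := le_max_left _ _
  have hB : 1 - 3*p.1 ≤ r := le_trans (le_max_left _ _) (le_max_right _ _)
  have hC : 1 - 3*p.2 ≤ r := le_trans (le_max_right _ _) (le_max_right _ _)
  have hr1 : r ≤ 1 := by
    apply max_le (by linarith)
    apply max_le (by linarith) (by linarith)
  rcases le_or_gt r 0 with hr0 | hr0
  · -- center point
    refine ⟨0, 0, le_refl _, by norm_num, ?_⟩
    have e1 : p.1 = 1/3 := by linarith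
    have e2 : p.2 = 1/3 := by linarith
    have hfr : Int.fract ((0:ℝ)/(2*π)) = 0 := by
      rw [zero_div]
      exact Int.fract_zero
    rw [Mpol_eq1 0 0 (by rw [hfr]; norm_num), hfr, Prod.ext_iff]
    constructor <;> (simp only; norm_num [e1, e2])
  · have hsum : (3*(p.1+p.2) - 2) + (1 - 3*p.1) + (1 - 3*p.2) = 0 := by ring
    have hmax : r = 3*(p.1+p.2) - 2 ∨ r = 1 - 3*p.1 ∨ r = 1 - 3*p.2 := by
      rcases max_choice (3*(p.1+p.2) - 2) (max (1 - 3*p.1) (1 - 3*p.2)) with h | h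
      · exact Or.inl (by rw [hrdef, h])
      · rcases max_choice (1 - 3*p.1) (1 - 3*p.2) with h' | h'
        · exact Or.inr (Or.inl (by rw [hrdef, h, h']))
        · exact Or.inr (Or.inr (by rw [hrdef, h, h']))
    rcases hmax with hE | hE | hE
    · by_cases hs : 3*p.2 - 1 < 2*r
      · exact ⟨r, _, le_of_lt hr0, hr1, repM1 p r hr0 hE.symm hC hs⟩
      · push_neg at hs
        have hE2 : 1 - 3*p.1 = r := by linarith
        have hs2 : 1 - 3*p.2 < r := by
          rcases lt_or_ge (1 - 3*p.2) r with h | h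
          · exact h
          · exfalso; linarith
        exact ⟨r, _, le_of_lt hr0, hr1, repM2 p r hr0 hE2 (by linarith) hs2⟩
    · by_cases hs : 1 - 3*p.2 < r
      · exact ⟨r, _, le_of_lt hr0, hr1, repM2 p r hr0 hE.symm (by linarith) hs⟩
      · push_neg at hs
        have hE2 : 1 - 3*p.2 = r := le_antisymm hC hs
        have hs2 : 3*p.1 - 1 < 2*r := by
          rcases lt_or_ge (3*p.1 - 1) (2*r) with h | h
          · exact h
          · exfalso; linarith
        exact ⟨r, _, le_of_lt hr0, hr1, repM3 p r hr0 hE2 hB hs2⟩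
    · by_cases hs : 3*p.1 - 1 < 2*r
      · exact ⟨r, _, le_of_lt hr0, hr1, repM3 p r hr0 hE.symm hB hs⟩
      · push_neg at hs
        have hE2 : 3*(p.1+p.2) - 2 = r := by linarith
        have hs2 : 3*p.2 - 1 < 2*r := by
          rcases lt_or_ge (3*p.2 - 1) (2*r) with h | h
          · exact h
          · exfalso; linarith
        exact ⟨r, _, le_of_lt hr0, hr1, repM1 p r hr0 hE2 hC hs2⟩

lemma repN1 (p : ℝ × ℝ) (r : ℝ) (hr0 : 0 < r) (hE : 4*p.1 - 2 = r)
    (h : 2 - 4*p.2 ≤ r) (hs : 4*p.2 - 2 < r) :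
    Npol (r, 2*π*((4*p.2 - 2 + r)/(8*r))) = p := by
  subst hE
  have hy0 : 0 ≤ (4*p.2 - 2 + (4*p.1 - 2))/(8*(4*p.1 - 2)) :=
    div_nonneg (by linarith) (by linarith)
  have hy2 : (4*p.2 - 2 + (4*p.1 - 2))/(8*(4*p.1 - 2)) < 1/4 := by
    rw [div_lt_iff₀ (by linarith : (0:ℝ) < 8*(4*p.1 - 2))]
    linarith
  have hfr := fract_2pi _ hy0 (by linarith)
  rw [Npol_eq1 _ _ (by rw [hfr]; exact hy2), hfr]
  have hne : (4*p.1 - 2) ≠ 0 := ne_of_gt hr0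
  rw [Prod.ext_iff]
  constructor <;> (simp only; field_simp; try ring)

lemma repN2 (p : ℝ × ℝ) (r : ℝ) (hr0 : 0 < r) (hE : 4*p.2 - 2 = r)
    (h : 4*p.1 - 2 ≤ r) (hs : 2 - 4*p.1 < r) :
    Npol (r, 2*π*((2 + 3*r - 4*p.1)/(8*r))) = p := by
  subst hE
  have hy1 : 1/4 ≤ (2 + 3*(4*p.2 - 2) - 4*p.1)/(8*(4*p.2 - 2)) := by
    rw [le_div_iff₀ (by linarith : (0:ℝ) < 8*(4*p.2 - 2))]
    linarith
  have hy2 : (2 + 3*(4*p.2 - 2) - 4*p.1)/(8*(4*p.2 - 2)) < 1/2 := by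
    rw [div_lt_iff₀ (by linarith : (0:ℝ) < 8*(4*p.2 - 2))]
    linarith
  have hfr := fract_2pi _ (by linarith) (by linarith)
  rw [Npol_eq2 _ _ (by rw [hfr]; exact hy1) (by rw [hfr]; exact hy2), hfr]
  have hne : (4*p.2 - 2) ≠ 0 := ne_of_gt hr0
  rw [Prod.ext_iff]
  constructor <;> (simp only; field_simp; try ring)

lemma repN3 (p : ℝ × ℝ) (r : ℝ) (hr0 : 0 < r) (hE : 2 - 4*p.1 = r)
    (h : 4*p.2 - 2 ≤ r) (hs : 2 - 4*p.2 < r) :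
    Npol (r, 2*π*((2 + 5*r - 4*p.2)/(8*r))) = p := by
  subst hE
  have hy1 : 1/2 ≤ (2 + 5*(2 - 4*p.1) - 4*p.2)/(8*(2 - 4*p.1)) := by
    rw [le_div_iff₀ (by linarith : (0:ℝ) < 8*(2 - 4*p.1))]
    linarith
  have hy2 : (2 + 5*(2 - 4*p.1) - 4*p.2)/(8*(2 - 4*p.1)) < 3/4 := by
    rw [div_lt_iff₀ (by linarith : (0:ℝ) < 8*(2 - 4*p.1))]
    linarith
  have hfr := fract_2pi _ (by linarith) (by linarith)
  rw [Npol_eq3 _ _ (by rw [hfr]; exact hy1) (by rw [hfr]; exact hy2), hfr]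
  have hne : (2 - 4*p.1) ≠ 0 := ne_of_gt hr0
  rw [Prod.ext_iff]
  constructor <;> (simp only; field_simp; try ring)

lemma repN4 (p : ℝ × ℝ) (r : ℝ) (hr0 : 0 < r) (hE : 2 - 4*p.2 = r)
    (h : 2 - 4*p.1 ≤ r) (hs : 4*p.1 - 2 < r) :
    Npol (r, 2*π*((4*p.1 - 2 + 7*r)/(8*r))) = p := by
  subst hE
  have hy1 : 3/4 ≤ (4*p.1 - 2 + 7*(2 - 4*p.2))/(8*(2 - 4*p.2)) := by
    rw [le_div_iff₀ (by linarith : (0:ℝ) < 8*(2 - 4*p.2))]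
    linarith
  have hy2 : (4*p.1 - 2 + 7*(2 - 4*p.2))/(8*(2 - 4*p.2)) < 1 := by
    rw [div_lt_iff₀ (by linarith : (0:ℝ) < 8*(2 - 4*p.2))]
    linarith
  have hfr := fract_2pi _ (by linarith) hy2
  rw [Npol_eq4 _ _ (by rw [hfr]; exact hy1), hfr]
  have hne : (2 - 4*p.2) ≠ 0 := ne_of_gt hr0
  rw [Prod.ext_iff]
  constructor <;> (simp only; field_simp; try ring)

lemma exists_Npol (p : ℝ × ℝ) (h1 : 1/4 ≤ p.1) (h2 : p.1 ≤ 3/4)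
    (h3 : 1/4 ≤ p.2) (h4 : p.2 ≤ 3/4) :
    ∃ r x : ℝ, 0 ≤ r ∧ r ≤ 1 ∧ Npol (r, x) = p := by
  set r := max (4*p.1 - 2) (max (2 - 4*p.1) (max (4*p.2 - 2) (2 - 4*p.2))) with hrdef
  have hA : 4*p.1 - 2 ≤ r := le_max_left _ _
  have hB : 2 - 4*p.1 ≤ r := le_trans (le_max_left _ _) (le_max_right _ _)
  have hC : 4*p.2 - 2 ≤ r :=
    le_trans (le_trans (le_max_left _ _) (le_max_right _ _)) (le_max_right _ _)
  have hD : 2 - 4*p.2 ≤ r :=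
    le_trans (le_trans (le_max_right _ _) (le_max_right _ _)) (le_max_right _ _)
  have hr1 : r ≤ 1 := by
    apply max_le (by linarith)
    apply max_le (by linarith)
    apply max_le (by linarith) (by linarith)
  rcases le_or_gt r 0 with hr0 | hr0
  · refine ⟨0, 0, le_refl _, by norm_num, ?_⟩
    have e1 : p.1 = 1/2 := by linarith
    have e2 : p.2 = 1/2 := by linarith
    have hfr : Int.fract ((0:ℝ)/(2*π)) = 0 := by
      rw [zero_div]; exact Int.fract_zero
    rw [Npol_eq1 0 0 (by rw [hfr]; norm_num), hfr, Prod.ext_iff]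
    constructor <;> (simp only; norm_num [e1, e2])
  · have hmax : r = 4*p.1 - 2 ∨ r = 2 - 4*p.1 ∨ r = 4*p.2 - 2 ∨ r = 2 - 4*p.2 := by
      rcases max_choice (4*p.1 - 2) (max (2 - 4*p.1) (max (4*p.2 - 2) (2 - 4*p.2))) with h | h
      · exact Or.inl (by rw [hrdef, h])
      rcases max_choice (2 - 4*p.1) (max (4*p.2 - 2) (2 - 4*p.2)) with h' | h'
      · exact Or.inr (Or.inl (by rw [hrdef, h, h']))
      rcases max_choice (4*p.2 - 2) (2 - 4*p.2) with h'' | h''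
      · exact Or.inr (Or.inr (Or.inl (by rw [hrdef, h, h', h''])))
      · exact Or.inr (Or.inr (Or.inr (by rw [hrdef, h, h', h''])))
    rcases hmax with hE | hE | hE | hE
    · by_cases hs : 4*p.2 - 2 < r
      · exact ⟨r, _, le_of_lt hr0, hr1, repN1 p r hr0 hE.symm hD hs⟩
      · push_neg at hs
        have hE2 : 4*p.2 - 2 = r := le_antisymm hC hs
        exact ⟨r, _, le_of_lt hr0, hr1, repN2 p r hr0 hE2 hA (by linarith)⟩
    · by_cases hs : 2 - 4*p.2 < r
      · exact ⟨r, _, le_of_lt hr0, hr1, repN3 p r hr0 hE.symm hC hs⟩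
      · push_neg at hs
        have hE2 : 2 - 4*p.2 = r := le_antisymm hD hs
        exact ⟨r, _, le_of_lt hr0, hr1, repN4 p r hr0 hE2 hB (by linarith)⟩
    · by_cases hs : 2 - 4*p.1 < r
      · exact ⟨r, _, le_of_lt hr0, hr1, repN2 p r hr0 hE.symm hA hs⟩
      · push_neg at hs
        have hE2 : 2 - 4*p.1 = r := le_antisymm hB hs
        exact ⟨r, _, le_of_lt hr0, hr1, repN3 p r hr0 hE2 hC (by linarith)⟩
    · by_cases hs : 4*p.1 - 2 < r
      · exact ⟨r, _, le_of_lt hr0, hr1, repN4 p r hr0 hE.symm hB hs⟩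
      · push_neg at hs
        have hE2 : 4*p.1 - 2 = r := le_antisymm hA hs
        exact ⟨r, _, le_of_lt hr0, hr1, repN1 p r hr0 hE2 hD (by linarith)⟩

lemma S1_fwd {l : ℕ} {S : ℝ × ℝ → ℝ × ℝ} (hS : IsS1 l S) {p : ℝ × ℝ} (hp : p ∈ uSq) :
    S p ∈ uSq ∧ ∀ e : ℕ, (gridP e p ↔ gridP e (S p)) := by
  have hpm := mem_uSq.mp hp
  rcases le_total (p.1 + p.2) 1 with hL | hL
  · obtain ⟨r, x, hr0, hr1, hpe⟩ := exists_Mpol p hpm.1 hpm.2.2.1 hL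
    have hSp : S p = Mpol (r, x + 2*π*(l:ℝ)*ftw r) := by
      rw [← hpe, hS.1 r x hr0 hr1]
      rfl
    constructor
    · rw [hSp]; exact Mpol_mem_uSq _ _ hr0 hr1
    · intro e
      rw [hSp, ← hpe]
      exact grid_Mpol_iff e l r x
  · have h1 : 0 ≤ (Rpi p).1 := by show (0:ℝ) ≤ 1 - p.1; linarith [hpm.2.1]
    have h2 : 0 ≤ (Rpi p).2 := by show (0:ℝ) ≤ 1 - p.2; linarith [hpm.2.2.2]
    have h3 : (Rpi p).1 + (Rpi p).2 ≤ 1 := by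
      show 1 - p.1 + (1 - p.2) ≤ 1; linarith
    obtain ⟨r, x, hr0, hr1, hpe⟩ := exists_Mpol (Rpi p) h1 h2 h3
    have hpe' : p = Mpol' (r, x) := by
      calc p = Rpi (Rpi p) := (Rpi_Rpi p).symm
        _ = Rpi (Mpol (r, x)) := by rw [hpe]
        _ = Mpol' (r, x) := rfl
    have hSp : S p = Rpi (Mpol (r, x + 2*π*(l:ℝ)*ftw r)) := by
      rw [hpe', hS.2 r x hr0 hr1]
      rfl
    constructor
    · rw [hSp]; exact Rpi_mem_uSq (Mpol_mem_uSq _ _ hr0 hr1)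
    · intro e
      rw [hSp, gridP_Rpi]
      have h0 : gridP e p ↔ gridP e (Mpol (r, x)) := by
        rw [hpe]; exact (gridP_Rpi e p).symm
      exact h0.trans (grid_Mpol_iff e l r x)

lemma S1_surj {l : ℕ} {S : ℝ × ℝ → ℝ × ℝ} (hS : IsS1 l S) {q : ℝ × ℝ} (hq : q ∈ uSq) :
    ∃ p, p ∈ uSq ∧ S p = q ∧ ∀ e : ℕ, (gridP e p ↔ gridP e q) := by
  have hqm := mem_uSq.mp hq
  rcases le_total (q.1 + q.2) 1 with hL | hL
  · obtain ⟨r, x, hr0, hr1, hqe⟩ := exists_Mpol q hqm.1 hqm.2.2.1 hL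
    refine ⟨Mpol (r, x - 2*π*(l:ℝ)*ftw r), Mpol_mem_uSq _ _ hr0 hr1, ?_, ?_⟩
    · rw [hS.1 r (x - 2*π*(l:ℝ)*ftw r) hr0 hr1]
      show Mpol (r, x - 2*π*(l:ℝ)*ftw r + 2*π*(l:ℝ)*ftw r) = q
      rw [show x - 2*π*(l:ℝ)*ftw r + 2*π*(l:ℝ)*ftw r = x by ring, hqe]
    · intro e
      rw [← hqe]
      have h := grid_Mpol_iff e l r (x - 2*π*(l:ℝ)*ftw r)
      rwa [show x - 2*π*(l:ℝ)*ftw r + 2*π*(l:ℝ)*ftw r = x by ring] at h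
  · have h1 : 0 ≤ (Rpi q).1 := by show (0:ℝ) ≤ 1 - q.1; linarith [hqm.2.1]
    have h2 : 0 ≤ (Rpi q).2 := by show (0:ℝ) ≤ 1 - q.2; linarith [hqm.2.2.2]
    have h3 : (Rpi q).1 + (Rpi q).2 ≤ 1 := by
      show 1 - q.1 + (1 - q.2) ≤ 1; linarith
    obtain ⟨r, x, hr0, hr1, hqe⟩ := exists_Mpol (Rpi q) h1 h2 h3
    refine ⟨Rpi (Mpol (r, x - 2*π*(l:ℝ)*ftw r)),
      Rpi_mem_uSq (Mpol_mem_uSq _ _ hr0 hr1), ?_, ?_⟩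
    · have hstep := hS.2 r (x - 2*π*(l:ℝ)*ftw r) hr0 hr1
      have : S (Rpi (Mpol (r, x - 2*π*(l:ℝ)*ftw r))) =
          Rpi (Mpol (r, x - 2*π*(l:ℝ)*ftw r + 2*π*(l:ℝ)*ftw r)) := hstep
      rw [this, show x - 2*π*(l:ℝ)*ftw r + 2*π*(l:ℝ)*ftw r = x by ring, hqe, Rpi_Rpi]
    · intro e
      rw [gridP_Rpi]
      have h := grid_Mpol_iff e l r (x - 2*π*(l:ℝ)*ftw r)
      rw [show x - 2*π*(l:ℝ)*ftw r + 2*π*(l:ℝ)*ftw r = x by ring] at h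
      have h0 : gridP e q ↔ gridP e (Mpol (r, x)) := by
        rw [hqe]; exact (gridP_Rpi e q).symm
      exact h.trans h0.symm

lemma S2_fwd {m : ℕ} {S : ℝ × ℝ → ℝ × ℝ} (hS : IsS2 m S) {p : ℝ × ℝ} (hp : p ∈ uSq) :
    S p ∈ uSq ∧ ∀ e : ℕ, (gridP e p ↔ gridP e (S p)) := by
  by_cases hpE : p ∈ Esq
  · have hm := mem_Esq.mp hpE
    obtain ⟨r, x, hr0, hr1, hpe⟩ := exists_Npol p hm.1 hm.2.1 hm.2.2.1 hm.2.2.2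
    have hSp : S p = Npol (r, x - 2*π*(m:ℝ)*gtw r) := by
      rw [← hpe, hS.1 r x hr0 hr1]
      rfl
    constructor
    · rw [hSp]; exact Esq_sub_uSq (Npol_mem_Esq _ _ hr0 hr1)
    · intro e
      rw [hSp, ← hpe]
      exact grid_Npol_iff e m r x
  · rw [hS.2 p ⟨hp, hpE⟩]
    exact ⟨hp, fun e => Iff.rfl⟩

lemma S2_surj {m : ℕ} {S : ℝ × ℝ → ℝ × ℝ} (hS : IsS2 m S) {q : ℝ × ℝ} (hq : q ∈ uSq) :
    ∃ p, p ∈ uSq ∧ S p = q ∧ ∀ e : ℕ, (gridP e p ↔ gridP e q) := by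
  by_cases hqE : q ∈ Esq
  · have hm := mem_Esq.mp hqE
    obtain ⟨r, x, hr0, hr1, hqe⟩ := exists_Npol q hm.1 hm.2.1 hm.2.2.1 hm.2.2.2
    refine ⟨Npol (r, x + 2*π*(m:ℝ)*gtw r),
      Esq_sub_uSq (Npol_mem_Esq _ _ hr0 hr1), ?_, ?_⟩
    · rw [hS.1 r (x + 2*π*(m:ℝ)*gtw r) hr0 hr1]
      show Npol (r, x + 2*π*(m:ℝ)*gtw r - 2*π*(m:ℝ)*gtw r) = q
      rw [show x + 2*π*(m:ℝ)*gtw r - 2*π*(m:ℝ)*gtw r = x by ring, hqe]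
    · intro e
      rw [← hqe]
      have h := grid_Npol_iff e m r (x + 2*π*(m:ℝ)*gtw r)
      rwa [show x + 2*π*(m:ℝ)*gtw r - 2*π*(m:ℝ)*gtw r = x by ring] at h
  · exact ⟨q, hq, hS.2 q ⟨hq, hqE⟩, fun e => Iff.rfl⟩

/-- Theorem 1(3), second part: `B_{lm}` permutes the set `A_d` of rational points of
`[0,1]²` of denominator `d`, for every `d ≥ 1`. -/
theorem Blm_permutes_denominators (l m : ℕ) (hl : 1 ≤ l) (hm : 1 ≤ m)
    (B : ℝ × ℝ → ℝ × ℝ) (hB : IsBmap l m B) (d : ℕ) (hd : 1 ≤ d) :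
    B '' Aden d = Aden d := by
  obtain ⟨S1, S2, hS1, hS2, hB⟩ := hB
  apply Set.Subset.antisymm
  · rintro q ⟨p, ⟨hpu, hpden⟩, rfl⟩
    have h1 := S1_fwd hS1 hpu
    have h2 := S2_fwd hS2 h1.1
    have hBp : B p = S2 (S1 p) := hB p hpu
    refine ⟨by rw [hBp]; exact h2.1, ?_, ?_⟩
    · rw [hBp]
      exact (h2.2 d).mp ((h1.2 d).mp hpden.1)
    · intro e he hge
      rw [hBp] at hge
      exact hpden.2 e he ((h1.2 e).mpr ((h2.2 e).mpr hge))
  · intro q hq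
    obtain ⟨hqu, hqden⟩ := hq
    obtain ⟨p2, hp2u, hp2e, hp2g⟩ := S2_surj hS2 hqu
    obtain ⟨p1, hp1u, hp1e, hp1g⟩ := S1_surj hS1 hp2u
    refine ⟨p1, ⟨hp1u, ?_, ?_⟩, ?_⟩
    · exact (hp1g d).mpr ((hp2g d).mpr hqden.1)
    · intro e he hge
      exact hqden.2 e he ((hp2g e).mp ((hp1g e).mp hge))
    · rw [hB p1 hp1u, hp1e, hp2e]
end
end

section
/- (Theorem 1(4), dense finite orbits) For all integers l, m ≥ 1, the set of points of [0,1]² having finite B_{lm}-orbit, i.e. {p ∈ [0,1]² : {B_{lm}ⁿ(p) : n ∈ ℤ} is finite}, is dense in [0,1]². -/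
open Real MeasureTheory Set

noncomputable section

/-- The `n`-th iterate of `B` for `n ∈ ℤ`, computed using a two-sided inverse `B'`. -/
def zIter (B B' : ℝ × ℝ → ℝ × ℝ) (p : ℝ × ℝ) (n : ℤ) : ℝ × ℝ :=
  if 0 ≤ n then B^[n.toNat] p else B'^[(-n).toNat] p


namespace BlmAux

lemma pi_pos : (0:ℝ) < π := Real.pi_pos
lemma pi_ne : (π:ℝ) ≠ 0 := Real.pi_ne_zero

/-- Rational lattice predicate: `q*x` is an integer. -/
def Lat (q : ℕ) (x : ℝ) : Prop := ∃ a : ℤ, (q : ℝ) * x = a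

lemma Lat.add {q : ℕ} {x y : ℝ} (hx : Lat q x) (hy : Lat q y) : Lat q (x + y) := by
  obtain ⟨a, ha⟩ := hx; obtain ⟨b, hb⟩ := hy
  exact ⟨a + b, by push_cast; rw [mul_add, ha, hb]⟩

lemma Lat.sub {q : ℕ} {x y : ℝ} (hx : Lat q x) (hy : Lat q y) : Lat q (x - y) := by
  obtain ⟨a, ha⟩ := hx; obtain ⟨b, hb⟩ := hy
  exact ⟨a - b, by push_cast; rw [mul_sub, ha, hb]⟩

lemma Lat.neg {q : ℕ} {x : ℝ} (hx : Lat q x) : Lat q (-x) := by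
  obtain ⟨a, ha⟩ := hx
  exact ⟨-a, by push_cast; rw [mul_neg, ha]⟩

lemma Lat.int (q : ℕ) (k : ℤ) : Lat q (k : ℝ) := ⟨q * k, by push_cast; ring⟩

lemma Lat.one (q : ℕ) : Lat q 1 := ⟨q, by push_cast; ring⟩

lemma Lat.zero (q : ℕ) : Lat q 0 := ⟨0, by push_cast; ring⟩

lemma Lat.zmul {q : ℕ} (k : ℤ) {x : ℝ} (hx : Lat q x) : Lat q ((k:ℝ) * x) := by
  obtain ⟨a, ha⟩ := hx
  exact ⟨k * a, by push_cast; rw [mul_left_comm, ha]⟩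

lemma Lat.min {q : ℕ} {x y : ℝ} (hx : Lat q x) (hy : Lat q y) : Lat q (min x y) := by
  rcases min_cases x y with ⟨h, _⟩ | ⟨h, _⟩ <;> rw [h]
  exacts [hx, hy]

lemma Lat.congr {q : ℕ} {x y : ℝ} (hx : Lat q x) (h : y = x) : Lat q y := h ▸ hx

lemma Lat.half {q : ℕ} (h4 : 4 ∣ q) : Lat q (1/2 : ℝ) := by
  obtain ⟨c, rfl⟩ := h4
  exact ⟨2 * c, by push_cast; ring⟩

/-- `Good q p` : `p` lies in the unit square and both coordinates are in `(1/q)ℤ`. -/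
def Good (q : ℕ) (p : ℝ × ℝ) : Prop := p ∈ uSq ∧ Lat q p.1 ∧ Lat q p.2

lemma mem_uSq_iff {p : ℝ × ℝ} :
    p ∈ uSq ↔ (0 ≤ p.1 ∧ p.1 ≤ 1) ∧ (0 ≤ p.2 ∧ p.2 ≤ 1) := by
  simp only [uSq, Set.mem_Icc, Prod.le_def]
  tauto

lemma mem_Esq_iff {p : ℝ × ℝ} :
    p ∈ Esq ↔ (1/4 ≤ p.1 ∧ p.1 ≤ 3/4) ∧ (1/4 ≤ p.2 ∧ p.2 ≤ 3/4) := by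
  simp only [Esq, Set.mem_Icc, Prod.le_def]
  tauto

/-- Piecewise description of `Mbd` in the scaled parameter `t = 3θ/(2π) ∈ [0,3)`. -/
def mb (t : ℝ) : ℝ × ℝ :=
  if t < 1 then (1 - t, t) else if t < 2 then (0, 2 - t) else (t - 2, 0)

/-- Piecewise description of `wbd` in the scaled parameter `t = 2θ/π ∈ [0,4)`. -/
def wb (t : ℝ) : ℝ × ℝ :=
  if t < 1 then (1/4, t/2 - 1/4)
  else if t < 2 then (3/4 - t/2, 1/4)
  else if t < 3 then (-(1/4), 5/4 - t/2)
  else (t/2 - 7/4, -(1/4))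

lemma Mpol_eval (r t : ℝ) :
    Mpol (r, 2*π*t/3) = ((1-r)/3, (1-r)/3) + r • mb (3 * Int.fract (t/3)) := by
  have hπ := pi_pos
  have hdiv : (2*π*t/3) / (2*π) = t/3 := by field_simp
  have hF0 : (0:ℝ) ≤ Int.fract (t/3) := Int.fract_nonneg _
  have hF1 : Int.fract (t/3) < 1 := Int.fract_lt_one _
  set F := Int.fract (t/3) with hF
  have hred : red (2*π*t/3) = 2*π*F := by rw [red, hdiv]
  show (1 - r) • ((1:ℝ)/3, (1:ℝ)/3) + r • Mbd (red (2*π*t/3)) = _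
  rw [hred]
  simp only [Mbd, mb]
  split_ifs <;>
  first
  | (exfalso; nlinarith)
  | (simp only [Prod.smul_mk, Prod.mk_add_mk, smul_eq_mul, Prod.mk.injEq]
     constructor <;> (field_simp; try ring))

lemma Npol_eval (s t : ℝ) :
    Npol (s, π*t/2) = ((1:ℝ)/2, (1:ℝ)/2) + s • wb (4 * Int.fract (t/4)) := by
  have hπ := pi_pos
  have hdiv : (π*t/2) / (2*π) = t/4 := by field_simp; ring
  have hF0 : (0:ℝ) ≤ Int.fract (t/4) := Int.fract_nonneg _
  have hF1 : Int.fract (t/4) < 1 := Int.fract_lt_one _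
  set F := Int.fract (t/4) with hF
  have hred : red (π*t/2) = 2*π*F := by rw [red, hdiv]
  show ((1:ℝ)/2, (1:ℝ)/2) + s • wbd (red (π*t/2)) = _
  rw [hred]
  simp only [wbd, wb]
  split_ifs <;>
  first
  | (exfalso; nlinarith)
  | (simp only [Prod.smul_mk, Prod.mk_add_mk, smul_eq_mul, Prod.mk.injEq]
     constructor <;> first | trivial | (field_simp; try ring))

lemma Mpol_eval' (r : ℝ) {t : ℝ} (ht0 : 0 ≤ t) (ht3 : t < 3) :
    Mpol (r, 2*π*t/3) = ((1-r)/3, (1-r)/3) + r • mb t := by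
  rw [Mpol_eval]
  congr 2
  rw [Int.fract_eq_self.mpr ⟨by linarith, by linarith⟩]
  ring

lemma Npol_eval' (s : ℝ) {t : ℝ} (ht0 : 0 ≤ t) (ht4 : t < 4) :
    Npol (s, π*t/2) = ((1:ℝ)/2, (1:ℝ)/2) + s • wb t := by
  rw [Npol_eval]
  congr 2
  rw [Int.fract_eq_self.mpr ⟨by linarith, by linarith⟩]
  ring

lemma r_ftw {r : ℝ} (hr0 : 0 ≤ r) : r * ftw r = min r ((1-r)/3) := by
  rcases eq_or_lt_of_le hr0 with h | h
  · rw [← h]; simp [ftw]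
  · rw [ftw, if_neg (ne_of_gt h), mul_min_of_nonneg _ _ hr0, mul_one]
    congr 1
    field_simp

lemma s_gtw {s : ℝ} (hs0 : 0 ≤ s) : s * gtw s = min s (1-s) := by
  rcases eq_or_lt_of_le hs0 with h | h
  · rw [← h]; simp [gtw]
  · rw [gtw, if_neg (ne_of_gt h), mul_min_of_nonneg _ _ hs0, mul_one]
    congr 1
    field_simp

lemma mb_bounds {t : ℝ} (ht0 : 0 ≤ t) (ht3 : t < 3) :
    0 ≤ (mb t).1 ∧ (mb t).1 ≤ 1 ∧ 0 ≤ (mb t).2 ∧ (mb t).2 ≤ 1 := by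
  unfold mb
  split_ifs <;> refine ⟨?_, ?_, ?_, ?_⟩ <;> simp <;> linarith

lemma wb_bounds {t : ℝ} (ht0 : 0 ≤ t) (ht4 : t < 4) :
    -(1/4) ≤ (wb t).1 ∧ (wb t).1 ≤ 1/4 ∧ -(1/4) ≤ (wb t).2 ∧ (wb t).2 ≤ 1/4 := by
  unfold wb
  split_ifs <;> refine ⟨?_, ?_, ?_, ?_⟩ <;> simp <;> linarith

lemma lat_fract3 {q : ℕ} {r T : ℝ} (hr : Lat q r) (hT : Lat q (r*T)) :
    Lat q (r * (3 * Int.fract (T/3))) := by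
  refine (hT.sub (Lat.zmul (3*⌊T/3⌋) hr)).congr ?_
  unfold Int.fract
  push_cast
  ring

lemma lat_fract4 {q : ℕ} {s T : ℝ} (hs : Lat q s) (hT2 : Lat q (s*T/2)) :
    Lat q (s * (4 * Int.fract (T/4)) / 2) := by
  refine (hT2.sub (Lat.zmul (2*⌊T/4⌋) hs)).congr ?_
  unfold Int.fract
  push_cast
  ring

lemma Rpi_Rpi (p : ℝ × ℝ) : Rpi (Rpi p) = p := by simp [Rpi]

lemma Good.rpi {q : ℕ} {p : ℝ × ℝ} (h : Good q p) : Good q (Rpi p) := by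
  obtain ⟨hm, h1, h2⟩ := h
  rw [mem_uSq_iff] at hm
  refine ⟨mem_uSq_iff.mpr ⟨⟨by simp only [Rpi]; linarith [hm.1.2], by simp only [Rpi]; linarith [hm.1.1]⟩,
    ⟨by simp only [Rpi]; linarith [hm.2.2], by simp only [Rpi]; linarith [hm.2.1]⟩⟩, ?_, ?_⟩
  · exact ((Lat.one q).sub h1).congr (by simp [Rpi])
  · exact ((Lat.one q).sub h2).congr (by simp [Rpi])

lemma good_MpolF {q l : ℕ} {r t : ℝ} (hr0 : 0 ≤ r) (hr1 : r ≤ 1)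
    (hLr : Lat q r) (hLu : Lat q ((1-r)/3)) (hLrt : Lat q (r*t)) :
    Good q (Mpol (Ftw l (r, 2*π*t/3))) := by
  have hft : Ftw l (r, 2*π*t/3) = (r, 2*π*(t + 3*(l:ℝ)*ftw r)/3) := by
    simp only [Ftw, Prod.mk.injEq]
    exact ⟨trivial, by ring⟩
  rw [hft, Mpol_eval]
  set T := t + 3*(l:ℝ)*ftw r with hT
  set w := 3 * Int.fract (T/3) with hw
  have hw0 : 0 ≤ w := by
    have := Int.fract_nonneg (T/3); rw [hw]; linarith
  have hw3 : w < 3 := by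
    have := Int.fract_lt_one (T/3); rw [hw]; linarith
  have hrf : Lat q (r * ftw r) := by rw [r_ftw hr0]; exact hLr.min hLu
  have hrT : Lat q (r*T) := by
    refine (hLrt.add (Lat.zmul (3*l) hrf)).congr ?_
    rw [hT]; push_cast; ring
  have hrw : Lat q (r*w) := lat_fract3 hLr hrT
  have hb := mb_bounds hw0 hw3
  have hc1 : (((1-r)/3, (1-r)/3) + r • mb w).1 = (1-r)/3 + r*(mb w).1 := by
    simp [Prod.fst_add, smul_eq_mul]
  have hc2 : (((1-r)/3, (1-r)/3) + r • mb w).2 = (1-r)/3 + r*(mb w).2 := by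
    simp [Prod.snd_add, smul_eq_mul]
  refine ⟨mem_uSq_iff.mpr ⟨⟨?_, ?_⟩, ⟨?_, ?_⟩⟩, ?_, ?_⟩
  · rw [hc1]; nlinarith [mul_nonneg hr0 hb.1]
  · rw [hc1]; nlinarith [mul_le_mul_of_nonneg_left hb.2.1 hr0]
  · rw [hc2]; nlinarith [mul_nonneg hr0 hb.2.2.1]
  · rw [hc2]; nlinarith [mul_le_mul_of_nonneg_left hb.2.2.2 hr0]
  · rw [hc1]
    by_cases h1 : w < 1
    · have : (mb w).1 = 1 - w := by simp [mb, h1]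
      rw [this]
      exact (hLu.add (hLr.sub hrw)).congr (by ring)
    · by_cases h2 : w < 2
      · have : (mb w).1 = 0 := by simp [mb, h1, h2]
        rw [this]
        exact (hLu.add (Lat.zero q)).congr (by ring)
      · have : (mb w).1 = w - 2 := by simp [mb, h1, h2]
        rw [this]
        exact (hLu.add (hrw.sub (Lat.zmul 2 hLr))).congr (by push_cast; ring)
  · rw [hc2]
    by_cases h1 : w < 1
    · have : (mb w).2 = w := by simp [mb, h1]
      rw [this]
      exact (hLu.add hrw).congr (by ring)
    · by_cases h2 : w < 2
      · have : (mb w).2 = 2 - w := by simp [mb, h1, h2]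
        rw [this]
        exact (hLu.add ((Lat.zmul 2 hLr).sub hrw)).congr (by push_cast; ring)
      · have : (mb w).2 = 0 := by simp [mb, h1, h2]
        rw [this]
        exact (hLu.add (Lat.zero q)).congr (by ring)

lemma good_NpolG {q m : ℕ} {s t : ℝ} (h4 : 4 ∣ q) (hs0 : 0 ≤ s) (hs1 : s ≤ 1)
    (hLs4 : Lat q (s/4)) (hLst2 : Lat q (s*t/2)) :
    Good q (Npol (Gtw m (s, π*t/2))) := by
  have hgt : Gtw m (s, π*t/2) = (s, π*(t - 4*(m:ℝ)*gtw s)/2) := by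
    simp only [Gtw, Prod.mk.injEq]
    exact ⟨trivial, by ring⟩
  rw [hgt, Npol_eval]
  set T := t - 4*(m:ℝ)*gtw s with hT
  set w := 4 * Int.fract (T/4) with hw
  have hw0 : 0 ≤ w := by
    have := Int.fract_nonneg (T/4); rw [hw]; linarith
  have hw4 : w < 4 := by
    have := Int.fract_lt_one (T/4); rw [hw]; linarith
  have hLs : Lat q s := (Lat.zmul 4 hLs4).congr (by push_cast; ring)
  have hsg : Lat q (s * gtw s) := by rw [s_gtw hs0]; exact hLs.min ((Lat.one q).sub hLs)
  have hsT2 : Lat q (s*T/2) := by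
    refine (hLst2.sub (Lat.zmul (2*m) hsg)).congr ?_
    rw [hT]; push_cast; ring
  have hsw2 : Lat q (s*w/2) := lat_fract4 hLs hsT2
  have hb := wb_bounds hw0 hw4
  have hhalf := Lat.half (q := q) h4
  have hc1 : (((1:ℝ)/2, (1:ℝ)/2) + s • wb w).1 = 1/2 + s*(wb w).1 := by
    simp [Prod.fst_add, smul_eq_mul]
  have hc2 : (((1:ℝ)/2, (1:ℝ)/2) + s • wb w).2 = 1/2 + s*(wb w).2 := by
    simp [Prod.snd_add, smul_eq_mul]
  refine ⟨mem_uSq_iff.mpr ⟨⟨?_, ?_⟩, ⟨?_, ?_⟩⟩, ?_, ?_⟩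
  · rw [hc1]; nlinarith [mul_le_mul_of_nonneg_left hb.1 hs0]
  · rw [hc1]; nlinarith [mul_le_mul_of_nonneg_left hb.2.1 hs0]
  · rw [hc2]; nlinarith [mul_le_mul_of_nonneg_left hb.2.2.1 hs0]
  · rw [hc2]; nlinarith [mul_le_mul_of_nonneg_left hb.2.2.2 hs0]
  · rw [hc1]
    by_cases h1 : w < 1
    · have : (wb w).1 = 1/4 := by simp [wb, h1]
      rw [this]
      exact (hhalf.add hLs4).congr (by ring)
    · by_cases h2 : w < 2
      · have : (wb w).1 = 3/4 - w/2 := by simp [wb, h1, h2]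
        rw [this]
        exact (hhalf.add ((Lat.zmul 3 hLs4).sub hsw2)).congr (by push_cast; ring)
      · by_cases h3 : w < 3
        · have : (wb w).1 = -(1/4) := by simp [wb, h1, h2, h3]
          rw [this]
          exact (hhalf.sub hLs4).congr (by ring)
        · have : (wb w).1 = w/2 - 7/4 := by simp [wb, h1, h2, h3]
          rw [this]
          exact (hhalf.add (hsw2.sub (Lat.zmul 7 hLs4))).congr (by push_cast; ring)
  · rw [hc2]
    by_cases h1 : w < 1
    · have : (wb w).2 = w/2 - 1/4 := by simp [wb, h1]
      rw [this]
      exact (hhalf.add (hsw2.sub hLs4)).congr (by ring)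
    · by_cases h2 : w < 2
      · have : (wb w).2 = 1/4 := by simp [wb, h1, h2]
        rw [this]
        exact (hhalf.add hLs4).congr (by ring)
      · by_cases h3 : w < 3
        · have : (wb w).2 = 5/4 - w/2 := by simp [wb, h1, h2, h3]
          rw [this]
          exact (hhalf.add ((Lat.zmul 5 hLs4).sub hsw2)).congr (by push_cast; ring)
        · have : (wb w).2 = -(1/4) := by simp [wb, h1, h2, h3]
          rw [this]
          exact (hhalf.sub hLs4).congr (by ring)

lemma mb1 {t : ℝ} (h : t < 1) : mb t = (1-t, t) := by
  unfold mb; rw [if_pos h]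

lemma mb2 {t : ℝ} (h1 : 1 ≤ t) (h2 : t < 2) : mb t = (0, 2-t) := by
  unfold mb; rw [if_neg (not_lt.mpr h1), if_pos h2]

lemma mb3 {t : ℝ} (h : 2 ≤ t) : mb t = (t-2, 0) := by
  unfold mb; rw [if_neg (not_lt.mpr (by linarith)), if_neg (not_lt.mpr h)]

lemma wb1 {t : ℝ} (h : t < 1) : wb t = (1/4, t/2 - 1/4) := by
  unfold wb; rw [if_pos h]

lemma wb2 {t : ℝ} (h1 : 1 ≤ t) (h2 : t < 2) : wb t = (3/4 - t/2, 1/4) := by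
  unfold wb; rw [if_neg (not_lt.mpr h1), if_pos h2]

lemma wb3 {t : ℝ} (h1 : 2 ≤ t) (h2 : t < 3) : wb t = (-(1/4), 5/4 - t/2) := by
  unfold wb; rw [if_neg (not_lt.mpr (by linarith)), if_neg (not_lt.mpr h1), if_pos h2]

lemma wb4 {t : ℝ} (h : 3 ≤ t) : wb t = (t/2 - 7/4, -(1/4)) := by
  unfold wb
  rw [if_neg (not_lt.mpr (by linarith)), if_neg (not_lt.mpr (by linarith)),
    if_neg (not_lt.mpr h)]

lemma rep_L {q : ℕ} {x y : ℝ} (hx0 : 0 ≤ x) (hy0 : 0 ≤ y) (hxy : x + y ≤ 1)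
    (hLx : Lat q x) (hLy : Lat q y) :
    ∃ r t : ℝ, 0 ≤ r ∧ r ≤ 1 ∧ Lat q r ∧ Lat q ((1-r)/3) ∧ Lat q (r*t) ∧
      Mpol (r, 2*π*t/3) = (x, y) := by
  have hone := Lat.one q
  have caseA : 1-x-y ≤ y → 1-x-y < x →
      ∃ r t : ℝ, 0 ≤ r ∧ r ≤ 1 ∧ Lat q r ∧ Lat q ((1-r)/3) ∧ Lat q (r*t) ∧
        Mpol (r, 2*π*t/3) = (x, y) := by
    intro h1 h2
    have hrp : (0:ℝ) < 3*(x+y)-2 := by linarith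
    have hne : 3*(x+y)-2 ≠ 0 := ne_of_gt hrp
    have ht0 : 0 ≤ (x+2*y-1)/(3*(x+y)-2) := div_nonneg (by linarith) hrp.le
    have ht1 : (x+2*y-1)/(3*(x+y)-2) < 1 := (div_lt_one hrp).mpr (by linarith)
    refine ⟨3*(x+y)-2, (x+2*y-1)/(3*(x+y)-2), hrp.le, by linarith,
      ((Lat.zmul 3 (hLx.add hLy)).sub (Lat.zmul 2 hone)).congr (by push_cast; ring),
      ((hone.sub hLx).sub hLy).congr (by ring), ?_, ?_⟩
    · refine ((hLx.add (Lat.zmul 2 hLy)).sub hone).congr ?_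
      push_cast
      field_simp
      try ring
    · rw [Mpol_eval' _ ht0 (by linarith), mb1 ht1]
      simp only [Prod.smul_mk, Prod.mk_add_mk, smul_eq_mul, Prod.mk.injEq]
      constructor <;> (field_simp; try ring)
  have caseB : x ≤ 1-x-y → x < y →
      ∃ r t : ℝ, 0 ≤ r ∧ r ≤ 1 ∧ Lat q r ∧ Lat q ((1-r)/3) ∧ Lat q (r*t) ∧
        Mpol (r, 2*π*t/3) = (x, y) := by
    intro h1 h2
    have hrp : (0:ℝ) < 1-3*x := by linarith
    have hne : 1-3*x ≠ 0 := ne_of_gt hrp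
    have hd0 : 0 ≤ (1-2*x-y)/(1-3*x) := div_nonneg (by linarith) hrp.le
    have hd1 : (1-2*x-y)/(1-3*x) < 1 := (div_lt_one hrp).mpr (by linarith)
    refine ⟨1-3*x, 1 + (1-2*x-y)/(1-3*x), hrp.le, by linarith,
      (hone.sub (Lat.zmul 3 hLx)).congr (by push_cast; ring),
      hLx.congr (by ring), ?_, ?_⟩
    · refine ((Lat.zmul 2 hone).sub ((Lat.zmul 5 hLx).add hLy)).congr ?_
      push_cast
      field_simp
      try ring
    · rw [Mpol_eval' _ (by linarith) (by linarith), mb2 (by linarith) (by linarith)]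
      simp only [Prod.smul_mk, Prod.mk_add_mk, smul_eq_mul, Prod.mk.injEq]
      constructor <;> (field_simp; try ring)
  have caseC : y ≤ x → y < 1-x-y →
      ∃ r t : ℝ, 0 ≤ r ∧ r ≤ 1 ∧ Lat q r ∧ Lat q ((1-r)/3) ∧ Lat q (r*t) ∧
        Mpol (r, 2*π*t/3) = (x, y) := by
    intro h1 h2
    have hrp : (0:ℝ) < 1-3*y := by linarith
    have hne : 1-3*y ≠ 0 := ne_of_gt hrp
    have hd0 : 0 ≤ (x-y)/(1-3*y) := div_nonneg (by linarith) hrp.le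
    have hd1 : (x-y)/(1-3*y) < 1 := (div_lt_one hrp).mpr (by linarith)
    refine ⟨1-3*y, 2 + (x-y)/(1-3*y), hrp.le, by linarith,
      (hone.sub (Lat.zmul 3 hLy)).congr (by push_cast; ring),
      hLy.congr (by ring), ?_, ?_⟩
    · refine (((Lat.zmul 2 hone).add hLx).sub (Lat.zmul 7 hLy)).congr ?_
      push_cast
      field_simp
      try ring
    · rw [Mpol_eval' _ (by linarith) (by linarith), mb3 (by linarith)]
      simp only [Prod.smul_mk, Prod.mk_add_mk, smul_eq_mul, Prod.mk.injEq]
      constructor <;> (field_simp; try ring)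
  rcases lt_trichotomy y (1-x-y) with h1 | h1 | h1
  · rcases le_or_gt y x with h2 | h2
    · exact caseC h2 h1
    · exact caseB (by linarith) h2
  · rcases lt_trichotomy x y with h2 | h2 | h2
    · exact caseB (by linarith) h2
    · -- center
      have hx3 : x = 1/3 := by linarith
      have hy3 : y = 1/3 := by linarith
      refine ⟨0, 0, le_rfl, by norm_num, Lat.zero q, hLx.congr (by rw [hx3]; norm_num),
        (Lat.zero q).congr (by ring), ?_⟩
      rw [Mpol_eval' 0 le_rfl (by norm_num), mb1 (by norm_num : (0:ℝ) < 1)]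
      simp only [Prod.smul_mk, Prod.mk_add_mk, smul_eq_mul, Prod.mk.injEq]
      constructor <;> norm_num [hx3, hy3]
    · exact caseA (by linarith) (by linarith)
  · rcases le_or_gt x (1-x-y) with h2 | h2
    · exact caseB h2 (by linarith)
    · exact caseA (by linarith) h2

lemma rep_E {q : ℕ} (h4 : 4 ∣ q) {x y : ℝ}
    (hx1 : 1/4 ≤ x) (hx2 : x ≤ 3/4) (hy1 : 1/4 ≤ y) (hy2 : y ≤ 3/4)
    (hLx : Lat q x) (hLy : Lat q y) :
    ∃ s t : ℝ, 0 ≤ s ∧ s ≤ 1 ∧ Lat q (s/4) ∧ Lat q (s*t/2) ∧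
      Npol (s, π*t/2) = (x, y) := by
  have hone := Lat.one q
  have hhalf := Lat.half (q := q) h4
  have caseR : y < x → 1 ≤ x + y →
      ∃ s t : ℝ, 0 ≤ s ∧ s ≤ 1 ∧ Lat q (s/4) ∧ Lat q (s*t/2) ∧
        Npol (s, π*t/2) = (x, y) := by
    intro h1 h2
    have hsp : (0:ℝ) < 4*x-2 := by linarith
    have hne : 4*x-2 ≠ 0 := ne_of_gt hsp
    have ht0 : 0 ≤ (4*y-2+(4*x-2))/(2*(4*x-2)) := div_nonneg (by linarith) (by linarith)
    have ht1 : (4*y-2+(4*x-2))/(2*(4*x-2)) < 1 := (div_lt_one (by linarith)).mpr (by linarith)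
    refine ⟨4*x-2, (4*y-2+(4*x-2))/(2*(4*x-2)), hsp.le, by linarith,
      (hLx.sub hhalf).congr (by ring), ?_, ?_⟩
    · refine ((hLx.add hLy).sub hone).congr ?_
      field_simp
      try ring
    · rw [Npol_eval' _ ht0 (by linarith), wb1 ht1]
      simp only [Prod.smul_mk, Prod.mk_add_mk, smul_eq_mul, Prod.mk.injEq]
      constructor <;> (field_simp; try ring)
  have caseT : x ≤ y → 1 < x + y →
      ∃ s t : ℝ, 0 ≤ s ∧ s ≤ 1 ∧ Lat q (s/4) ∧ Lat q (s*t/2) ∧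
        Npol (s, π*t/2) = (x, y) := by
    intro h1 h2
    have hsp : (0:ℝ) < 4*y-2 := by linarith
    have hne : 4*y-2 ≠ 0 := ne_of_gt hsp
    have ht1 : 1 ≤ (3*(4*y-2)-(4*x-2))/(2*(4*y-2)) := by
      rw [le_div_iff₀ (by linarith)]
      linarith
    have ht2 : (3*(4*y-2)-(4*x-2))/(2*(4*y-2)) < 2 := by
      rw [div_lt_iff₀ (by linarith)]
      linarith
    refine ⟨4*y-2, (3*(4*y-2)-(4*x-2))/(2*(4*y-2)), hsp.le, by linarith,
      (hLy.sub hhalf).congr (by ring), ?_, ?_⟩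
    · refine (((Lat.zmul 3 hLy).sub hLx).sub hone).congr ?_
      push_cast
      field_simp
      try ring
    · rw [Npol_eval' _ (by linarith) (by linarith), wb2 ht1 ht2]
      simp only [Prod.smul_mk, Prod.mk_add_mk, smul_eq_mul, Prod.mk.injEq]
      constructor <;> (field_simp; try ring)
  have caseL : x < y → x + y ≤ 1 →
      ∃ s t : ℝ, 0 ≤ s ∧ s ≤ 1 ∧ Lat q (s/4) ∧ Lat q (s*t/2) ∧
        Npol (s, π*t/2) = (x, y) := by
    intro h1 h2
    have hsp : (0:ℝ) < 2-4*x := by linarith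
    have hne : 2-4*x ≠ 0 := ne_of_gt hsp
    have ht1 : 2 ≤ (5*(2-4*x)-(4*y-2))/(2*(2-4*x)) := by
      rw [le_div_iff₀ (by linarith)]
      linarith
    have ht2 : (5*(2-4*x)-(4*y-2))/(2*(2-4*x)) < 3 := by
      rw [div_lt_iff₀ (by linarith)]
      linarith
    refine ⟨2-4*x, (5*(2-4*x)-(4*y-2))/(2*(2-4*x)), hsp.le, by linarith,
      (hhalf.sub hLx).congr (by ring), ?_, ?_⟩
    · refine (((Lat.zmul 5 hhalf).sub (Lat.zmul 5 hLx)).sub (hLy.sub hhalf)).congr ?_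
      push_cast
      field_simp
      try ring
    · rw [Npol_eval' _ (by linarith) (by linarith), wb3 ht1 ht2]
      simp only [Prod.smul_mk, Prod.mk_add_mk, smul_eq_mul, Prod.mk.injEq]
      constructor <;> (field_simp; try ring)
  have caseBo : y ≤ x → x + y < 1 →
      ∃ s t : ℝ, 0 ≤ s ∧ s ≤ 1 ∧ Lat q (s/4) ∧ Lat q (s*t/2) ∧
        Npol (s, π*t/2) = (x, y) := by
    intro h1 h2
    have hsp : (0:ℝ) < 2-4*y := by linarith
    have hne : 2-4*y ≠ 0 := ne_of_gt hsp
    have ht1 : 3 ≤ (7*(2-4*y)+(4*x-2))/(2*(2-4*y)) := by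
      rw [le_div_iff₀ (by linarith)]
      linarith
    have ht2 : (7*(2-4*y)+(4*x-2))/(2*(2-4*y)) < 4 := by
      rw [div_lt_iff₀ (by linarith)]
      linarith
    refine ⟨2-4*y, (7*(2-4*y)+(4*x-2))/(2*(2-4*y)), hsp.le, by linarith,
      (hhalf.sub hLy).congr (by ring), ?_, ?_⟩
    · refine ((((Lat.zmul 7 hhalf).sub (Lat.zmul 7 hLy)).add hLx).sub hhalf).congr ?_
      push_cast
      field_simp
      try ring
    · rw [Npol_eval' _ (by linarith) ht2, wb4 ht1]
      simp only [Prod.smul_mk, Prod.mk_add_mk, smul_eq_mul, Prod.mk.injEq]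
      constructor <;> (field_simp; try ring)
  rcases lt_trichotomy x y with h1 | h1 | h1
  · rcases le_or_gt (x+y) 1 with h2 | h2
    · exact caseL h1 h2
    · exact caseT h1.le h2
  · rcases lt_trichotomy (x+y) 1 with h2 | h2 | h2
    · exact caseBo h1.ge h2
    · -- center
      have hx3 : x = 1/2 := by linarith
      have hy3 : y = 1/2 := by linarith
      refine ⟨0, 0, le_rfl, by norm_num, (Lat.zero q).congr (by ring),
        (Lat.zero q).congr (by ring), ?_⟩
      rw [Npol_eval' 0 le_rfl (by norm_num), wb1 (by norm_num : (0:ℝ) < 1)]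
      simp only [Prod.smul_mk, Prod.mk_add_mk, smul_eq_mul, Prod.mk.injEq]
      constructor <;> norm_num [hx3, hy3]
    · exact caseT h1.le h2
  · rcases le_or_gt 1 (x+y) with h2 | h2
    · exact caseR h1 h2
    · exact caseBo h1.le h2

lemma good_S1 {l q : ℕ} {S : ℝ × ℝ → ℝ × ℝ} (hS : IsS1 l S) {p : ℝ × ℝ}
    (hp : Good q p) : Good q (S p) := by
  obtain ⟨hmem, hLx, hLy⟩ := hp
  rw [mem_uSq_iff] at hmem
  by_cases hd : p.1 + p.2 ≤ 1
  · obtain ⟨r, t, hr0, hr1, hLr, hLu, hLrt, hrep⟩ := rep_L hmem.1.1 hmem.2.1 hd hLx hLy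
    have hpe : p = Mpol (r, 2*π*t/3) := by rw [hrep]
    rw [hpe, hS.1 r _ hr0 hr1]
    exact good_MpolF hr0 hr1 hLr hLu hLrt
  · have h1 : (0:ℝ) ≤ 1 - p.1 := by linarith [hmem.1.2]
    have h2 : (0:ℝ) ≤ 1 - p.2 := by linarith [hmem.2.2]
    have h3 : (1 - p.1) + (1 - p.2) ≤ 1 := by linarith [not_le.mp hd]
    obtain ⟨r, t, hr0, hr1, hLr, hLu, hLrt, hrep⟩ :=
      rep_L h1 h2 h3 ((Lat.one q).sub hLx) ((Lat.one q).sub hLy)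
    have hpe : p = Mpol' (r, 2*π*t/3) := by
      have hR : Rpi p = Mpol (r, 2*π*t/3) := by rw [hrep]; rfl
      calc p = Rpi (Rpi p) := (Rpi_Rpi p).symm
        _ = Mpol' (r, 2*π*t/3) := by rw [hR]; rfl
    rw [hpe, hS.2 r _ hr0 hr1]
    have : Mpol' (Ftw l (r, 2*π*t/3)) = Rpi (Mpol (Ftw l (r, 2*π*t/3))) := rfl
    rw [this]
    exact (good_MpolF hr0 hr1 hLr hLu hLrt).rpi

lemma good_S2 {m q : ℕ} {S : ℝ × ℝ → ℝ × ℝ} (hS : IsS2 m S) (h4 : 4 ∣ q) {p : ℝ × ℝ}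
    (hp : Good q p) : Good q (S p) := by
  obtain ⟨hmem, hLx, hLy⟩ := hp
  by_cases hE : p ∈ Esq
  · rw [mem_Esq_iff] at hE
    obtain ⟨s, t, hs0, hs1, hLs4, hLst2, hrep⟩ :=
      rep_E h4 hE.1.1 hE.1.2 hE.2.1 hE.2.2 hLx hLy
    have hpe : p = Npol (s, π*t/2) := by rw [hrep]
    rw [hpe, hS.1 s _ hs0 hs1]
    exact good_NpolG h4 hs0 hs1 hLs4 hLst2
  · rw [hS.2 p ⟨hmem, hE⟩]
    exact ⟨hmem, hLx, hLy⟩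

lemma good_B {l m q : ℕ} {B : ℝ × ℝ → ℝ × ℝ} (hB : IsBmap l m B) (h4 : 4 ∣ q)
    {p : ℝ × ℝ} (hp : Good q p) : Good q (B p) := by
  obtain ⟨S1, S2, hS1, hS2, hcomp⟩ := hB
  rw [hcomp p hp.1]
  exact good_S2 hS2 h4 (good_S1 hS1 hp)

lemma finite_good (q : ℕ) (hq : 0 < q) : {p : ℝ × ℝ | Good q p}.Finite := by
  have hq' : (0:ℝ) < q := by exact_mod_cast hq
  have hsub : {p : ℝ × ℝ | Good q p} ⊆
      (fun ab : ℤ × ℤ => (((ab.1 : ℝ))/q, ((ab.2 : ℝ))/q)) ''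
        (Set.Icc (0:ℤ) q ×ˢ Set.Icc (0:ℤ) q) := by
    rintro p ⟨hmem, ⟨a, ha⟩, ⟨b, hb⟩⟩
    rw [mem_uSq_iff] at hmem
    refine ⟨(a, b), Set.mem_prod.mpr ⟨Set.mem_Icc.mpr ⟨?_, ?_⟩, Set.mem_Icc.mpr ⟨?_, ?_⟩⟩, ?_⟩
    · have : (0:ℝ) ≤ a := by nlinarith [hmem.1.1]
      exact_mod_cast this
    · have : (a:ℝ) ≤ q := by nlinarith [hmem.1.2]
      exact_mod_cast this
    · have : (0:ℝ) ≤ b := by nlinarith [hmem.2.1]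
      exact_mod_cast this
    · have : (b:ℝ) ≤ q := by nlinarith [hmem.2.2]
      exact_mod_cast this
    · have e1 : (a:ℝ)/q = p.1 := by
        rw [div_eq_iff (ne_of_gt hq')]
        linarith [ha]
      have e2 : (b:ℝ)/q = p.2 := by
        rw [div_eq_iff (ne_of_gt hq')]
        linarith [hb]
      simp [e1, e2]
  exact (Set.Finite.image _ ((Set.finite_Icc _ _).prod (Set.finite_Icc _ _))).subset hsub

lemma orbit_fin {l m q : ℕ} {B B' : ℝ × ℝ → ℝ × ℝ} (hq : 0 < q) (h4 : 4 ∣ q)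
    (hB : IsBmap l m B) (hinv : Set.InvOn B' B uSq uSq) {p : ℝ × ℝ} (hp : Good q p) :
    (Set.range (zIter B B' p)).Finite := by
  set G := {z : ℝ × ℝ | Good q z} with hG
  have hsub : G ⊆ uSq := fun z hz => hz.1
  have hmapsto : Set.MapsTo B G G := fun z hz => good_B hB h4 hz
  have hfin : G.Finite := finite_good q hq
  have hinj : Set.InjOn B G := (hinv.1.injOn).mono hsub
  have himg : B '' G = G := by
    apply Set.eq_of_subset_of_ncard_le hmapsto.image_subset ?_ hfin
    exact le_of_eq (Set.ncard_image_of_injOn hinj).symm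
  have hB'G : ∀ z ∈ G, B' z ∈ G := by
    intro z hz
    rw [← himg] at hz
    obtain ⟨w, hwG, rfl⟩ := hz
    rw [hinv.1 (hsub hwG)]
    exact hwG
  have hfwd : ∀ n : ℕ, B^[n] p ∈ G := by
    intro n
    induction n with
    | zero => exact hp
    | succ k ih => rw [Function.iterate_succ_apply']; exact hmapsto ih
  have hbwd : ∀ n : ℕ, B'^[n] p ∈ G := by
    intro n
    induction n with
    | zero => exact hp
    | succ k ih => rw [Function.iterate_succ_apply']; exact hB'G _ ih
  apply hfin.subset
  rintro z ⟨n, rfl⟩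
  unfold zIter
  split_ifs
  exacts [hfwd _, hbwd _]

end BlmAux

/-- Theorem 1(4), dense finite orbits: the set of points of `[0,1]²` having finite
`B_{lm}`-orbit `{B_{lm}ⁿ(p) : n ∈ ℤ}` is dense in `[0,1]²`. -/
theorem Blm_dense_finite_orbits (l m : ℕ) (hl : 1 ≤ l) (hm : 1 ≤ m)
    (B B' : ℝ × ℝ → ℝ × ℝ) (hB : IsBmap l m B)
    (hBm : MapsTo B uSq uSq) (hB'm : MapsTo B' uSq uSq)
    (hinv : InvOn B' B uSq uSq) :
    uSq ⊆ closure {p | p ∈ uSq ∧ (Set.range (zIter B B' p)).Finite} := by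
  intro p hp
  have hp' := BlmAux.mem_uSq_iff.mp hp
  set qf : ℕ → ℕ := fun n => 4*(n+1) with hqf
  have hq0 : ∀ n, 0 < qf n := fun n => by positivity
  have hqr : ∀ n, (0:ℝ) < qf n := fun n => by exact_mod_cast hq0 n
  set f : ℕ → ℝ × ℝ := fun n =>
    ((⌊(qf n : ℝ) * p.1⌋ : ℝ)/(qf n), (⌊(qf n : ℝ) * p.2⌋ : ℝ)/(qf n)) with hf
  have coord_good : ∀ (n : ℕ) (x : ℝ), 0 ≤ x → x ≤ 1 →
      0 ≤ (⌊(qf n : ℝ) * x⌋ : ℝ)/(qf n) ∧ (⌊(qf n : ℝ) * x⌋ : ℝ)/(qf n) ≤ 1 := by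
    intro n x hx0 hx1
    constructor
    · apply div_nonneg _ (hqr n).le
      exact_mod_cast Int.floor_nonneg.mpr (mul_nonneg (hqr n).le hx0)
    · rw [div_le_one (hqr n)]
      calc (⌊(qf n : ℝ) * x⌋ : ℝ) ≤ (qf n : ℝ) * x := Int.floor_le _
        _ ≤ (qf n : ℝ) := by nlinarith [hqr n]
  have hgood : ∀ n, BlmAux.Good (qf n) (f n) := by
    intro n
    refine ⟨BlmAux.mem_uSq_iff.mpr
      ⟨coord_good n p.1 hp'.1.1 hp'.1.2, coord_good n p.2 hp'.2.1 hp'.2.2⟩,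
      ⟨⌊(qf n : ℝ) * p.1⌋, ?_⟩, ⟨⌊(qf n : ℝ) * p.2⌋, ?_⟩⟩
    · exact mul_div_cancel₀ _ (hqr n).ne'
    · exact mul_div_cancel₀ _ (hqr n).ne'
  have hmemS : ∀ n, f n ∈ {z | z ∈ uSq ∧ (Set.range (zIter B B' z)).Finite} := by
    intro n
    exact ⟨(hgood n).1, BlmAux.orbit_fin (hq0 n) ⟨n+1, rfl⟩ hB hinv (hgood n)⟩
  have key : ∀ x : ℝ, 0 ≤ x →
      Filter.Tendsto (fun n : ℕ => (⌊(qf n : ℝ) * x⌋ : ℝ)/(qf n)) Filter.atTop (nhds x) := by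
    intro x hx
    have h1 : Filter.Tendsto (fun n : ℕ => ((qf n : ℕ) : ℝ)) Filter.atTop Filter.atTop := by
      apply tendsto_natCast_atTop_atTop.comp
      apply Filter.tendsto_atTop_mono (fun n => ?_) Filter.tendsto_id
      show id n ≤ qf n
      simp only [hqf, id]
      omega
    have h2 : Filter.Tendsto (fun n : ℕ => ((qf n : ℝ))⁻¹) Filter.atTop (nhds 0) :=
      h1.inv_tendsto_atTop
    have hlow : Filter.Tendsto (fun n : ℕ => x - ((qf n : ℝ))⁻¹) Filter.atTop (nhds x) := by
      have hcn : Filter.Tendsto (fun _ : ℕ => x) Filter.atTop (nhds x) := tendsto_const_nhds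
      simpa using hcn.sub h2
    apply tendsto_of_tendsto_of_tendsto_of_le_of_le hlow tendsto_const_nhds
    · intro n
      have hne : (qf n : ℝ) ≠ 0 := ne_of_gt (hqr n)
      rw [le_div_iff₀ (hqr n)]
      have hfl := Int.sub_one_lt_floor ((qf n : ℝ) * x)
      have hexp : (x - ((qf n : ℝ))⁻¹) * (qf n : ℝ) = (qf n : ℝ) * x - 1 := by
        field_simp
      rw [hexp]
      linarith
    · intro n
      rw [div_le_iff₀ (hqr n)]
      have := Int.floor_le ((qf n : ℝ) * x)
      linarith
  have htend : Filter.Tendsto f Filter.atTop (nhds p) := by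
    have hc := (key p.1 hp'.1.1).prodMk_nhds (key p.2 hp'.2.1)
    simpa using hc
  exact mem_closure_of_tendsto htend (Filter.Eventually.of_forall hmemS)
end
end

section
/- For every integer l ≥ 1 there is a unique continuous map S₁ : [0,1]² → [0,1]² satisfying S₁∘M = M∘F_l on D and S₁∘M' = M'∘F_l on D; moreover S₁ is a homeomorphism of [0,1]² onto itself which fixes the boundary of [0,1]² pointwise and fixes every point of the segment L ∩ L' joining (1,0) to (0,1). -/
open Real MeasureTheory Set

noncomputable section

namespace S1aux

def ctr : ℝ × ℝ := ((1 : ℝ)/3, (1 : ℝ)/3)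

def Tp (s : ℝ) : ℝ × ℝ :=
  (max (max (1 - 3 * Int.fract (s/3)) (3 * Int.fract (s/3) - 2)) 0,
   max (min (3 * Int.fract (s/3)) (2 - 3 * Int.fract (s/3))) 0)

lemma Mbd_red (θ : ℝ) : Mbd (red θ) = Tp (3 * θ / (2 * π)) := by
  have hπ : (0:ℝ) < π := pi_pos
  set u : ℝ := Int.fract (θ / (2 * π)) with hu
  have hu0 : 0 ≤ u := Int.fract_nonneg _
  have hu1 : u < 1 := Int.fract_lt_one _
  have harg : (3 * θ / (2 * π)) / 3 = θ / (2 * π) := by ring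
  have hfr : Int.fract ((3 * θ / (2 * π)) / 3) = u := by rw [harg]
  have hred : red θ = 2 * π * u := rfl
  have hco : 3 * (2 * π * u) / (2 * π) = 3 * u := by
    field_simp
  rw [Tp, hfr, Mbd, hred, hco]
  rcases lt_or_ge u (1/3) with h | h
  · rw [if_pos (by nlinarith)]
    have h1 : max (1 - 3*u) (3*u - 2) = 1 - 3*u := by
      apply max_eq_left; nlinarith
    have h2 : max (1 - 3*u) 0 = 1 - 3*u := max_eq_left (by nlinarith)
    have h3 : min (3*u) (2 - 3*u) = 3*u := min_eq_left (by nlinarith)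
    have h4 : max (3*u) 0 = 3*u := max_eq_left (by nlinarith)
    rw [h1, h2, h3, h4]
  · rw [if_neg (by nlinarith)]
    rcases lt_or_ge u (2/3) with h' | h'
    · rw [if_pos (by nlinarith)]
      have h1 : max (1 - 3*u) (3*u - 2) ≤ 0 := by
        apply max_le <;> nlinarith
      have h2 : max (max (1 - 3*u) (3*u - 2)) 0 = 0 := max_eq_right h1
      have h3 : min (3*u) (2 - 3*u) = 2 - 3*u := min_eq_right (by nlinarith)
      have h4 : max (2 - 3*u) 0 = 2 - 3*u := max_eq_left (by nlinarith)
      rw [h2, h3, h4]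
    · rw [if_neg (by nlinarith)]
      have h1 : max (1 - 3*u) (3*u - 2) = 3*u - 2 := max_eq_right (by nlinarith)
      have h2 : max (3*u - 2) 0 = 3*u - 2 := max_eq_left (by nlinarith)
      have h3 : min (3*u) (2 - 3*u) = 2 - 3*u := min_eq_right (by nlinarith)
      have h4 : max (2 - 3*u) 0 = 0 := max_eq_right (by nlinarith)
      rw [h1, h2, h3, h4]

lemma Mpol_eq (r θ : ℝ) : Mpol (r, θ) = ctr + r • (Tp (3 * θ / (2 * π)) - ctr) := by
  rw [Mpol, Mbd_red]
  show (1 - r) • ctr + r • Tp (3 * θ / (2 * π)) = _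
  module

lemma Tp_mem (s : ℝ) : 0 ≤ (Tp s).1 ∧ 0 ≤ (Tp s).2 ∧ (Tp s).1 + (Tp s).2 ≤ 1 ∧
    min (1 - (Tp s).1 - (Tp s).2) (min (Tp s).1 (Tp s).2) = 0 := by
  set u : ℝ := Int.fract (s/3) with hu
  have hu0 : 0 ≤ u := Int.fract_nonneg _
  have hu1 : u < 1 := Int.fract_lt_one _
  rcases lt_or_ge u (1/3) with h | h
  · have hT : Tp s = (1 - 3*u, 3*u) := by
      rw [Tp, ← hu]
      rw [max_eq_left (by nlinarith : (3*u - 2 : ℝ) ≤ 1 - 3*u),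
        max_eq_left (by nlinarith : (0:ℝ) ≤ 1 - 3*u),
        min_eq_left (by nlinarith : (3*u:ℝ) ≤ 2 - 3*u),
        max_eq_left (by nlinarith : (0:ℝ) ≤ 3*u)]
    rw [hT]
    refine ⟨by dsimp only; nlinarith, by dsimp only; nlinarith, by dsimp only; nlinarith, ?_⟩
    dsimp only
    rw [show (1 : ℝ) - (1 - 3*u) - 3*u = 0 by ring]
    exact min_eq_left (le_min (by nlinarith) (by nlinarith))
  · rcases lt_or_ge u (2/3) with h' | h'
    · have hT : Tp s = (0, min (3*u) (2 - 3*u)) := by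
        rw [Tp, ← hu]
        rw [max_eq_right (max_le (by nlinarith : (1 - 3*u:ℝ) ≤ 0) (by nlinarith : (3*u - 2:ℝ) ≤ 0)),
          max_eq_left (le_min (by nlinarith : (0:ℝ) ≤ 3*u) (by nlinarith : (0:ℝ) ≤ 2 - 3*u))]
      rw [hT]
      have hm0 : (0:ℝ) ≤ min (3*u) (2 - 3*u) := le_min (by nlinarith) (by nlinarith)
      have hm1 : min (3*u) (2 - 3*u) ≤ 1 := min_le_of_right_le (by nlinarith)
      refine ⟨le_refl 0, hm0, by dsimp only; linarith, ?_⟩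
      dsimp only
      rw [min_eq_left hm0, min_eq_right (by linarith : (0:ℝ) ≤ 1 - 0 - min (3*u) (2 - 3*u))]
    · have hT : Tp s = (3*u - 2, 0) := by
        rw [Tp, ← hu]
        rw [max_eq_right (by nlinarith : (1 - 3*u:ℝ) ≤ 3*u - 2),
          max_eq_left (by nlinarith : (0:ℝ) ≤ 3*u - 2),
          min_eq_right (by nlinarith : (2 - 3*u:ℝ) ≤ 3*u),
          max_eq_right (by nlinarith : (2 - 3*u:ℝ) ≤ 0)]
      rw [hT]
      refine ⟨by dsimp only; nlinarith, le_refl 0, by dsimp only; nlinarith, ?_⟩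
      dsimp only
      rw [min_eq_right (by nlinarith : (0:ℝ) ≤ 3*u - 2),
        min_eq_right (by nlinarith : (0:ℝ) ≤ 1 - (3*u - 2) - 0)]


lemma Tp_add_int (s : ℝ) (k : ℤ) : Tp (s + 3*k) = Tp s := by
  rw [Tp, Tp, show (s + 3*(k:ℝ))/3 = s/3 + (k:ℝ) by ring, Int.fract_add_intCast]

def rL (p : ℝ × ℝ) : ℝ := 1 - 3 * min (1 - p.1 - p.2) (min p.1 p.2)

def sInv (v : ℝ × ℝ) : ℝ :=
  if v.1 = 0 then 2 - v.2 else if v.2 = 0 then v.1 + 2 else v.2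

def Amap (a : ℝ) (p : ℝ × ℝ) : ℝ × ℝ :=
  ctr + rL p • (Tp (sInv ((rL p)⁻¹ • (p - ctr) + ctr) + 3*a*ftw (rL p)) - ctr)

lemma sInv_Tp (t : ℝ) : ∃ k : ℤ, sInv (Tp t) = t + 3*k := by
  set u : ℝ := Int.fract (t/3) with hu
  have hu0 : 0 ≤ u := Int.fract_nonneg _
  have hu1 : u < 1 := Int.fract_lt_one _
  have hflo : t = 3*u + 3*(⌊t/3⌋ : ℤ) := by
    have := Int.fract_add_floor (t/3)
    rw [hu]; push_cast; nlinarith [Int.fract_add_floor (t/3)]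
  have key : sInv (Tp t) = 3*u ∨ sInv (Tp t) = 3*u + 3 := by
    rcases lt_or_ge u (1/3) with h | h
    · have hT : Tp t = (1 - 3*u, 3*u) := by
        rw [Tp, ← hu]
        rw [max_eq_left (by nlinarith : (3*u - 2 : ℝ) ≤ 1 - 3*u),
          max_eq_left (by nlinarith : (0:ℝ) ≤ 1 - 3*u),
          min_eq_left (by nlinarith : (3*u:ℝ) ≤ 2 - 3*u),
          max_eq_left (by nlinarith : (0:ℝ) ≤ 3*u)]
      rw [hT, sInv]
      rcases eq_or_lt_of_le hu0 with h0 | h0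
      · right; rw [if_neg (by dsimp only; intro hc; nlinarith), if_pos (by dsimp only; nlinarith)]
        dsimp only; nlinarith
      · left; rw [if_neg (by dsimp only; intro hc; nlinarith), if_neg (by dsimp only; intro hc; nlinarith)]
    · rcases lt_or_ge u (2/3) with h' | h'
      · have hT : Tp t = (0, 2 - 3*u) := by
          rw [Tp, ← hu]
          rw [max_eq_right (max_le (by nlinarith : (1 - 3*u:ℝ) ≤ 0) (by nlinarith : (3*u - 2:ℝ) ≤ 0)),
            min_eq_right (by nlinarith : (2 - 3*u:ℝ) ≤ 3*u),
            max_eq_left (by nlinarith : (0:ℝ) ≤ 2 - 3*u)]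
        left; rw [hT, sInv, if_pos rfl]; dsimp only; ring
      · have hT : Tp t = (3*u - 2, 0) := by
          rw [Tp, ← hu]
          rw [max_eq_right (by nlinarith : (1 - 3*u:ℝ) ≤ 3*u - 2),
            max_eq_left (by nlinarith : (0:ℝ) ≤ 3*u - 2),
            min_eq_right (by nlinarith : (2 - 3*u:ℝ) ≤ 3*u),
            max_eq_right (by nlinarith : (2 - 3*u:ℝ) ≤ 0)]
        left; rw [hT, sInv]
        rcases eq_or_lt_of_le h' with h2 | h2
        · rw [if_pos (by dsimp only; nlinarith)]; dsimp only; nlinarith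
        · rw [if_neg (by dsimp only; intro hc; nlinarith), if_pos rfl]; dsimp only; ring
  rcases key with h | h
  · exact ⟨-⌊t/3⌋, by push_cast; linarith [hflo]⟩
  · exact ⟨1-⌊t/3⌋, by push_cast; linarith [hflo]⟩

lemma fract_self_of (x : ℝ) (h0 : 0 ≤ x) (h1 : x < 1) : Int.fract x = x :=
  Int.fract_eq_self.2 ⟨h0, h1⟩

lemma Tp_sInv (v : ℝ × ℝ) (h1 : 0 ≤ v.1) (h2 : 0 ≤ v.2) (hs : v.1 + v.2 ≤ 1)
    (hb : v.1 = 0 ∨ v.2 = 0 ∨ v.1 + v.2 = 1) : Tp (sInv v) = v := by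
  by_cases hx : v.1 = 0
  · have hv2 : v.2 ≤ 1 := by linarith
    rw [sInv, if_pos hx, Tp]
    have : Int.fract ((2 - v.2)/3) = (2 - v.2)/3 := fract_self_of _ (by linarith) (by linarith)
    rw [this]
    have e : 3 * ((2 - v.2)/3) = 2 - v.2 := by ring
    rw [e]
    have g1 : max (max (1 - (2 - v.2)) (2 - v.2 - 2)) 0 = 0 :=
      max_eq_right (max_le (by linarith) (by linarith))
    have g2 : max (min (2 - v.2) (2 - (2 - v.2))) 0 = v.2 := by
      rw [min_eq_right (by linarith), show (2:ℝ) - (2 - v.2) = v.2 by ring]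
      exact max_eq_left h2
    rw [g1, g2]
    exact Prod.ext (by simp [hx]) rfl
  · by_cases hy : v.2 = 0
    · have hv1 : v.1 ≤ 1 := by linarith
      rw [sInv, if_neg hx, if_pos hy, Tp]
      rcases eq_or_lt_of_le hv1 with h1' | h1'
      · have h1'' : v.1 = 1 := h1'
        have e : (v.1 + 2)/3 = 1 := by rw [h1'']; norm_num
        rw [e, Int.fract_one]
        norm_num
        exact Prod.ext h1''.symm hy.symm
      · have : Int.fract ((v.1 + 2)/3) = (v.1 + 2)/3 := fract_self_of _ (by linarith) (by linarith)
        rw [this]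
        have e : 3 * ((v.1 + 2)/3) = v.1 + 2 := by ring
        rw [e]
        have g1 : max (max (1 - (v.1 + 2)) (v.1 + 2 - 2)) 0 = v.1 := by
          rw [max_eq_right (by linarith : (1 - (v.1+2):ℝ) ≤ v.1 + 2 - 2),
            show (v.1 + 2 - 2 : ℝ) = v.1 by ring]
          exact max_eq_left h1
        have g2 : max (min (v.1 + 2) (2 - (v.1 + 2))) 0 = 0 := by
          rw [min_eq_right (by linarith)]
          exact max_eq_right (by linarith)
        rw [g1, g2]
        exact Prod.ext rfl (by simp [hy])
    · have hsum : v.1 + v.2 = 1 := by tauto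
      have hv2 : v.2 < 1 := by
        rcases lt_or_ge v.2 1 with h | h
        · exact h
        · exact absurd (by linarith : v.1 = 0) hx
      have hv2' : 0 < v.2 := lt_of_le_of_ne h2 (Ne.symm hy)
      rw [sInv, if_neg hx, if_neg hy, Tp]
      have : Int.fract (v.2/3) = v.2/3 := fract_self_of _ (by linarith) (by linarith)
      rw [this]
      have e : 3 * (v.2/3) = v.2 := by ring
      rw [e]
      have g1 : max (max (1 - v.2) (v.2 - 2)) 0 = v.1 := by
        rw [max_eq_left (by linarith : (v.2 - 2:ℝ) ≤ 1 - v.2),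
          max_eq_left (by linarith), show (1 - v.2 : ℝ) = v.1 by linarith]
      have g2 : max (min v.2 (2 - v.2)) 0 = v.2 := by
        rw [min_eq_left (by linarith)]; exact max_eq_left h2
      rw [g1, g2]

lemma rL_smul (r : ℝ) (v : ℝ × ℝ) (hr : 0 ≤ r) (h1 : 0 ≤ v.1) (h2 : 0 ≤ v.2)
    (hs : v.1 + v.2 ≤ 1) (hm : min (1 - v.1 - v.2) (min v.1 v.2) = 0) :
    rL (ctr + r • (v - ctr)) = r := by
  have e1 : (ctr + r • (v - ctr)).1 = 1/3 + r * (v.1 - 1/3) := by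
    simp [ctr, Prod.add_def, Prod.smul_def, Prod.sub_def, smul_eq_mul]
  have e2 : (ctr + r • (v - ctr)).2 = 1/3 + r * (v.2 - 1/3) := by
    simp [ctr, Prod.add_def, Prod.smul_def, Prod.sub_def, smul_eq_mul]
  rw [rL, e1, e2]
  rcases le_total v.1 v.2 with h | h
  · rw [min_eq_left h] at hm
    rw [min_eq_left (by nlinarith : (1/3 + r * (v.1 - 1/3) : ℝ) ≤ 1/3 + r * (v.2 - 1/3))]
    rcases le_total (1 - v.1 - v.2) v.1 with h' | h'
    · rw [min_eq_left h'] at hm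
      rw [min_eq_left (by nlinarith)]; nlinarith
    · rw [min_eq_right h'] at hm
      rw [min_eq_right (by nlinarith)]; nlinarith
  · rw [min_eq_right h] at hm
    rw [min_eq_right (by nlinarith : (1/3 + r * (v.2 - 1/3) : ℝ) ≤ 1/3 + r * (v.1 - 1/3))]
    rcases le_total (1 - v.1 - v.2) v.2 with h' | h'
    · rw [min_eq_left h'] at hm
      rw [min_eq_left (by nlinarith)]; nlinarith
    · rw [min_eq_right h'] at hm
      rw [min_eq_right (by nlinarith)]; nlinarith

lemma rL_ctr : rL ctr = 0 := by
  rw [rL, ctr]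
  norm_num

lemma Amap_ctr (a : ℝ) : Amap a ctr = ctr := by
  rw [Amap, rL_ctr, zero_smul, add_zero]

lemma Amap_Mpol (a r θ : ℝ) (hr0 : 0 ≤ r) (hr1 : r ≤ 1) :
    Amap a (Mpol (r, θ)) = Mpol (r, θ + 2*π*a*ftw r) := by
  have hπ : (0:ℝ) < π := pi_pos
  obtain ⟨h1, h2, hs, hm⟩ := Tp_mem (3*θ/(2*π))
  set v := Tp (3*θ/(2*π)) with hv
  have hp : Mpol (r,θ) = ctr + r • (v - ctr) := Mpol_eq r θ
  rcases eq_or_lt_of_le hr0 with h0 | h0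
  · rw [← h0] at hp ⊢
    rw [zero_smul, add_zero] at hp
    rw [hp, Amap_ctr, Mpol_eq, zero_smul, add_zero]
  · have hrL : rL (Mpol (r,θ)) = r := by rw [hp]; exact rL_smul r v hr0 h1 h2 hs hm
    have hvv : (rL (Mpol (r,θ)))⁻¹ • (Mpol (r,θ) - ctr) + ctr = v := by
      rw [hrL, hp, add_sub_cancel_left, inv_smul_smul₀ (ne_of_gt h0), sub_add_cancel]
    rw [Amap, hvv, hrL]
    obtain ⟨k, hk⟩ := sInv_Tp (3*θ/(2*π))
    rw [← hv] at hk
    rw [hk]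
    have harg : 3*θ/(2*π) + 3*(k:ℝ) + 3*a*ftw r = 3*(θ + 2*π*a*ftw r)/(2*π) + 3*(k:ℝ) := by
      field_simp; ring
    rw [harg, Tp_add_int, Mpol_eq]


lemma cs_fst (r : ℝ) (v : ℝ × ℝ) : (ctr + r • (v - ctr)).1 = 1/3 + r * (v.1 - 1/3) := by
  simp [ctr, Prod.add_def, Prod.smul_def, Prod.sub_def, smul_eq_mul]

lemma cs_snd (r : ℝ) (v : ℝ × ℝ) : (ctr + r • (v - ctr)).2 = 1/3 + r * (v.2 - 1/3) := by
  simp [ctr, Prod.add_def, Prod.smul_def, Prod.sub_def, smul_eq_mul]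

lemma ftw_one : ftw 1 = 0 := by rw [ftw, if_neg one_ne_zero]; norm_num

def Smap (a : ℝ) (p : ℝ × ℝ) : ℝ × ℝ :=
  if p.1 + p.2 ≤ 1 then Amap a p else Rpi (Amap a (Rpi p))

lemma Rpi_Rpi (p : ℝ × ℝ) : Rpi (Rpi p) = p := by
  rw [Rpi, Rpi]; exact Prod.ext (by dsimp only; ring) (by dsimp only; ring)

lemma Mpol_mem (r θ : ℝ) (hr0 : 0 ≤ r) (hr1 : r ≤ 1) :
    0 ≤ (Mpol (r,θ)).1 ∧ 0 ≤ (Mpol (r,θ)).2 ∧ (Mpol (r,θ)).1 + (Mpol (r,θ)).2 ≤ 1 := by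
  obtain ⟨h1, h2, hs, hm⟩ := Tp_mem (3*θ/(2*π))
  rw [Mpol_eq, cs_fst, cs_snd]
  refine ⟨by nlinarith, by nlinarith, by nlinarith⟩

lemma Amap_bdry (a : ℝ) (q : ℝ × ℝ) (h1 : 0 ≤ q.1) (h2 : 0 ≤ q.2) (hsle : q.1 + q.2 ≤ 1)
    (hb : q.1 = 0 ∨ q.2 = 0 ∨ q.1 + q.2 = 1) : Amap a q = q := by
  have hrL : rL q = 1 := by
    rw [rL]
    rcases hb with hq | hq | hq
    · rw [hq, min_eq_left h2, min_eq_right (by linarith)]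
      ring
    · rw [hq, min_eq_right h1, min_eq_right (by linarith)]
      ring
    · rw [show 1 - q.1 - q.2 = 0 by linarith, min_eq_left (le_min h1 h2)]
      ring
  rw [Amap, hrL, ftw_one, mul_zero, add_zero, inv_one, one_smul, one_smul, sub_add_cancel,
    Tp_sInv q h1 h2 hsle hb]
  abel

lemma Smap_Mpol (a r θ : ℝ) (hr0 : 0 ≤ r) (hr1 : r ≤ 1) :
    Smap a (Mpol (r, θ)) = Mpol (r, θ + 2*π*a*ftw r) := by
  obtain ⟨h1, h2, hs⟩ := Mpol_mem r θ hr0 hr1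
  rw [Smap, if_pos hs]
  exact Amap_Mpol a r θ hr0 hr1

lemma Smap_Mpol' (a r θ : ℝ) (hr0 : 0 ≤ r) (hr1 : r ≤ 1) :
    Smap a (Mpol' (r, θ)) = Mpol' (r, θ + 2*π*a*ftw r) := by
  obtain ⟨h1, h2, hs⟩ := Mpol_mem r θ hr0 hr1
  have hR : Rpi (Mpol' (r, θ)) = Mpol (r, θ) := by rw [Mpol', Rpi_Rpi]
  have hc1 : (Mpol' (r,θ)).1 = 1 - (Mpol (r,θ)).1 := rfl
  have hc2 : (Mpol' (r,θ)).2 = 1 - (Mpol (r,θ)).2 := rfl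
  rw [Smap]
  by_cases hle : (Mpol' (r,θ)).1 + (Mpol' (r,θ)).2 ≤ 1
  · rw [if_pos hle]
    have hEq : (Mpol (r,θ)).1 + (Mpol (r,θ)).2 = 1 := by
      rw [hc1, hc2] at hle; linarith
    have hA : Amap a (Mpol' (r,θ)) = Mpol' (r,θ) := by
      apply Amap_bdry
      · rw [hc1]; linarith
      · rw [hc2]; linarith
      · rw [hc1, hc2]; linarith
      · right; right; rw [hc1, hc2]; linarith
    rw [hA]
    have hr1' : r = 1 := by
      obtain ⟨t1, t2, ts, tm⟩ := Tp_mem (3*θ/(2*π))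
      rw [Mpol_eq, cs_fst, cs_snd] at hEq
      have : 1 ≤ r := by nlinarith
      linarith
    rw [hr1', ftw_one, mul_zero, add_zero]
  · rw [if_neg hle, hR, Amap_Mpol a r θ hr0 hr1]
    rfl

lemma sInv_range (v : ℝ × ℝ) (h1 : 0 ≤ v.1) (h2 : 0 ≤ v.2) (hs : v.1 + v.2 ≤ 1) :
    0 ≤ sInv v ∧ sInv v ≤ 3 := by
  rw [sInv]
  split_ifs with hx hy
  · constructor <;> [linarith; linarith]
  · constructor <;> [linarith; linarith]
  · constructor <;> [linarith; linarith]

lemma Mpol_surj (p : ℝ × ℝ) (h1 : 0 ≤ p.1) (h2 : 0 ≤ p.2) (hs : p.1 + p.2 ≤ 1) :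
    ∃ r θ : ℝ, 0 ≤ r ∧ r ≤ 1 ∧ 0 ≤ θ ∧ θ ≤ 2*π ∧ Mpol (r, θ) = p := by
  have hπ : (0:ℝ) < π := pi_pos
  set m := min (1 - p.1 - p.2) (min p.1 p.2) with hmdef
  have hm1 : m ≤ 1 - p.1 - p.2 := min_le_left _ _
  have hm2 : m ≤ p.1 := le_trans (min_le_right _ _) (min_le_left _ _)
  have hm3 : m ≤ p.2 := le_trans (min_le_right _ _) (min_le_right _ _)
  have hm0 : 0 ≤ m := le_min (by linarith) (le_min h1 h2)
  have hmthird : m ≤ 1/3 := by by_contra hc; push_neg at hc; linarith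
  set r := 1 - 3*m with hrdef
  have hr0 : 0 ≤ r := by simp only [hrdef]; linarith
  have hr1 : r ≤ 1 := by simp only [hrdef]; linarith
  rcases eq_or_lt_of_le hr0 with h0 | h0
  · -- r = 0, p = ctr
    have hm13 : m = 1/3 := by simp only [hrdef] at h0; linarith
    have hp : p = ctr := by
      refine Prod.ext ?_ ?_ <;> rw [ctr] <;> dsimp only <;> linarith [hm13 ▸ hm1, hm13 ▸ hm2, hm13 ▸ hm3]
    exact ⟨0, 0, le_refl 0, zero_le_one, le_refl 0, by positivity,
      by rw [Mpol_eq, zero_smul, add_zero, hp]⟩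
  · set t := r⁻¹ with htdef
    have ht0 : 0 < t := inv_pos.2 h0
    have htr : t * r = 1 := inv_mul_cancel₀ (ne_of_gt h0)
    set v := ctr + t • (p - ctr) with hvdef
    have hv1 : v.1 = 1/3 + t * (p.1 - 1/3) := cs_fst t p
    have hv2 : v.2 = 1/3 + t * (p.2 - 1/3) := cs_snd t p
    have hbv1 : 0 ≤ v.1 := by
      rw [hv1]
      nlinarith [mul_nonneg (le_of_lt ht0) (sub_nonneg.2 hm2)]
    have hbv2 : 0 ≤ v.2 := by
      rw [hv2]
      nlinarith [mul_nonneg (le_of_lt ht0) (sub_nonneg.2 hm3)]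
    have hbvs : v.1 + v.2 ≤ 1 := by
      rw [hv1, hv2]
      nlinarith [mul_nonneg (le_of_lt ht0) (sub_nonneg.2 hm1)]
    have hb : v.1 = 0 ∨ v.2 = 0 ∨ v.1 + v.2 = 1 := by
      rcases min_cases (1 - p.1 - p.2) (min p.1 p.2) with ⟨hmeq, _⟩ | ⟨hmeq', _⟩
      · rw [← hmdef] at hmeq
        right; right
        rw [hv1, hv2]
        linear_combination (1/3 : ℝ)*htr - (t/3)*hrdef + t*hmeq
      · rw [← hmdef] at hmeq'
        rcases min_cases p.1 p.2 with ⟨h2eq, _⟩ | ⟨h2eq, _⟩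
        · left
          have hmeq : m = p.1 := by rw [hmeq', h2eq]
          rw [hv1]
          linear_combination (-(1:ℝ)/3)*htr + (t/3)*hrdef - t*hmeq
        · right; left
          have hmeq : m = p.2 := by rw [hmeq', h2eq]
          rw [hv2]
          linear_combination (-(1:ℝ)/3)*htr + (t/3)*hrdef - t*hmeq
    obtain ⟨hs0, hs3⟩ := sInv_range v hbv1 hbv2 hbvs
    refine ⟨r, 2*π*(sInv v)/3, hr0, hr1, by nlinarith, by nlinarith, ?_⟩
    rw [Mpol_eq]
    have harg : 3*(2*π*(sInv v)/3)/(2*π) = sInv v := by field_simp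
    rw [harg, Tp_sInv v hbv1 hbv2 hbvs hb, hvdef]
    rw [add_sub_cancel_left, smul_smul, mul_inv_cancel₀ (ne_of_gt h0), one_smul]
    abel


lemma Tp_continuous : Continuous Tp := by
  have hF : Continuous (fun u : ℝ =>
      ((max (max (1 - 3*u) (3*u - 2)) 0, max (min (3*u) (2 - 3*u)) 0) : ℝ × ℝ)) := by
    fun_prop
  have h : Continuous ((fun u : ℝ =>
      ((max (max (1 - 3*u) (3*u - 2)) 0, max (min (3*u) (2 - 3*u)) 0) : ℝ × ℝ)) ∘ Int.fract) :=
    ContinuousOn.comp_fract'' hF.continuousOn (by norm_num)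
  exact h.comp (continuous_id.div_const 3)

lemma ftw_formula : ∀ r ∈ Icc (0:ℝ) 1, ftw r = min 1 ((1 - r)/(3 * max r (1/4))) := by
  rintro r ⟨h0, h1⟩
  rw [ftw]
  split_ifs with h
  · subst h; norm_num
  · have hr0 : 0 < r := lt_of_le_of_ne h0 (Ne.symm h)
    rcases le_total (1/4 : ℝ) r with h4 | h4
    · rw [max_eq_left h4]
      congr 1
      rw [div_eq_div_iff (by norm_num : (3:ℝ) ≠ 0) (by positivity : 3 * r ≠ 0)]
      field_simp
    · rw [max_eq_right h4]
      rw [min_eq_left, min_eq_left]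
      · rw [le_div_iff₀ (by norm_num)]; linarith
      · rw [le_div_iff₀ (by norm_num : (0:ℝ) < 3), le_sub_iff_add_le]
        rw [le_div_iff₀ hr0]
        linarith

lemma ftw_contOn : ContinuousOn ftw (Icc (0:ℝ) 1) := by
  have hcf : Continuous (fun r : ℝ => min 1 ((1 - r)/(3 * max r (1/4)))) := by
    apply continuous_const.min
    apply Continuous.div (by fun_prop) (by fun_prop)
    intro x
    have : (1:ℝ)/4 ≤ max x (1/4) := le_max_right _ _
    positivity
  exact (hcf.continuousOn).congr ftw_formula

lemma Mpol_continuous : Continuous Mpol := by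
  have he : Mpol = fun p : ℝ × ℝ => ctr + p.1 • (Tp (3*p.2/(2*π)) - ctr) := by
    funext p
    exact Mpol_eq p.1 p.2
  rw [he]
  exact continuous_const.add (continuous_fst.smul
    (((Tp_continuous.comp ((continuous_const.mul continuous_snd).div_const (2*π)))).sub continuous_const))

lemma Rpi_continuous : Continuous Rpi :=
  (continuous_const.sub continuous_fst).prodMk (continuous_const.sub continuous_snd)

def Ldom : Set (ℝ × ℝ) := {p | 0 ≤ p.1 ∧ 0 ≤ p.2 ∧ p.1 + p.2 ≤ 1}

def Ldom' : Set (ℝ × ℝ) := {p | p.1 ≤ 1 ∧ p.2 ≤ 1 ∧ 1 ≤ p.1 + p.2}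

lemma Amap_contOn (a : ℝ) : ContinuousOn (Amap a) Ldom := by
  rw [continuousOn_iff_continuous_restrict]
  set K : Set (ℝ × ℝ) := Icc (0:ℝ) 1 ×ˢ Icc (0:ℝ) (2*π) with hKdef
  have hK : IsCompact K := (isCompact_Icc).prod isCompact_Icc
  haveI : CompactSpace K := isCompact_iff_compactSpace.mp hK
  set mfun : K → Ldom := fun x => ⟨Mpol x.1, by
    obtain ⟨⟨ha, hb⟩, _⟩ := x.2
    exact Mpol_mem x.1.1 x.1.2 ha hb⟩ with hmdef
  have hmc : Continuous mfun :=
    Continuous.subtype_mk (Mpol_continuous.comp continuous_subtype_val) _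
  have hms : Function.Surjective mfun := by
    rintro ⟨p, hp1, hp2, hps⟩
    obtain ⟨r, θ, hr0, hr1, hθ0, hθ2, heq⟩ := Mpol_surj p hp1 hp2 hps
    exact ⟨⟨(r, θ), ⟨⟨hr0, hr1⟩, ⟨hθ0, hθ2⟩⟩⟩, Subtype.ext heq⟩
  have hq : Topology.IsQuotientMap mfun := (hmc.isClosedMap).isQuotientMap hmc hms
  rw [hq.continuous_iff]
  have he : (Ldom.restrict (Amap a)) ∘ mfun =
      fun x : K => Mpol (x.1.1, x.1.2 + 2*π*a*ftw x.1.1) := by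
    funext x
    obtain ⟨⟨ha0, ha1⟩, _⟩ := x.2
    exact Amap_Mpol a x.1.1 x.1.2 ha0 ha1
  rw [show Ldom.domRestrict (Amap a) ∘ mfun = _ from he]
  apply Mpol_continuous.comp
  apply Continuous.prodMk
  · exact continuous_fst.comp continuous_subtype_val
  · apply Continuous.add
    · exact continuous_snd.comp continuous_subtype_val
    · apply Continuous.mul continuous_const
      apply ContinuousOn.comp_continuous ftw_contOn
        (continuous_fst.comp continuous_subtype_val)
      intro x
      exact ⟨x.2.1.1, x.2.1.2⟩

lemma Smap_eqOn_L (a : ℝ) : EqOn (Smap a) (Amap a) Ldom := by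
  rintro p ⟨h1, h2, hs⟩
  rw [Smap, if_pos hs]

lemma Smap_eqOn_L' (a : ℝ) : EqOn (Smap a) (fun p => Rpi (Amap a (Rpi p))) Ldom' := by
  rintro p ⟨h1, h2, hs⟩
  rw [Smap]
  by_cases hle : p.1 + p.2 ≤ 1
  · rw [if_pos hle]
    have hsum : p.1 + p.2 = 1 := le_antisymm hle hs
    have e1 : Amap a p = p :=
      Amap_bdry a p (by linarith) (by linarith) (by linarith) (Or.inr (Or.inr hsum))
    have e2 : Amap a (Rpi p) = Rpi p := by
      apply Amap_bdry a (Rpi p) (by simp [Rpi]; linarith) (by simp [Rpi]; linarith)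
        (by simp [Rpi]; linarith)
      right; right
      simp [Rpi]; linarith
    simp only [e1, e2, Rpi_Rpi]
  · rw [if_neg hle]

lemma isClosed_Ldom : IsClosed Ldom := by
  have : Ldom = {p : ℝ × ℝ | 0 ≤ p.1} ∩ ({p | 0 ≤ p.2} ∩ {p | p.1 + p.2 ≤ 1}) := rfl
  rw [this]
  exact (isClosed_le continuous_const continuous_fst).inter
    ((isClosed_le continuous_const continuous_snd).inter
      (isClosed_le (continuous_fst.add continuous_snd) continuous_const))

lemma isClosed_Ldom' : IsClosed Ldom' := by
  have : Ldom' = {p : ℝ × ℝ | p.1 ≤ 1} ∩ ({p | p.2 ≤ 1} ∩ {p | 1 ≤ p.1 + p.2}) := rfl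
  rw [this]
  exact (isClosed_le continuous_fst continuous_const).inter
    ((isClosed_le continuous_snd continuous_const).inter
      (isClosed_le continuous_const (continuous_fst.add continuous_snd)))

lemma Smap_contOn (a : ℝ) : ContinuousOn (Smap a) uSq := by
  have c1 : ContinuousOn (Smap a) Ldom := (Amap_contOn a).congr (Smap_eqOn_L a)
  have c2 : ContinuousOn (Smap a) Ldom' := by
    refine ContinuousOn.congr ?_ (Smap_eqOn_L' a)
    apply Rpi_continuous.comp_continuousOn
    apply (Amap_contOn a).comp Rpi_continuous.continuousOn
    rintro p ⟨h1, h2, hs⟩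
    exact ⟨by simp [Rpi]; linarith, by simp [Rpi]; linarith, by simp [Rpi]; linarith⟩
  have hsub : uSq ⊆ Ldom ∪ Ldom' := by
    rintro p ⟨⟨h1, h2⟩, ⟨h3, h4⟩⟩
    rcases le_total (p.1 + p.2) 1 with h | h
    · exact Or.inl ⟨h1, h2, h⟩
    · exact Or.inr ⟨h3, h4, h⟩
  refine ContinuousOn.mono ?_ hsub
  intro x hx
  have cw1 : ContinuousWithinAt (Smap a) Ldom x := by
    by_cases hxm : x ∈ Ldom
    · exact c1 x hxm
    · exact continuousWithinAt_of_notMem_closure (by rwa [isClosed_Ldom.closure_eq])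
  have cw2 : ContinuousWithinAt (Smap a) Ldom' x := by
    by_cases hxm : x ∈ Ldom'
    · exact c2 x hxm
    · exact continuousWithinAt_of_notMem_closure (by rwa [isClosed_Ldom'.closure_eq])
  exact cw1.union cw2


lemma mem_uSq (p : ℝ × ℝ) : p ∈ uSq ↔ 0 ≤ p.1 ∧ 0 ≤ p.2 ∧ p.1 ≤ 1 ∧ p.2 ≤ 1 := by
  rw [uSq, mem_Icc, Prod.le_def, Prod.le_def]
  tauto

lemma uSq_decomp (p : ℝ × ℝ) (hp : p ∈ uSq) :
    ∃ r θ : ℝ, 0 ≤ r ∧ r ≤ 1 ∧ (Mpol (r, θ) = p ∨ Mpol' (r, θ) = p) := by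
  obtain ⟨h1, h2, h3, h4⟩ := (mem_uSq p).1 hp
  rcases le_total (p.1 + p.2) 1 with h | h
  · obtain ⟨r, θ, hr0, hr1, _, _, heq⟩ := Mpol_surj p h1 h2 h
    exact ⟨r, θ, hr0, hr1, Or.inl heq⟩
  · obtain ⟨r, θ, hr0, hr1, _, _, heq⟩ := Mpol_surj (Rpi p) (by simp [Rpi]; linarith)
      (by simp [Rpi]; linarith) (by simp [Rpi]; linarith)
    refine ⟨r, θ, hr0, hr1, Or.inr ?_⟩
    rw [Mpol', heq, Rpi_Rpi]

lemma Mpol_mem_uSq (r θ : ℝ) (hr0 : 0 ≤ r) (hr1 : r ≤ 1) : Mpol (r, θ) ∈ uSq := by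
  obtain ⟨h1, h2, hs⟩ := Mpol_mem r θ hr0 hr1
  exact (mem_uSq _).2 ⟨h1, h2, by linarith, by linarith⟩

lemma Mpol'_mem_uSq (r θ : ℝ) (hr0 : 0 ≤ r) (hr1 : r ≤ 1) : Mpol' (r, θ) ∈ uSq := by
  obtain ⟨h1, h2, hs⟩ := Mpol_mem r θ hr0 hr1
  refine (mem_uSq _).2 ⟨?_, ?_, ?_, ?_⟩ <;> simp [Mpol', Rpi] <;> linarith

lemma Smap_mapsTo (a : ℝ) : MapsTo (Smap a) uSq uSq := by
  intro p hp
  obtain ⟨r, θ, hr0, hr1, heq | heq⟩ := uSq_decomp p hp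
  · rw [← heq, Smap_Mpol a r θ hr0 hr1]
    exact Mpol_mem_uSq _ _ hr0 hr1
  · rw [← heq, Smap_Mpol' a r θ hr0 hr1]
    exact Mpol'_mem_uSq _ _ hr0 hr1

lemma Smap_fix (a : ℝ) (p : ℝ × ℝ) (h1 : 0 ≤ p.1) (h2 : 0 ≤ p.2) (h3 : p.1 ≤ 1) (h4 : p.2 ≤ 1)
    (hb : p.1 = 0 ∨ p.1 = 1 ∨ p.2 = 0 ∨ p.2 = 1 ∨ p.1 + p.2 = 1) : Smap a p = p := by
  rw [Smap]
  by_cases hle : p.1 + p.2 ≤ 1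
  · rw [if_pos hle]
    apply Amap_bdry a p h1 h2 hle
    rcases hb with h | h | h | h | h
    · exact Or.inl h
    · right; right; linarith
    · exact Or.inr (Or.inl h)
    · right; right; linarith
    · exact Or.inr (Or.inr h)
  · rw [if_neg hle]
    push_neg at hle
    have hb' : (Rpi p).1 = 0 ∨ (Rpi p).2 = 0 ∨ (Rpi p).1 + (Rpi p).2 = 1 := by
      simp only [Rpi]
      rcases hb with h | h | h | h | h
    -- p.1 = 0 impossible, p.2 = 0 impossible, sum = 1 impossible
      · exfalso; linarith
      · left; linarith
      · exfalso; linarith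
      · right; left; linarith
      · exfalso; linarith
    have hA : Amap a (Rpi p) = Rpi p := Amap_bdry a (Rpi p) (by simp [Rpi]; linarith)
      (by simp [Rpi]; linarith) (by simp [Rpi]; linarith) hb'
    rw [hA, Rpi_Rpi]

end S1aux

/-- There is a unique continuous self-map `S₁` of `[0,1]²` conjugating the twist `F_l`
via `M` on `L` and via `M'` on `L'`; it is a homeomorphism of `[0,1]²` fixing the
boundary pointwise and fixing every point of the segment from `(1,0)` to `(0,1)`. -/

theorem S1_exists_unique (l : ℕ) (hl : 1 ≤ l) :
    ∃ S : ℝ × ℝ → ℝ × ℝ,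
      ContinuousOn S uSq ∧ MapsTo S uSq uSq ∧ IsS1 l S ∧
      (∀ S' : ℝ × ℝ → ℝ × ℝ, ContinuousOn S' uSq → MapsTo S' uSq uSq → IsS1 l S' →
        EqOn S' S uSq) ∧
      (∃ T : ℝ × ℝ → ℝ × ℝ, ContinuousOn T uSq ∧ MapsTo T uSq uSq ∧
        InvOn T S uSq uSq ∧ S '' uSq = uSq) ∧
      (∀ p ∈ frontier uSq, S p = p) ∧
      (∀ p ∈ segment ℝ (((1 : ℝ), (0 : ℝ)) : ℝ × ℝ) (((0 : ℝ), (1 : ℝ)) : ℝ × ℝ),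
        S p = p) := by
  refine ⟨S1aux.Smap (l : ℝ), S1aux.Smap_contOn _, S1aux.Smap_mapsTo _, ⟨?_, ?_⟩, ?_, ?_, ?_, ?_⟩
  · intro r θ hr0 hr1
    rw [show Ftw l (r, θ) = (r, θ + 2*π*(l:ℝ)*ftw r) from rfl]
    exact S1aux.Smap_Mpol (l : ℝ) r θ hr0 hr1
  · intro r θ hr0 hr1
    rw [show Ftw l (r, θ) = (r, θ + 2*π*(l:ℝ)*ftw r) from rfl]
    exact S1aux.Smap_Mpol' (l : ℝ) r θ hr0 hr1
  · intro S' _ _ hS' p hp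
    obtain ⟨r, θ, hr0, hr1, heq | heq⟩ := S1aux.uSq_decomp p hp
    · rw [← heq, hS'.1 r θ hr0 hr1,
        show Ftw l (r, θ) = (r, θ + 2*π*(l:ℝ)*ftw r) from rfl,
        S1aux.Smap_Mpol (l : ℝ) r θ hr0 hr1]
    · rw [← heq, hS'.2 r θ hr0 hr1,
        show Ftw l (r, θ) = (r, θ + 2*π*(l:ℝ)*ftw r) from rfl,
        S1aux.Smap_Mpol' (l : ℝ) r θ hr0 hr1]
  · have hright : ∀ p ∈ uSq, S1aux.Smap (l:ℝ) (S1aux.Smap (-(l:ℝ)) p) = p := by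
      intro p hp
      obtain ⟨r, θ, hr0, hr1, heq | heq⟩ := S1aux.uSq_decomp p hp
      · rw [← heq, S1aux.Smap_Mpol (-(l:ℝ)) r θ hr0 hr1, S1aux.Smap_Mpol (l:ℝ) r _ hr0 hr1,
          show θ + 2*π*(-(l:ℝ))*ftw r + 2*π*(l:ℝ)*ftw r = θ by ring]
      · rw [← heq, S1aux.Smap_Mpol' (-(l:ℝ)) r θ hr0 hr1, S1aux.Smap_Mpol' (l:ℝ) r _ hr0 hr1,
          show θ + 2*π*(-(l:ℝ))*ftw r + 2*π*(l:ℝ)*ftw r = θ by ring]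
    have hleft : ∀ p ∈ uSq, S1aux.Smap (-(l:ℝ)) (S1aux.Smap (l:ℝ) p) = p := by
      intro p hp
      obtain ⟨r, θ, hr0, hr1, heq | heq⟩ := S1aux.uSq_decomp p hp
      · rw [← heq, S1aux.Smap_Mpol (l:ℝ) r θ hr0 hr1, S1aux.Smap_Mpol (-(l:ℝ)) r _ hr0 hr1,
          show θ + 2*π*(l:ℝ)*ftw r + 2*π*(-(l:ℝ))*ftw r = θ by ring]
      · rw [← heq, S1aux.Smap_Mpol' (l:ℝ) r θ hr0 hr1, S1aux.Smap_Mpol' (-(l:ℝ)) r _ hr0 hr1,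
          show θ + 2*π*(l:ℝ)*ftw r + 2*π*(-(l:ℝ))*ftw r = θ by ring]
    refine ⟨S1aux.Smap (-(l:ℝ)), S1aux.Smap_contOn _, S1aux.Smap_mapsTo _,
      ⟨fun p hp => hleft p hp, fun p hp => hright p hp⟩, ?_⟩
    apply Subset.antisymm
    · rintro q ⟨p, hp, rfl⟩
      exact S1aux.Smap_mapsTo _ hp
    · intro p hp
      exact ⟨S1aux.Smap (-(l:ℝ)) p, S1aux.Smap_mapsTo _ hp, hright p hp⟩
  · intro p hp
    have huSq : uSq = Icc (0:ℝ) 1 ×ˢ Icc (0:ℝ) 1 := by rw [uSq, Icc_prod_Icc]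
    rw [huSq, frontier_prod_eq, (isClosed_Icc :
      IsClosed (Icc (0:ℝ) 1)).closure_eq, frontier_Icc (by norm_num : (0:ℝ) ≤ 1)] at hp
    rcases hp with ⟨⟨ha, hb⟩, hc⟩ | ⟨hc, ⟨ha, hb⟩⟩
    · rcases hc with hc | hc
      · exact S1aux.Smap_fix _ p ha (by rw [hc]) hb (by rw [hc]; norm_num)
          (Or.inr (Or.inr (Or.inl hc)))
      · exact S1aux.Smap_fix _ p ha (by rw [mem_singleton_iff] at hc; rw [hc]; norm_num) hb
          (by rw [mem_singleton_iff] at hc; rw [hc])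
          (Or.inr (Or.inr (Or.inr (Or.inl (by rwa [mem_singleton_iff] at hc)))))
    · rcases hc with hc | hc
      · exact S1aux.Smap_fix _ p (by rw [hc]) ha (by rw [hc]; norm_num) hb (Or.inl hc)
      · exact S1aux.Smap_fix _ p (by rw [mem_singleton_iff] at hc; rw [hc]; norm_num) ha
          (by rw [mem_singleton_iff] at hc; rw [hc]) hb
          (Or.inr (Or.inl (by rwa [mem_singleton_iff] at hc)))
  · intro p hp
    obtain ⟨u, v, hu, hv, huv, heq⟩ := hp
    have e1 : p.1 = u := by rw [← heq]; simp
    have e2 : p.2 = v := by rw [← heq]; simp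
    exact S1aux.Smap_fix _ p (by rw [e1]; exact hu) (by rw [e2]; exact hv)
      (by rw [e1]; linarith) (by rw [e2]; linarith)
      (Or.inr (Or.inr (Or.inr (Or.inr (by rw [e1, e2]; exact huv)))))
end
end

section
/- For every integer m ≥ 1 there is a unique continuous map S₂ : [0,1]² → [0,1]² satisfying S₂∘N = N∘G_m on D and S₂(p) = p for every p ∈ [0,1]² ∖ E; moreover S₂ is a homeomorphism of [0,1]² onto itself which fixes every point outside the topological interior of E (in particular it fixes ∂E and ∂([0,1]²) pointwise). -/
open Real MeasureTheory Set

set_option maxHeartbeats 1000000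

noncomputable section

/-- sup-norm-like function on ℝ². -/
def nsq (v : ℝ × ℝ) : ℝ := max |v.1| |v.2|

lemma nsq_nonneg (v : ℝ × ℝ) : 0 ≤ nsq v := le_trans (abs_nonneg _) (le_max_left _ _)

lemma nsq_eq_zero_iff {v : ℝ × ℝ} : nsq v = 0 ↔ v = 0 := by
  constructor
  · intro h
    have h1 : |v.1| ≤ 0 := h ▸ le_max_left _ _
    have h2 : |v.2| ≤ 0 := h ▸ le_max_right _ _
    have := abs_nonneg v.1
    have := abs_nonneg v.2
    have e1 : v.1 = 0 := abs_eq_zero.mp (le_antisymm h1 (abs_nonneg _))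
    have e2 : v.2 = 0 := abs_eq_zero.mp (le_antisymm h2 (abs_nonneg _))
    exact Prod.ext e1 e2
  · rintro rfl; simp [nsq]

lemma nsq_pos_of_ne {v : ℝ × ℝ} (h : v ≠ 0) : 0 < nsq v :=
  lt_of_le_of_ne (nsq_nonneg v) (fun e => h (nsq_eq_zero_iff.mp e.symm))

lemma nsq_smul (c : ℝ) (v : ℝ × ℝ) : nsq (c • v) = |c| * nsq v := by
  simp only [nsq, Prod.smul_fst, Prod.smul_snd, smul_eq_mul, abs_mul]
  rw [← mul_max_of_nonneg _ _ (abs_nonneg c)]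

lemma continuous_nsq : Continuous nsq :=
  (continuous_fst.abs).max (continuous_snd.abs)

-- red lemmas
lemma red_spec (θ : ℝ) : red θ = θ - (⌊θ / (2*π)⌋ : ℤ) * (2 * π) := by
  rw [red, Int.fract]
  have hπ : (π:ℝ) ≠ 0 := ne_of_gt pi_pos
  field_simp

lemma red_mem (θ : ℝ) : red θ ∈ Ico 0 (2 * π) := by
  constructor
  · exact mul_nonneg (le_of_lt two_pi_pos) (Int.fract_nonneg _)
  · have := Int.fract_lt_one (θ / (2 * π))
    calc 2 * π * Int.fract (θ / (2 * π)) < 2 * π * 1 := by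
          exact (mul_lt_mul_iff_right₀ two_pi_pos).mpr this
      _ = 2 * π := mul_one _

lemma red_eq_self {θ : ℝ} (h : θ ∈ Ico 0 (2 * π)) : red θ = θ := by
  have h2 : θ / (2 * π) ∈ Ico (0:ℝ) 1 := by
    constructor
    · exact div_nonneg h.1 (le_of_lt two_pi_pos)
    · rw [div_lt_one two_pi_pos]; exact h.2
  rw [red, Int.fract_eq_self.mpr h2, mul_div_cancel₀ _ (ne_of_gt two_pi_pos)]

lemma red_sub_int (θ : ℝ) (k : ℤ) : red (θ - k * (2 * π)) = red θ := by
  rw [red, red, sub_div, mul_div_assoc, div_self (ne_of_gt two_pi_pos), mul_one,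
    Int.fract_sub_intCast]

lemma red_red_add (a b : ℝ) : red (red a + b) = red (a + b) := by
  have : red a + b = (a + b) - (⌊a / (2*π)⌋ : ℤ) * (2 * π) := by
    rw [red_spec]; ring
  rw [this, red_sub_int]

lemma red_red (a : ℝ) : red (red a) = red a := red_eq_self (red_mem a)
-- angle inverse
def angU (u : ℝ × ℝ) : ℝ :=
  if u.1 = 1/4 ∧ u.2 < 1/4 then π * (u.2 + 1/4)
  else if u.2 = 1/4 then π * (3/4 - u.1)
  else if u.1 = -1/4 then π * (5/4 - u.2)
  else π * (u.1 + 7/4)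

def ang (v : ℝ × ℝ) : ℝ := angU ((4 * nsq v)⁻¹ • v)

lemma pdiv (x : ℝ) : π * x / π = x := by
  field_simp

lemma wbd_nsq {ψ : ℝ} (h : ψ ∈ Ico 0 (2 * π)) : nsq (wbd ψ) = 1/4 := by
  have hπ := pi_pos
  obtain ⟨h0, h2⟩ := h
  rw [wbd]
  split_ifs with hc1 hc2 hc3
  · have hb : |(-1/4 + ψ/π : ℝ)| ≤ 1/4 := by
      rw [abs_le]
      constructor
      · have : 0 ≤ ψ / π := div_nonneg h0 (le_of_lt hπ); linarith
      · have : ψ / π ≤ 1/2 := by rw [div_le_iff₀ hπ]; linarith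
        linarith
    simp only [nsq]
    rw [max_eq_left (hb.trans_eq (by rw [abs_of_nonneg] <;> norm_num : (1/4:ℝ) = |(1/4:ℝ)|))]
    norm_num
  · have hl : 1/2 ≤ ψ / π := by rw [le_div_iff₀ hπ]; push_neg at hc1; linarith
    have hr : ψ / π ≤ 1 := by rw [div_le_one hπ]; linarith
    have hb : |(3/4 - ψ/π : ℝ)| ≤ 1/4 := by rw [abs_le]; constructor <;> linarith
    simp only [nsq]
    rw [max_eq_right (by rw [abs_of_nonneg (by norm_num : (0:ℝ) ≤ 1/4)]; exact hb)]
    norm_num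
  · have hl : 1 ≤ ψ / π := by rw [le_div_iff₀ hπ]; push_neg at hc2; linarith
    have hr : ψ / π ≤ 3/2 := by rw [div_le_iff₀ hπ]; linarith
    have hb : |(5/4 - ψ/π : ℝ)| ≤ 1/4 := by rw [abs_le]; constructor <;> linarith
    simp only [nsq]
    rw [max_eq_left (by rw [abs_of_nonpos (by norm_num : (-1/4:ℝ) ≤ 0)]; rw [show -(-1/4 : ℝ) = 1/4 by norm_num]; exact hb)]
    norm_num
  · have hl : 3/2 ≤ ψ / π := by rw [le_div_iff₀ hπ]; push_neg at hc3; linarith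
    have hr : ψ / π ≤ 2 := by rw [div_le_iff₀ hπ]; linarith
    have hb : |(-7/4 + ψ/π : ℝ)| ≤ 1/4 := by rw [abs_le]; constructor <;> linarith
    simp only [nsq]
    rw [max_eq_right (by rw [abs_of_nonpos (by norm_num : (-1/4:ℝ) ≤ 0)]; rw [show -(-1/4 : ℝ) = 1/4 by norm_num]; exact hb)]
    norm_num

lemma angU_wbd {ψ : ℝ} (h : ψ ∈ Ico 0 (2 * π)) : angU (wbd ψ) = ψ := by
  have hπ := pi_pos
  obtain ⟨h0, h2⟩ := h
  rw [wbd]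
  split_ifs with hc1 hc2 hc3
  · -- ψ ∈ [0, π/2)
    have hlt : (-1/4 + ψ/π : ℝ) < 1/4 := by
      have : ψ / π < 1/2 := by rw [div_lt_iff₀ hπ]; linarith
      linarith
    rw [angU, if_pos ⟨rfl, hlt⟩]
    rw [show (-1/4 + ψ/π + 1/4 : ℝ) = ψ/π by ring, mul_div_cancel₀ _ (ne_of_gt hπ)]
  · -- ψ ∈ [π/2, π)
    rw [angU, if_neg (by rintro ⟨-, hlt⟩; exact lt_irrefl _ hlt), if_pos rfl]
    rw [show (3/4 - (3/4 - ψ/π) : ℝ) = ψ/π by ring, mul_div_cancel₀ _ (ne_of_gt hπ)]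
  · -- ψ ∈ [π, 3π/2)
    push_neg at hc2
    by_cases hp : ψ = π
    · subst hp
      rw [angU, if_neg (by rintro ⟨h', -⟩; norm_num at h'),
        if_pos (by rw [div_self (ne_of_gt hπ)]; norm_num)]
      ring
    · have hgt : π < ψ := lt_of_le_of_ne hc2 (Ne.symm hp)
      have hne : (5/4 - ψ/π : ℝ) ≠ 1/4 := by
        have : 1 < ψ / π := by rw [lt_div_iff₀ hπ]; linarith
        intro e; rw [sub_eq_iff_eq_add] at e
        have : ψ / π = 1 := by linarith
        linarith
      rw [angU, if_neg (by rintro ⟨h', -⟩; norm_num at h'), if_neg hne, if_pos rfl]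
      rw [show (5/4 - (5/4 - ψ/π) : ℝ) = ψ/π by ring, mul_div_cancel₀ _ (ne_of_gt hπ)]
  · -- ψ ∈ [3π/2, 2π)
    push_neg at hc3
    have hlt2 : ψ / π < 2 := by rw [div_lt_iff₀ hπ]; linarith
    have hge : 3/2 ≤ ψ / π := by rw [le_div_iff₀ hπ]; linarith
    have hne1 : (-7/4 + ψ/π : ℝ) ≠ 1/4 := by intro e; nlinarith
    by_cases hp : ψ / π = 3/2
    · rw [angU, if_neg (by rintro ⟨h', -⟩; rw [hp] at h'; norm_num at h'),
        if_neg (by norm_num), if_pos (by rw [hp]; norm_num)]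
      have : ψ = π * (3/2) := by rw [← hp]; field_simp
      rw [this]; ring
    · have hgt : 3/2 < ψ / π := lt_of_le_of_ne hge (Ne.symm hp)
      rw [angU, if_neg (by rintro ⟨h', -⟩; exact hne1 h'),
        if_neg (by norm_num), if_neg (by intro e; nlinarith)]
      rw [show (-7/4 + ψ/π + 7/4 : ℝ) = ψ/π by ring, mul_div_cancel₀ _ (ne_of_gt hπ)]

lemma wbd_angU {u : ℝ × ℝ} (h : nsq u = 1/4) :
    angU u ∈ Ico 0 (2 * π) ∧ wbd (angU u) = u := by
  have hπ := pi_pos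
  have h1 : |u.1| ≤ 1/4 := h ▸ le_max_left _ _
  have h2 : |u.2| ≤ 1/4 := h ▸ le_max_right _ _
  obtain ⟨b1l, b1r⟩ := abs_le.mp h1
  obtain ⟨b2l, b2r⟩ := abs_le.mp h2
  rw [angU]
  split_ifs with c1 c2 c3
  · obtain ⟨e1, l2⟩ := c1
    refine ⟨⟨by nlinarith, by nlinarith⟩, ?_⟩
    rw [wbd, if_pos (by nlinarith)]
    refine Prod.ext e1.symm ?_
    rw [pdiv]; ring
  · by_cases hm : u.1 = -1/4
    · have : π * (3/4 - u.1) = π := by rw [hm]; ring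
      rw [this]
      refine ⟨⟨le_of_lt hπ, by linarith⟩, ?_⟩
      rw [wbd, if_neg (by linarith), if_neg (lt_irrefl _), if_pos (by linarith),
        div_self (ne_of_gt hπ)]
      refine Prod.ext (by rw [hm]) (by rw [c2]; norm_num)
    · have hgt : -1/4 < u.1 := lt_of_le_of_ne (by linarith) (Ne.symm hm)
      refine ⟨⟨by nlinarith, by nlinarith⟩, ?_⟩
      rw [wbd, if_neg (by push_neg; nlinarith), if_pos (by nlinarith)]
      refine Prod.ext ?_ c2.symm
      rw [pdiv]; ring
  · have l2 : u.2 < 1/4 := lt_of_le_of_ne b2r c2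
    by_cases hm : u.2 = -1/4
    · have : π * (5/4 - u.2) = π * (3/2) := by rw [hm]; ring
      rw [this]
      refine ⟨⟨by nlinarith, by nlinarith⟩, ?_⟩
      rw [wbd, if_neg (by push_neg; nlinarith), if_neg (by push_neg; nlinarith),
        if_neg (by push_neg; nlinarith), pdiv]
      refine Prod.ext (by rw [c3]; norm_num) hm.symm
    · have hgt : -1/4 < u.2 := lt_of_le_of_ne (by linarith) (Ne.symm hm)
      refine ⟨⟨by nlinarith, by nlinarith⟩, ?_⟩
      rw [wbd, if_neg (by push_neg; nlinarith), if_neg (by push_neg; nlinarith),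
        if_pos (by nlinarith)]
      refine Prod.ext c3.symm ?_
      rw [pdiv]; ring
  · -- last branch : u.2 = -1/4, -1/4 < u.1 < 1/4
    have hne1 : u.1 ≠ 1/4 := by
      intro e
      have : ¬ u.2 < 1/4 := fun hl => c1 ⟨e, hl⟩
      exact c2 (le_antisymm b2r (not_lt.mp this))
    have hlt1 : u.1 < 1/4 := lt_of_le_of_ne b1r hne1
    have hgt1 : -1/4 < u.1 := lt_of_le_of_ne (by linarith) (Ne.symm c3)
    have habs2 : |u.2| = 1/4 := by
      have hlt : |u.1| < 1/4 := abs_lt.mpr ⟨by linarith, hlt1⟩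
      rcases max_choice |u.1| |u.2| with hc | hc <;> rw [nsq, hc] at h
      · linarith
      · exact h
    have e2 : u.2 = -1/4 := by
      rcases abs_eq (by norm_num : (0:ℝ) ≤ 1/4) |>.mp habs2 with e | e
      · exact absurd e c2
      · rw [e]; norm_num
    refine ⟨⟨by nlinarith [hπ, hgt1], by nlinarith [hπ, hlt1]⟩, ?_⟩
    rw [wbd, if_neg (by push_neg; nlinarith [hπ, hgt1]), if_neg (by push_neg; nlinarith [hπ, hgt1]),
      if_neg (by push_neg; nlinarith [hπ, hgt1])]
    refine Prod.ext ?_ e2.symm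
    rw [pdiv]; ring

lemma ang_smul_wbd {s ψ : ℝ} (hs : 0 < s) (hψ : ψ ∈ Ico 0 (2 * π)) :
    ang (s • wbd ψ) = ψ := by
  rw [ang, nsq_smul, abs_of_pos hs, wbd_nsq hψ, smul_smul]
  have e : (4 * (s * (1/4)))⁻¹ * s = 1 := by field_simp
  rw [e, one_smul, angU_wbd hψ]

lemma ang_spec {v : ℝ × ℝ} (hv : v ≠ 0) :
    ang v ∈ Ico 0 (2 * π) ∧ (4 * nsq v) • wbd (ang v) = v := by
  have hp := nsq_pos_of_ne hv
  have hu : nsq ((4 * nsq v)⁻¹ • v) = 1/4 := by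
    rw [nsq_smul, abs_of_pos (by positivity)]
    field_simp
  obtain ⟨hmem, he⟩ := wbd_angU hu
  refine ⟨hmem, ?_⟩
  rw [ang, he, smul_smul, mul_inv_cancel₀ (by positivity), one_smul]

instance : Fact ((0:ℝ) < 2 * π) := ⟨Real.two_pi_pos⟩

lemma coe_red (θ : ℝ) : ((red θ : ℝ) : AddCircle (2 * π)) = (θ : ℝ) := by
  rw [red_spec]
  have : ((θ - (⌊θ / (2*π)⌋ : ℤ) * (2 * π) : ℝ) : AddCircle (2 * π))
      = ((θ : ℝ) : AddCircle (2*π)) - (((⌊θ / (2*π)⌋ : ℤ) • (2 * π) : ℝ) : AddCircle (2*π)) := by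
    rw [← QuotientAddGroup.mk_sub]
    norm_num [zsmul_eq_mul]
  rw [this, QuotientAddGroup.mk_zsmul, AddCircle.coe_period, smul_zero, sub_zero]

lemma wbd_zero_2pi : wbd 0 = wbd (2 * π) := by
  have hπ := pi_pos
  rw [wbd, wbd, if_pos (by linarith), if_neg (by push_neg; linarith),
    if_neg (by push_neg; linarith), if_neg (by push_neg; linarith)]
  have : (2 * π) / π = 2 := by field_simp
  rw [this]
  norm_num

lemma wbd_cont : Continuous wbd := by
  have hπ := pi_pos
  have hc1 : Continuous fun θ : ℝ => ((1/4, -1/4 + θ/π) : ℝ × ℝ) := by fun_prop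
  have hc2 : Continuous fun θ : ℝ => ((3/4 - θ/π, 1/4) : ℝ × ℝ) := by fun_prop
  have hc3 : Continuous fun θ : ℝ => ((-1/4, 5/4 - θ/π) : ℝ × ℝ) := by fun_prop
  have hc4 : Continuous fun θ : ℝ => ((-7/4 + θ/π, -1/4) : ℝ × ℝ) := by fun_prop
  have inner2 : ContinuousOn (fun θ : ℝ =>
      if θ < 3*π/2 then ((-1/4, 5/4 - θ/π) : ℝ×ℝ) else (-7/4 + θ/π, -1/4)) univ := by
    apply ContinuousOn.if
    · intro a ha
      have h2 := ha.2
      rw [show {θ : ℝ | θ < 3*π/2} = Iio (3*π/2) from rfl, frontier_Iio, mem_singleton_iff] at h2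
      subst h2
      have : (3*π/2) / π = 3/2 := by field_simp
      rw [this]; norm_num
    · exact hc3.continuousOn
    · exact hc4.continuousOn
  have inner1 : ContinuousOn (fun θ : ℝ =>
      if θ < π then ((3/4 - θ/π, 1/4) : ℝ×ℝ)
      else if θ < 3*π/2 then (-1/4, 5/4 - θ/π) else (-7/4 + θ/π, -1/4)) univ := by
    apply ContinuousOn.if
    · intro a ha
      have h2 := ha.2
      rw [show {θ : ℝ | θ < π} = Iio π from rfl, frontier_Iio, mem_singleton_iff] at h2
      subst h2
      rw [if_pos (by linarith), div_self (ne_of_gt hπ)]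
      norm_num
    · exact hc2.continuousOn
    · exact inner2.mono (subset_univ _)
  have outer : ContinuousOn (fun θ : ℝ =>
      if θ < π/2 then ((1/4, -1/4 + θ/π) : ℝ×ℝ)
      else if θ < π then (3/4 - θ/π, 1/4)
      else if θ < 3*π/2 then (-1/4, 5/4 - θ/π) else (-7/4 + θ/π, -1/4)) univ := by
    apply ContinuousOn.if
    · intro a ha
      have h2 := ha.2
      rw [show {θ : ℝ | θ < π/2} = Iio (π/2) from rfl, frontier_Iio, mem_singleton_iff] at h2
      subst h2
      have : (π/2) / π = 1/2 := by field_simp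
      rw [if_pos (by linarith), this]
      norm_num
    · exact hc1.continuousOn
    · exact inner1.mono (subset_univ _)
  rw [← continuousOn_univ]
  exact outer

/-- The boundary parametrization as a map on the circle. -/
def Phi : AddCircle (2 * π) → ℝ × ℝ := AddCircle.liftIco (2 * π) 0 wbd

lemma Phi_cont : Continuous Phi :=
  AddCircle.liftIco_zero_continuous wbd_zero_2pi (wbd_cont.continuousOn)

lemma Phi_coe (θ : ℝ) : Phi ((θ : ℝ) : AddCircle (2 * π)) = wbd (red θ) := by
  rw [← coe_red θ, Phi, AddCircle.liftIco_zero_coe_apply (red_mem θ)]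

lemma nsq_Phi (x : AddCircle (2 * π)) : nsq (Phi x) = 1/4 := by
  induction x using QuotientAddGroup.induction_on with
  | H θ => rw [Phi_coe]; exact wbd_nsq (red_mem θ)

lemma nsq_norm {v : ℝ × ℝ} (hv : v ≠ 0) : nsq ((4 * nsq v)⁻¹ • v) = 1/4 := by
  have hp := nsq_pos_of_ne hv
  rw [nsq_smul, abs_of_pos (by positivity)]
  field_simp

/-- The square boundary as a subtype. -/
def angE : AddCircle (2 * π) ≃ {u : ℝ × ℝ // nsq u = 1/4} where
  toFun x := ⟨Phi x, nsq_Phi x⟩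
  invFun u := ((angU u.1 : ℝ) : AddCircle (2 * π))
  left_inv x := by
    induction x using QuotientAddGroup.induction_on with
    | H θ =>
      show ((angU (Phi θ) : ℝ) : AddCircle (2 * π)) = (θ : ℝ)
      rw [Phi_coe, angU_wbd (red_mem θ), coe_red]
  right_inv u := by
    apply Subtype.ext
    show Phi ((angU u.1 : ℝ) : AddCircle (2 * π)) = u.1
    obtain ⟨hmem, he⟩ := wbd_angU u.2
    rw [Phi_coe, red_eq_self hmem, he]

lemma cont_invSq :
    Continuous fun u : {u : ℝ × ℝ // nsq u = 1/4} => ((angU u.1 : ℝ) : AddCircle (2 * π)) := by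
  have hc : Continuous (angE : AddCircle (2 * π) → {u : ℝ × ℝ // nsq u = 1/4}) :=
    Phi_cont.subtype_mk _
  exact (Continuous.homeoOfEquivCompactToT2 (f := angE) hc).symm.continuous

lemma contOn_angA :
    ContinuousOn (fun v : ℝ × ℝ => ((ang v : ℝ) : AddCircle (2 * π))) {v | v ≠ 0} := by
  have h1 : ContinuousOn (fun v : ℝ × ℝ => (4 * nsq v)⁻¹ • v) {v | v ≠ 0} := by
    apply ContinuousOn.fun_smul
    · apply ContinuousOn.inv₀
      · exact (continuous_const.mul continuous_nsq).continuousOn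
      · intro v hv
        have := nsq_pos_of_ne (hv : v ≠ 0)
        positivity
    · exact continuousOn_id
  have h2 : ContinuousOn (fun u : ℝ × ℝ => ((angU u : ℝ) : AddCircle (2 * π)))
      {u | nsq u = 1/4} := by
    rw [continuousOn_iff_continuous_restrict]
    exact cont_invSq
  exact h2.comp h1 (fun v hv => nsq_norm hv)

/-- Center of the square. -/
def ctr : ℝ × ℝ := (((1 : ℝ) / 2, (1 : ℝ) / 2) : ℝ × ℝ)

/-- The model twist map on the square. -/
def twMap (t : ℝ → ℝ) (p : ℝ × ℝ) : ℝ × ℝ :=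
  ctr + (4 * nsq (p - ctr)) •
    Phi ((↑(ang (p - ctr) + t (min (4 * nsq (p - ctr)) 1)) : AddCircle (2 * π)))

lemma pdecomp (p : ℝ × ℝ) : p = ctr + (p - ctr) := by abel

lemma twMap_eval (t : ℝ → ℝ) (v : ℝ × ℝ) :
    twMap t (ctr + v) = ctr + (4 * nsq v) • wbd (red (ang v + t (min (4 * nsq v) 1))) := by
  rw [twMap, add_sub_cancel_left, Phi_coe]

lemma nsq_zero : nsq 0 = 0 := by simp [nsq]

lemma twMap_id {t : ℝ → ℝ} {p : ℝ × ℝ}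
    (ht : ∃ k : ℤ, t (min (4 * nsq (p - ctr)) 1) = k * (2 * π)) :
    twMap t p = p := by
  obtain ⟨k, hk⟩ := ht
  by_cases h0 : p - ctr = 0
  · have hp : p = ctr := by
      have := sub_eq_zero.mp h0; exact this
    conv_lhs => rw [hp, show (ctr : ℝ × ℝ) = ctr + 0 by abel, twMap_eval]
    rw [nsq_zero]
    norm_num [hp]
  · conv_lhs => rw [pdecomp p, twMap_eval]
    rw [hk]
    have e1 : ang (p - ctr) + (k : ℝ) * (2 * π) = ang (p - ctr) - (-k : ℤ) * (2 * π) := by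
      push_cast; ring
    rw [e1, red_sub_int, red_eq_self (ang_spec h0).1, (ang_spec h0).2]
    exact (pdecomp p).symm

lemma gtw_low {r : ℝ} (h0 : 0 ≤ r) (h : r ≤ 1/2) : gtw r = 1 := by
  rcases eq_or_lt_of_le h0 with e | hpos
  · rw [gtw, if_pos e.symm]
  · rw [gtw, if_neg (ne_of_gt hpos), min_eq_left]
    have : 2 ≤ 1 / r := by rw [le_div_iff₀ hpos]; linarith
    linarith

lemma gtw_one : gtw 1 = 0 := by norm_num [gtw]

/-- The twist by `k` turns (with the `gtw` profile). -/
def twK (k : ℤ) (p : ℝ × ℝ) : ℝ × ℝ := twMap (fun r => 2 * π * (k : ℝ) * gtw r) p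

lemma twK_eval (k : ℤ) (v : ℝ × ℝ) :
    twK k (ctr + v) = ctr + (4 * nsq v) •
      wbd (red (ang v + 2 * π * (k : ℝ) * gtw (min (4 * nsq v) 1))) := by
  rw [twK, twMap_eval]

lemma twK_id_low (k : ℤ) {p : ℝ × ℝ} (h : nsq (p - ctr) ≤ 1/8) : twK k p = p := by
  apply twMap_id
  refine ⟨k, ?_⟩
  have h0 := nsq_nonneg (p - ctr)
  rw [min_eq_left (by linarith), gtw_low (by linarith) (by linarith)]
  ring

lemma twK_id_high (k : ℤ) {p : ℝ × ℝ} (h : 1/4 ≤ nsq (p - ctr)) : twK k p = p := by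
  apply twMap_id
  refine ⟨0, ?_⟩
  rw [min_eq_right (by linarith), gtw_one]
  push_cast; ring

lemma nsq_smul_wbd {r ψ : ℝ} (hr : 0 < r) (hψ : ψ ∈ Ico 0 (2 * π)) :
    4 * nsq (r • wbd ψ) = r := by
  rw [nsq_smul, abs_of_pos hr, wbd_nsq hψ]
  ring

lemma smul_wbd_ne_zero {r ψ : ℝ} (hr : 0 < r) (hψ : ψ ∈ Ico 0 (2 * π)) :
    r • wbd ψ ≠ 0 := by
  intro e
  have := nsq_smul_wbd hr hψ
  rw [e, nsq_zero] at this
  linarith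

lemma Npol_eval (r θ : ℝ) : Npol (r, θ) = ctr + r • wbd (red θ) := rfl

lemma twK_Npol (k : ℤ) (r θ : ℝ) (h0 : 0 ≤ r) (h1 : r ≤ 1) :
    twK k (Npol (r, θ)) = Npol (r, θ + 2 * π * (k : ℝ) * gtw r) := by
  rcases eq_or_lt_of_le h0 with e | hr
  · rw [← e, Npol_eval, Npol_eval, zero_smul, add_zero, zero_smul, add_zero]
    apply twK_id_low
    rw [sub_self, nsq_zero]; norm_num
  · rw [Npol_eval, twK_eval, nsq_smul_wbd hr (red_mem θ),
      ang_smul_wbd hr (red_mem θ), min_eq_left h1, red_red_add, Npol_eval]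

lemma twK_twK (k : ℤ) {p : ℝ × ℝ} (h : nsq (p - ctr) ≤ 1/4) :
    twK (-k) (twK k p) = p := by
  by_cases h0 : p - ctr = 0
  · have hle : nsq (p - ctr) ≤ 1/8 := by rw [h0, nsq_zero]; norm_num
    rw [twK_id_low k hle, twK_id_low (-k) hle]
  · have hpos : 0 < nsq (p - ctr) := nsq_pos_of_ne h0
    set v := p - ctr with hv
    have hrpos : 0 < 4 * nsq v := by linarith
    have hr1 : 4 * nsq v ≤ 1 := by linarith
    set ψ := red (ang v + 2 * π * (k : ℝ) * gtw (min (4 * nsq v) 1)) with hψ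
    have hψm : ψ ∈ Ico 0 (2 * π) := red_mem _
    have hinner : twK k p = ctr + (4 * nsq v) • wbd ψ := by
      conv_lhs => rw [pdecomp p]
      rw [← hv, twK_eval, ← hψ]
    rw [hinner, twK_eval, nsq_smul_wbd hrpos hψm, ang_smul_wbd hrpos hψm, hψ, red_red_add]
    have e2 : ang v + 2 * π * (k : ℝ) * gtw (min (4 * nsq v) 1)
        + 2 * π * ((-k : ℤ) : ℝ) * gtw (min (4 * nsq v) 1) = ang v := by
      push_cast; ring
    rw [e2, red_eq_self (ang_spec h0).1, (ang_spec h0).2, hv]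
    abel


open Topology Filter

lemma sub_ctr_fst (p : ℝ × ℝ) : (p - ctr).1 = p.1 - 1/2 := rfl
lemma sub_ctr_snd (p : ℝ × ℝ) : (p - ctr).2 = p.2 - 1/2 := rfl

lemma mem_Esq_iff {p : ℝ × ℝ} : p ∈ Esq ↔ nsq (p - ctr) ≤ 1/4 := by
  rw [Esq, mem_Icc, Prod.le_def, Prod.le_def, nsq, max_le_iff, abs_le, abs_le,
    sub_ctr_fst, sub_ctr_snd]
  constructor
  · rintro ⟨⟨a, b⟩, c, d⟩
    exact ⟨⟨by linarith, by linarith⟩, by linarith, by linarith⟩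
  · rintro ⟨⟨a, b⟩, c, d⟩
    exact ⟨⟨by linarith, by linarith⟩, by linarith, by linarith⟩

lemma Esq_subset_uSq : Esq ⊆ uSq := by
  intro p hp
  rw [Esq, mem_Icc, Prod.le_def, Prod.le_def] at hp
  obtain ⟨⟨a, b⟩, c, d⟩ := hp
  have a' : (1:ℝ)/4 ≤ p.1 := a
  have b' : (1:ℝ)/4 ≤ p.2 := b
  have c' : p.1 ≤ (3:ℝ)/4 := c
  have d' : p.2 ≤ (3:ℝ)/4 := d
  rw [uSq, mem_Icc, Prod.le_def, Prod.le_def]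
  exact ⟨⟨(by linarith : (0:ℝ) ≤ p.1), (by linarith : (0:ℝ) ≤ p.2)⟩,
    (by linarith : p.1 ≤ (1:ℝ)), (by linarith : p.2 ≤ (1:ℝ))⟩

lemma twK_mem_Esq (k : ℤ) {p : ℝ × ℝ} (h : nsq (p - ctr) ≤ 1/4) : twK k p ∈ Esq := by
  by_cases h0 : p - ctr = 0
  · have hle : nsq (p - ctr) ≤ 1/8 := by rw [h0, nsq_zero]; norm_num
    rw [twK_id_low k hle]
    exact mem_Esq_iff.mpr h
  · have hpos : 0 < nsq (p - ctr) := nsq_pos_of_ne h0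
    set v := p - ctr with hv
    set ψ := red (ang v + 2 * π * (k : ℝ) * gtw (min (4 * nsq v) 1)) with hψ
    have hout : twK k p = ctr + (4 * nsq v) • wbd ψ := by
      conv_lhs => rw [pdecomp p]
      rw [← hv, twK_eval, ← hψ]
    rw [hout, mem_Esq_iff]
    have h4 : 4 * nsq ((4 * nsq v) • wbd ψ) = 4 * nsq v :=
      nsq_smul_wbd (by linarith) (red_mem _)
    have : nsq (ctr + (4 * nsq v) • wbd ψ - ctr) = nsq ((4 * nsq v) • wbd ψ) := by
      rw [add_sub_cancel_left]
    rw [this]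
    linarith

lemma twK_maps (k : ℤ) : MapsTo (twK k) uSq uSq := by
  intro p hp
  by_cases h : nsq (p - ctr) ≤ 1/4
  · exact Esq_subset_uSq (twK_mem_Esq k h)
  · push_neg at h
    rw [twK_id_high k (le_of_lt h)]
    exact hp

lemma twK_invol (k : ℤ) (p : ℝ × ℝ) : twK (-k) (twK k p) = p := by
  by_cases h : nsq (p - ctr) ≤ 1/4
  · exact twK_twK k h
  · push_neg at h
    rw [twK_id_high k (le_of_lt h), twK_id_high (-k) (le_of_lt h)]

lemma gtw_contAt {x : ℝ} (hx : x ≠ 0) : ContinuousAt gtw x := by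
  have hne : {y : ℝ | y ≠ 0} ∈ 𝓝 x := isOpen_ne.mem_nhds hx
  have he : (fun y : ℝ => min 1 (1 / y - 1)) =ᶠ[𝓝 x] gtw := by
    filter_upwards [hne] with y hy
    rw [gtw, if_neg hy]
  apply ContinuousAt.congr _ he
  exact continuousAt_const.min ((continuousAt_const.div continuousAt_id hx).sub
    continuousAt_const)

lemma twK_cont (k : ℤ) : Continuous (twK k) := by
  rw [continuous_iff_continuousAt]
  intro p
  by_cases h0 : nsq (p - ctr) < 1/8
  · have hsub : Continuous fun q : ℝ × ℝ => q - ctr := continuous_id.sub continuous_const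
    have hU : {q : ℝ × ℝ | nsq (q - ctr) < 1/8} ∈ 𝓝 p :=
      (isOpen_lt (continuous_nsq.comp hsub) continuous_const).mem_nhds h0
    have he : (id : ℝ × ℝ → ℝ × ℝ) =ᶠ[𝓝 p] twK k := by
      filter_upwards [hU] with q hq
      exact (twK_id_low k (le_of_lt hq)).symm
    exact continuousAt_id.congr he
  · push_neg at h0
    have hne : p - ctr ≠ 0 := by
      intro e
      rw [e, nsq_zero] at h0
      norm_num at h0
    have hsub : Continuous fun q : ℝ × ℝ => q - ctr := continuous_id.sub continuous_const
    have hrw : twK k = fun q => ctr + (4 * nsq (q - ctr)) •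
        Phi (((ang (q - ctr) : ℝ) : AddCircle (2 * π)) +
          ((2 * π * (k : ℝ) * gtw (min (4 * nsq (q - ctr)) 1) : ℝ) : AddCircle (2 * π))) := by
      funext q
      rw [twK, twMap, ← QuotientAddGroup.mk_add]
    rw [hrw]
    apply ContinuousAt.add continuousAt_const
    have hnsq : ContinuousAt (fun q : ℝ × ℝ => 4 * nsq (q - ctr)) p :=
      (continuous_const.mul (continuous_nsq.comp hsub)).continuousAt
    apply hnsq.smul
    apply Phi_cont.continuousAt.comp
    apply ContinuousAt.fun_add
    · have hopen : IsOpen {q : ℝ × ℝ | q - ctr ≠ 0} :=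
        isOpen_compl_singleton.preimage hsub
      have hco : ContinuousOn (fun q : ℝ × ℝ => ((ang (q - ctr) : ℝ) : AddCircle (2 * π)))
          {q | q - ctr ≠ 0} :=
        contOn_angA.comp hsub.continuousOn (fun q hq => hq)
      exact hco.continuousAt (hopen.mem_nhds hne)
    · apply Continuous.continuousAt (AddCircle.continuous_mk' (2 * π)) |>.comp
      apply ContinuousAt.mul continuousAt_const
      have hminpos : min (4 * nsq (p - ctr)) 1 ≠ 0 := by
        have : (0:ℝ) < min (4 * nsq (p - ctr)) 1 := lt_min (by linarith) one_pos
        exact ne_of_gt this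
      exact ContinuousAt.comp (g := gtw) (f := fun q : ℝ × ℝ => min (4 * nsq (q - ctr)) 1)
        (gtw_contAt hminpos) (hnsq.min continuousAt_const)

lemma Npol_zero (θ : ℝ) : Npol (0, θ) = ctr := by
  rw [Npol_eval, zero_smul, add_zero]

lemma isS2_twK (m : ℕ) : IsS2 m (twK (-(m : ℤ))) := by
  constructor
  · intro r θ h0 h1
    rw [twK_Npol _ r θ h0 h1]
    have e : (r, θ + 2 * π * ((-(m : ℤ) : ℤ) : ℝ) * gtw r) = Gtw m (r, θ) := by
      rw [Gtw]
      refine Prod.ext rfl ?_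
      push_cast
      ring
    rw [e]
  · intro p hp
    apply twK_id_high
    by_contra hlt
    push_neg at hlt
    exact hp.2 (mem_Esq_iff.mpr (le_of_lt hlt))

lemma Esq_repr {p : ℝ × ℝ} (h : p ∈ Esq) : ∃ r θ : ℝ, 0 ≤ r ∧ r ≤ 1 ∧ p = Npol (r, θ) := by
  by_cases h0 : p - ctr = 0
  · refine ⟨0, 0, le_refl _, by norm_num, ?_⟩
    rw [Npol_zero]
    exact (sub_eq_zero.mp h0)
  · have hpos := nsq_pos_of_ne h0
    have h4 := mem_Esq_iff.mp h
    refine ⟨4 * nsq (p - ctr), ang (p - ctr), by linarith, by linarith, ?_⟩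
    rw [Npol_eval, red_eq_self (ang_spec h0).1, (ang_spec h0).2]
    exact pdecomp p

/-- There is a unique continuous self-map `S₂` of `[0,1]²` conjugating the twist `G_m`
via `N` on `E` and equal to the identity off `E`; it is a homeomorphism of `[0,1]²`
fixing every point outside the topological interior of `E`. -/
theorem S2_exists_unique (m : ℕ) (hm : 1 ≤ m) :
    ∃ S : ℝ × ℝ → ℝ × ℝ,
      ContinuousOn S uSq ∧ MapsTo S uSq uSq ∧ IsS2 m S ∧
      (∀ S' : ℝ × ℝ → ℝ × ℝ, ContinuousOn S' uSq → MapsTo S' uSq uSq → IsS2 m S' →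
        EqOn S' S uSq) ∧
      (∃ T : ℝ × ℝ → ℝ × ℝ, ContinuousOn T uSq ∧ MapsTo T uSq uSq ∧
        InvOn T S uSq uSq ∧ S '' uSq = uSq) ∧
      (∀ p ∈ uSq \ interior Esq, S p = p) := by
  refine ⟨twK (-(m : ℤ)), (twK_cont _).continuousOn, twK_maps _, isS2_twK m, ?_, ?_, ?_⟩
  · intro S' _ _ hS' p hp
    by_cases hE : p ∈ Esq
    · obtain ⟨r, θ, h0, h1, rfl⟩ := Esq_repr hE
      rw [hS'.1 r θ h0 h1, (isS2_twK m).1 r θ h0 h1]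
    · rw [hS'.2 p ⟨hp, hE⟩, (isS2_twK m).2 p ⟨hp, hE⟩]
  · refine ⟨twK ((m : ℤ)), (twK_cont _).continuousOn, twK_maps _, ⟨?_, ?_⟩, ?_⟩
    · intro p hp
      have := twK_invol (-(m : ℤ)) p
      rwa [neg_neg] at this
    · intro p hp
      exact twK_invol (m : ℤ) p
    · apply Subset.antisymm
      · exact image_subset_iff.mpr (twK_maps _)
      · intro p hp
        exact ⟨twK (m : ℤ) p, twK_maps _ hp, twK_invol (m : ℤ) p⟩
  · intro p hp
    rcases le_or_gt (1/4) (nsq (p - ctr)) with hge | hlt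
    · exact twK_id_high _ hge
    · exfalso
      apply hp.2
      have hi : interior Esq = Ioo ((1:ℝ)/4) (3/4) ×ˢ Ioo ((1:ℝ)/4) (3/4) := by
        rw [Esq, Icc_prod_eq, interior_prod_eq, interior_Icc]
      rw [hi]
      have h1 : |(p - ctr).1| < 1/4 := lt_of_le_of_lt (le_max_left _ _) hlt
      have h2 : |(p - ctr).2| < 1/4 := lt_of_le_of_lt (le_max_right _ _) hlt
      rw [sub_ctr_fst] at h1
      rw [sub_ctr_snd] at h2
      obtain ⟨a, b⟩ := abs_lt.mp h1
      obtain ⟨c, d⟩ := abs_lt.mp h2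
      exact ⟨⟨by linarith, by linarith⟩, ⟨by linarith, by linarith⟩⟩
end
end

section
/- For every n ≥ 1, every McNaughton homeomorphism S of [0,1]ⁿ preserves n-dimensional Lebesgue measure: λ(S⁻¹(A)) = λ(A) for every Borel set A ⊆ [0,1]ⁿ. -/
open Real MeasureTheory Set

/-- The unit cube `[0,1]ⁿ`. -/
def cube (n : ℕ) : Set (Fin n → ℝ) := Icc 0 1

/-- The piecewise-linear data of a McNaughton homeomorphism: finitely many matrices
`P₁, …, P_k ∈ GL_{n+1}(ℤ)` with last row `(0 … 0 1)` and closed sets `C₁, …, C_k`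
covering the cube, such that on `C_j` the map `S` is given in homogeneous coordinates
by `P_j`. -/
def McNData (n : ℕ) (S : (Fin n → ℝ) → (Fin n → ℝ)) : Prop :=
  ∃ (k : ℕ) (P : Fin k → Matrix (Fin (n + 1)) (Fin (n + 1)) ℤ)
      (C : Fin k → Set (Fin n → ℝ)),
    (∀ j, IsUnit (P j).det) ∧
    (∀ j (i : Fin (n + 1)), P j (Fin.last n) i = if i = Fin.last n then 1 else 0) ∧
    (∀ j, IsClosed (C j)) ∧
    (⋃ j, C j) = cube n ∧
    ∀ j, ∀ p ∈ C j, ∀ i : Fin n,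
      S p i = (∑ i' : Fin n, ((P j i.castSucc i'.castSucc : ℤ) : ℝ) * p i') +
        ((P j i.castSucc (Fin.last n) : ℤ) : ℝ)

/-- `S` is a McNaughton homeomorphism of `[0,1]ⁿ`: a self-homeomorphism of the cube
given piecewise by integer unimodular affine maps. -/
def IsMcNHomeo (n : ℕ) (S : (Fin n → ℝ) → (Fin n → ℝ)) : Prop :=
  ContinuousOn S (cube n) ∧ MapsTo S (cube n) (cube n) ∧
  (∃ T : (Fin n → ℝ) → (Fin n → ℝ), ContinuousOn T (cube n) ∧
    MapsTo T (cube n) (cube n) ∧ InvOn T S (cube n) (cube n)) ∧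
  McNData n S

open Matrix

/-- Determinant of a matrix whose last row is the last standard basis vector equals
the determinant of its top-left minor. -/
theorem mcn_det_minor (n : ℕ) (P : Matrix (Fin (n+1)) (Fin (n+1)) ℤ)
    (h : ∀ i, P (Fin.last n) i = if i = Fin.last n then 1 else 0) :
    P.det = (P.submatrix Fin.castSucc Fin.castSucc).det := by
  rw [Matrix.det_succ_row P (Fin.last n)]
  rw [Finset.sum_eq_single (Fin.last n)]
  · rw [h, if_pos rfl]
    simp [Fin.succAbove_last, Fin.val_last, ← pow_add, pow_mul]
  · intro b _ hb
    simp [h, hb]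
  · simp

lemma mcn_vol_affine_image {n : ℕ} (M : Matrix (Fin n) (Fin n) ℝ) (b : Fin n → ℝ)
    (h : |M.det| = 1) (s : Set (Fin n → ℝ)) :
    volume ((fun x => M *ᵥ x + b) '' s) = volume s := by
  have he : (fun x : Fin n → ℝ => M *ᵥ x + b) = (fun y => y + b) ∘ (Matrix.toLin' M) := by
    funext x; simp [Matrix.toLin'_apply]
  rw [he, Set.image_comp, Set.image_add_right, measure_preimage_add_right,
    Measure.addHaar_image_linearMap, LinearMap.det_toLin', h]
  simp

lemma mcn_affine_image_eq_preimage {n : ℕ} (M : Matrix (Fin n) (Fin n) ℝ) (b : Fin n → ℝ)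
    (h : IsUnit M.det) (s : Set (Fin n → ℝ)) :
    (fun x => M *ᵥ x + b) '' s = (fun y => M⁻¹ *ᵥ (y - b)) ⁻¹' s := by
  ext y
  constructor
  · rintro ⟨x, hx, rfl⟩
    simpa [Matrix.mulVec_mulVec, Matrix.nonsing_inv_mul M h] using hx
  · intro hy
    exact ⟨M⁻¹ *ᵥ (y - b), hy, by
      simp [Matrix.mulVec_mulVec, Matrix.mul_nonsing_inv M h]⟩

lemma mcn_affine_image_measurable {n : ℕ} (M : Matrix (Fin n) (Fin n) ℝ) (b : Fin n → ℝ)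
    (h : IsUnit M.det) {s : Set (Fin n → ℝ)} (hs : MeasurableSet s) :
    MeasurableSet ((fun x => M *ᵥ x + b) '' s) := by
  rw [mcn_affine_image_eq_preimage M b h s]
  have hc : Continuous (fun y : Fin n → ℝ => M⁻¹ *ᵥ (y - b)) := by
    have : Continuous (fun y : Fin n → ℝ => M⁻¹ *ᵥ y) :=
      (Matrix.toLin' M⁻¹).continuous_of_finiteDimensional
    exact this.comp (continuous_id.sub continuous_const)
  exact hs.preimage hc.measurable

lemma mcn_mulVec_continuous {n : ℕ} (M : Matrix (Fin n) (Fin n) ℝ) (b : Fin n → ℝ) :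
    Continuous (fun x : Fin n → ℝ => M *ᵥ x + b) := by
  have : Continuous (fun y : Fin n → ℝ => M *ᵥ y) :=
    (Matrix.toLin' M).continuous_of_finiteDimensional
  exact this.add continuous_const

/-- Every McNaughton homeomorphism of `[0,1]ⁿ` preserves `n`-dimensional Lebesgue
measure. -/
theorem mcnaughton_measure_preserving (n : ℕ) (hn : 1 ≤ n)
    (S : (Fin n → ℝ) → (Fin n → ℝ)) (hS : IsMcNHomeo n S) :
    ∀ A : Set (Fin n → ℝ), A ⊆ cube n → MeasurableSet A →
      volume (S ⁻¹' A ∩ cube n) = volume A := by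
  intro A hAcube hA
  obtain ⟨hScont, hSmaps, ⟨T, hTcont, hTmaps, hTinv⟩,
    k, P, C, hdet, hrow, hclosed, hcover, hSloc⟩ := hS
  -- real matrices and translation vectors
  set M : Fin k → Matrix (Fin n) (Fin n) ℝ :=
    fun j => ((P j).submatrix Fin.castSucc Fin.castSucc).map (fun z : ℤ => (z : ℝ)) with hM
  set b : Fin k → (Fin n → ℝ) :=
    fun j i => ((P j i.castSucc (Fin.last n) : ℤ) : ℝ) with hb
  set f : Fin k → (Fin n → ℝ) → (Fin n → ℝ) := fun j x => M j *ᵥ x + b j with hf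
  have hSf : ∀ j, ∀ p ∈ C j, S p = f j p := by
    intro j p hp
    funext i
    rw [hSloc j p hp i]
    simp [hf, hM, hb, Matrix.mulVec, dotProduct]
  have hMdet : ∀ j, ((M j).det = 1 ∨ (M j).det = -1) := by
    intro j
    have h1 : ((P j).submatrix Fin.castSucc Fin.castSucc).det = (P j).det :=
      (mcn_det_minor n (P j) (hrow j)).symm
    have h2 : (M j).det = (((P j).submatrix Fin.castSucc Fin.castSucc).det : ℝ) := by
      rw [hM]
      exact (RingHom.map_det (Int.castRingHom ℝ) _).symm
    rcases Int.isUnit_iff.1 (hdet j) with h | h <;>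
      [left; right] <;> rw [h2, h1, h] <;> norm_num
  have hMabs : ∀ j, |(M j).det| = 1 := by
    intro j; rcases hMdet j with h | h <;> rw [h] <;> norm_num
  have hMunit : ∀ j, IsUnit (M j).det := by
    intro j
    rcases hMdet j with h | h <;> rw [h] <;> exact isUnit_iff_ne_zero.2 (by norm_num)
  -- injectivity of S on the cube
  have hinj : InjOn S (cube n) := hTinv.1.injOn
  -- disjointified pieces, extended to ℕ
  set C' : ℕ → Set (Fin n → ℝ) := fun m => if h : m < k then C ⟨m, h⟩ else ∅ with hC'
  set D : ℕ → Set (Fin n → ℝ) := disjointed C' with hD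
  have hCval : ∀ m (h : m < k), C' m = C ⟨m, h⟩ := by
    intro m h; simp [hC', h]
  have hCempty : ∀ m, ¬ m < k → C' m = ∅ := by
    intro m h; simp [hC', h]
  have hC'meas : ∀ m, MeasurableSet (C' m) := by
    intro m
    by_cases h : m < k
    · rw [hCval m h]; exact (hclosed _).measurableSet
    · rw [hCempty m h]; exact MeasurableSet.empty
  have hDmeas : ∀ m, MeasurableSet (D m) := MeasurableSet.disjointed hC'meas
  have hDdisj : Pairwise (Function.onFun Disjoint D) := disjoint_disjointed C'
  have hDsub : ∀ m, D m ⊆ C' m := disjointed_subset C'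
  have hDunion : (⋃ m, D m) = cube n := by
    rw [hD, iUnion_disjointed, ← hcover]
    apply Subset.antisymm
    · intro x hx
      obtain ⟨m, hm⟩ := mem_iUnion.1 hx
      by_cases h : m < k
      · rw [show (C' m = C ⟨m, h⟩) from hCval m h] at hm
        exact mem_iUnion.2 ⟨_, hm⟩
      · rw [show (C' m = ∅) from hCempty m h] at hm
        exact absurd hm (notMem_empty x)
    · intro x hx
      obtain ⟨j, hj⟩ := mem_iUnion.1 hx
      refine mem_iUnion.2 ⟨j.1, ?_⟩
      rw [show (C' j.1 = C ⟨j.1, j.2⟩) from hCval j.1 j.2]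
      simpa using hj
  set E : ℕ → Set (Fin n → ℝ) := fun m => D m ∩ S ⁻¹' A with hE
  have hEcube : ∀ m, E m ⊆ cube n := by
    intro m x hx
    rw [← hDunion]
    exact mem_iUnion.2 ⟨m, hx.1⟩
  have hEdisj : Pairwise (Function.onFun Disjoint E) :=
    fun i j hij => (hDdisj hij).mono inter_subset_left inter_subset_left
  -- per-piece facts
  have key : ∀ m, MeasurableSet (E m) ∧ MeasurableSet (S '' E m) ∧
      volume (S '' E m) = volume (E m) := by
    intro m
    by_cases h : m < k
    · set j : Fin k := ⟨m, h⟩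
      have hsub : D m ⊆ C j := by
        intro x hx
        have := hDsub m hx
        rwa [hCval m h] at this
      have hEeq : E m = D m ∩ (f j) ⁻¹' A := by
        ext x
        simp only [hE, mem_inter_iff, mem_preimage]
        exact and_congr_right fun hx => by rw [hSf j x (hsub hx)]
      have hEmeas : MeasurableSet (E m) := by
        rw [hEeq]
        exact (hDmeas m).inter (hA.preimage (mcn_mulVec_continuous (M j) (b j)).measurable)
      have hImg : S '' E m = f j '' E m :=
        image_congr fun x hx => hSf j x (hsub hx.1)
      refine ⟨hEmeas, ?_, ?_⟩
      · rw [hImg, hf]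
        exact mcn_affine_image_measurable (M j) (b j) (hMunit j) hEmeas
      · rw [hImg, hf]
        exact mcn_vol_affine_image (M j) (b j) (hMabs j) (E m)
    · have : E m = ∅ := by
        have h1 : D m ⊆ ∅ := by
          intro x hx
          have := hDsub m hx
          rwa [hCempty m h] at this
        exact eq_empty_of_subset_empty fun x hx => h1 hx.1
      rw [this]
      simp
  have hU : (⋃ m, E m) = S ⁻¹' A ∩ cube n := by
    rw [hE]
    rw [← iUnion_inter, hDunion, inter_comm]
  -- the union of images is A
  have hImgUnion : (⋃ m, S '' E m) = A := by
    rw [← image_iUnion]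
    rw [hU]
    apply Subset.antisymm
    · rintro a ⟨x, ⟨hxA, _⟩, rfl⟩
      exact hxA
    · intro a ha
      have hac : a ∈ cube n := hAcube ha
      refine ⟨T a, ⟨?_, hTmaps hac⟩, hTinv.2 hac⟩
      show S (T a) ∈ A
      rw [hTinv.2 hac]
      exact ha
  -- images are pairwise disjoint
  have hImgDisj : Pairwise (Function.onFun Disjoint fun m => S '' E m) := by
    intro i j hij
    simp only [Function.onFun, disjoint_iff_inter_eq_empty]
    rw [← hinj.image_inter (hEcube i) (hEcube j), (hEdisj hij).inter_eq]
    simp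
  calc volume (S ⁻¹' A ∩ cube n) = volume (⋃ m, E m) := by rw [hU]
    _ = ∑' m, volume (E m) := measure_iUnion hEdisj fun m => (key m).1
    _ = ∑' m, volume (S '' E m) := by
        exact tsum_congr fun m => ((key m).2.2).symm
    _ = volume (⋃ m, S '' E m) := (measure_iUnion hImgDisj fun m => (key m).2.1).symm
    _ = volume A := by rw [hImgUnion]
end

section
/- For every n ≥ 1, every McNaughton homeomorphism S of [0,1]ⁿ, and every integer d ≥ 1, S permutes the set A_d of rational points of denominator d: S(A_d) = A_d. -/
open Real MeasureTheory Set

/-- `p ∈ [0,1]ⁿ` is rational of denominator `d`. -/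
def hasDenN (n d : ℕ) (p : Fin n → ℝ) : Prop :=
  (∀ i, ∃ a : ℤ, (d : ℝ) * p i = (a : ℝ)) ∧
  ∀ e : ℕ, 1 ≤ e → (∀ i, ∃ a : ℤ, (e : ℝ) * p i = (a : ℝ)) → d ≤ e

/-- The set `A_d ⊆ [0,1]ⁿ` of rational points of denominator `d`. -/
def AdenN (n d : ℕ) : Set (Fin n → ℝ) := {p | p ∈ cube n ∧ hasDenN n d p}

/-! A rational point `p` has denominator dividing `e` iff the homogeneous vector `e • (p, 1)` is
integral, and a matrix in `GL_{n+1}(ℤ)` preserves integrality of vectors in both directions; so on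
each piece `C_j` the map `S` preserves every condition "`e • p` is integral", hence also the least
such `e`. Surjectivity of `S` onto the cube then gives `S(A_d) = A_d`. -/

open scoped Matrix

def IsIntegralVec {ι : Type*} (v : ι → ℝ) : Prop := ∀ i, ∃ a : ℤ, v i = a

section IntegralVectors

variable {ι κ : Type*} [Fintype κ]

lemma isIntegralVec_iff_exists_intCast {v : ι → ℝ} :
    IsIntegralVec v ↔ ∃ z : ι → ℤ, v = Int.cast ∘ z := by
  refine ⟨fun h => ?_, ?_⟩
  · choose z hz using h
    exact ⟨z, funext hz⟩
  · rintro ⟨z, rfl⟩ i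
    exact ⟨z i, rfl⟩

lemma IsIntegralVec.intMatrix_mulVec (M : Matrix ι κ ℤ) {v : κ → ℝ} (hv : IsIntegralVec v) :
    IsIntegralVec (M.map (Int.cast : ℤ → ℝ) *ᵥ v) := by
  obtain ⟨z, rfl⟩ := isIntegralVec_iff_exists_intCast.mp hv
  exact fun i => ⟨(M *ᵥ z) i, ((Int.castRingHom ℝ).map_mulVec M z i).symm⟩

lemma isIntegralVec_intMatrix_mulVec_iff [DecidableEq κ] {M : Matrix κ κ ℤ} (hM : IsUnit M.det)
    {v : κ → ℝ} : IsIntegralVec (M.map (Int.cast : ℤ → ℝ) *ᵥ v) ↔ IsIntegralVec v := by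
  refine ⟨fun h => ?_, fun h => h.intMatrix_mulVec M⟩
  have hinv : M⁻¹.map (Int.cast : ℤ → ℝ) * M.map (Int.cast : ℤ → ℝ) = 1 :=
    (map_mul (Int.castRingHom ℝ).mapMatrix M⁻¹ M).symm.trans
      (by rw [M.nonsing_inv_mul hM, map_one])
  simpa only [Matrix.mulVec_mulVec, hinv, Matrix.one_mulVec] using h.intMatrix_mulVec M⁻¹

end IntegralVectors

lemma isIntegralVec_snoc_iff {n : ℕ} {v : Fin n → ℝ} {x : ℝ} :
    IsIntegralVec (Fin.snoc v x : Fin (n + 1) → ℝ) ↔ IsIntegralVec v ∧ ∃ a : ℤ, x = a := by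
  simp only [IsIntegralVec, Fin.forall_fin_succ', Fin.snoc_castSucc, Fin.snoc_last]

lemma isIntegralVec_smul_iff_smul_snoc_one {n : ℕ} (e : ℕ) (p : Fin n → ℝ) :
    IsIntegralVec ((e : ℝ) • p) ↔ IsIntegralVec ((e : ℝ) • (Fin.snoc p 1 : Fin (n + 1) → ℝ)) := by
  have hsnoc : (e : ℝ) • (Fin.snoc p 1 : Fin (n + 1) → ℝ) = Fin.snoc ((e : ℝ) • p) (e : ℝ) := by
    ext i
    refine Fin.lastCases ?_ (fun i => ?_) i <;> simp
  rw [hsnoc, isIntegralVec_snoc_iff]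
  exact ⟨fun h => ⟨h, e, rfl⟩, And.left⟩

lemma intCast_mulVec_snoc_one {n : ℕ} {P : Matrix (Fin (n + 1)) (Fin (n + 1)) ℤ}
    (hlast : ∀ i, P (Fin.last n) i = if i = Fin.last n then 1 else 0) {p q : Fin n → ℝ}
    (hpq : ∀ i : Fin n, q i = (∑ i' : Fin n, ((P i.castSucc i'.castSucc : ℤ) : ℝ) * p i') +
        ((P i.castSucc (Fin.last n) : ℤ) : ℝ)) :
    P.map (Int.cast : ℤ → ℝ) *ᵥ (Fin.snoc p 1 : Fin (n + 1) → ℝ) = Fin.snoc q 1 := by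
  funext k
  refine Fin.lastCases ?_ (fun i => ?_) k
  · simp [Matrix.mulVec, dotProduct, hlast]
  · simp [Matrix.mulVec, dotProduct, Fin.sum_univ_castSucc, hpq i]

lemma McNData.isIntegralVec_smul_iff {n : ℕ} {S : (Fin n → ℝ) → (Fin n → ℝ)} (hS : McNData n S)
    {p : Fin n → ℝ} (hp : p ∈ cube n) (e : ℕ) :
    IsIntegralVec ((e : ℝ) • S p) ↔ IsIntegralVec ((e : ℝ) • p) := by
  obtain ⟨k, P, C, hdet, hlast, -, hcover, hform⟩ := hS
  obtain ⟨j, hj⟩ := mem_iUnion.mp (hcover ▸ hp : p ∈ ⋃ j, C j)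
  have hhom := intCast_mulVec_snoc_one (hlast j) (hform j p hj)
  rw [isIntegralVec_smul_iff_smul_snoc_one e (S p), isIntegralVec_smul_iff_smul_snoc_one e p,
    ← hhom, ← Matrix.mulVec_smul, isIntegralVec_intMatrix_mulVec_iff (hdet j)]

lemma McNData.hasDenN_iff {n : ℕ} {S : (Fin n → ℝ) → (Fin n → ℝ)} (hS : McNData n S)
    {p : Fin n → ℝ} (hp : p ∈ cube n) (d : ℕ) : hasDenN n d (S p) ↔ hasDenN n d p :=
  and_congr (hS.isIntegralVec_smul_iff hp d)
    (forall₂_congr fun e _ => imp_congr_left (hS.isIntegralVec_smul_iff hp e))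

lemma Set.image_sep_eq_of_mapsTo_of_surjOn {α : Type*} {f : α → α} {s : Set α} {P : α → Prop}
    (hmaps : MapsTo f s s) (hsurj : SurjOn f s s) (hP : ∀ x ∈ s, P (f x) ↔ P x) :
    f '' {x | x ∈ s ∧ P x} = {x | x ∈ s ∧ P x} := by
  refine Subset.antisymm ?_ fun y ⟨hy, hPy⟩ => ?_
  · rintro _ ⟨x, ⟨hx, hPx⟩, rfl⟩
    exact ⟨hmaps hx, (hP x hx).mpr hPx⟩
  · obtain ⟨x, hx, rfl⟩ := hsurj hy
    exact ⟨x, ⟨hx, (hP x hx).mp hPy⟩, rfl⟩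

theorem mcnaughton_permutes_denominators_general (n : ℕ)
    (S : (Fin n → ℝ) → (Fin n → ℝ)) (hS : IsMcNHomeo n S) (d : ℕ) :
    S '' AdenN n d = AdenN n d := by
  obtain ⟨-, hmaps, ⟨T, -, hTmaps, hinv⟩, hdata⟩ := hS
  exact image_sep_eq_of_mapsTo_of_surjOn hmaps (hinv.2.surjOn hTmaps)
    fun p hp => hdata.hasDenN_iff hp d

/-- Every McNaughton homeomorphism of `[0,1]ⁿ` permutes the set `A_d` of rational
points of denominator `d`, for every `d ≥ 1`. -/
theorem mcnaughton_permutes_denominators (n : ℕ) (hn : 1 ≤ n)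
    (S : (Fin n → ℝ) → (Fin n → ℝ)) (hS : IsMcNHomeo n S) (d : ℕ) (hd : 1 ≤ d) :
    S '' AdenN n d = AdenN n d :=
  mcnaughton_permutes_denominators_general n S hS d
end
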